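/- arXiv:1704.04534 — 8 statements merged into one kernel-verified Lean document; each statement's English description precedes it below -/
import Mathlib

section
/- Let f : ℝ → ℝ be continuously differentiable on [0,π] with f(0) = f(π) = 0. Then ∫₀^π (f'(t))² dt ≥ ∫₀^π (f(t))² dt. -/
/-!
For any weight `w`, expanding `0 ≤ (f' - w f)²` gives
`f'² = (f' - w f)² + (w f²)' - (w' + w²) f²`, and `(w f²)'` integrates to zero when `f`
vanishes at the endpoints. On an interval of length `L` the Riccati equation `w' + w² = -k²` has
the solution `w t = -k tan (k (t - m))` (with `m` the midpoint) for every `k < π / L`, so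
`k² ∫ f² ≤ ∫ f'²`; letting `k → π / L` gives the sharp constant, which is `1` on `[0, π]`.
-/

open Real Set Filter Topology intervalIntegral

theorem mul_integral_sq_le_integral_deriv_sq_of_riccati {f f' w w' : ℝ → ℝ} {a b c : ℝ}
    (hab : a ≤ b) (hf : ∀ t ∈ Icc a b, HasDerivAt f (f' t) t) (hf' : ContinuousOn f' (Icc a b))
    (hw : ∀ t ∈ Icc a b, HasDerivAt w (w' t) t) (hw' : ContinuousOn w' (Icc a b))
    (hric : ∀ t ∈ Icc a b, w' t + w t ^ 2 ≤ -c) (ha : f a = 0) (hb : f b = 0) :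
    c * ∫ t in a..b, f t ^ 2 ≤ ∫ t in a..b, f' t ^ 2 := by
  have hfc : ContinuousOn f (Icc a b) := fun t ht => (hf t ht).continuousAt.continuousWithinAt
  have hwc : ContinuousOn w (Icc a b) := fun t ht => (hw t ht).continuousAt.continuousWithinAt
  set D : ℝ → ℝ := fun t => w' t * f t ^ 2 + w t * (2 * f t * f' t)
  have hDc : ContinuousOn D (Icc a b) := by fun_prop
  have hD : ∫ t in a..b, D t = 0 := by
    have hderiv : ∀ t ∈ uIcc a b, HasDerivAt (fun t => w t * f t ^ 2) (D t) t := by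
      intro t ht
      rw [uIcc_of_le hab] at ht
      refine ((hw t ht).mul ((hf t ht).pow 2)).congr_deriv ?_
      simp only [D, Pi.pow_apply]
      ring
    rw [integral_eq_sub_of_hasDerivAt hderiv (hDc.intervalIntegrable_of_Icc hab), ha, hb]
    ring
  have hsq : 0 ≤ ∫ t in a..b, (f' t - w t * f t) ^ 2 :=
    integral_nonneg hab fun _ _ => sq_nonneg _
  have hpointwise : ∀ t ∈ Icc a b, c * f t ^ 2 ≤ f' t ^ 2 - (f' t - w t * f t) ^ 2 - D t := by
    intro t ht
    have := mul_le_mul_of_nonneg_right (hric t ht) (sq_nonneg (f t))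
    simp only [D]
    nlinarith
  have hint : ∀ {g : ℝ → ℝ}, ContinuousOn g (Icc a b) →
      IntervalIntegrable g MeasureTheory.volume a b :=
    fun hg => hg.intervalIntegrable_of_Icc hab
  calc c * ∫ t in a..b, f t ^ 2 = ∫ t in a..b, c * f t ^ 2 := (integral_const_mul _ _).symm
    _ ≤ ∫ t in a..b, (f' t ^ 2 - (f' t - w t * f t) ^ 2 - D t) :=
      integral_mono_on hab (hint (by fun_prop)) (hint (by fun_prop)) hpointwise
    _ = (∫ t in a..b, f' t ^ 2) - (∫ t in a..b, (f' t - w t * f t) ^ 2) - ∫ t in a..b, D t := by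
      rw [integral_sub (hint (by fun_prop)) (hint hDc),
        integral_sub (hint (by fun_prop)) (hint (by fun_prop))]
    _ ≤ ∫ t in a..b, f' t ^ 2 := by linarith

theorem sq_mul_integral_sq_le_integral_deriv_sq {f f' : ℝ → ℝ} {a b k : ℝ} (hab : a ≤ b)
    (hk : 0 ≤ k) (hkL : k * (b - a) < π)
    (hf : ∀ t ∈ Icc a b, HasDerivAt f (f' t) t) (hf' : ContinuousOn f' (Icc a b))
    (ha : f a = 0) (hb : f b = 0) :
    k ^ 2 * ∫ t in a..b, f t ^ 2 ≤ ∫ t in a..b, f' t ^ 2 := by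
  set θ : ℝ → ℝ := fun t => k * (t - (a + b) / 2)
  have hcos : ∀ t ∈ Icc a b, 0 < cos (θ t) := fun t ht =>
    cos_pos_of_mem_Ioo ⟨by simp only [θ]; nlinarith [mul_le_mul_of_nonneg_left ht.1 hk],
      by simp only [θ]; nlinarith [mul_le_mul_of_nonneg_left ht.2 hk]⟩
  refine mul_integral_sq_le_integral_deriv_sq_of_riccati hab hf hf'
    (w := fun t => -k * tan (θ t)) (w' := fun t => -k ^ 2 / cos (θ t) ^ 2)
    (fun t ht => ?_) ?_ (fun t ht => ?_) ha hb
  · have := (hasDerivAt_tan (hcos t ht).ne').comp t (((hasDerivAt_id t).sub_const _).const_mul k)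
    refine (this.const_mul (-k)).congr_deriv ?_
    ring
  · exact (continuousOn_const.div ((continuous_cos.comp_continuousOn (by fun_prop)).pow 2))
      fun t ht => pow_ne_zero 2 (hcos t ht).ne'
  · refine le_of_eq ?_
    have := (hcos t ht).ne'
    rw [tan_eq_sin_div_cos]
    field_simp
    linear_combination k ^ 2 * sin_sq_add_cos_sq (θ t)

theorem sq_pi_div_mul_integral_sq_le_integral_deriv_sq {f f' : ℝ → ℝ} {a b : ℝ} (hab : a < b)
    (hf : ∀ t ∈ Icc a b, HasDerivAt f (f' t) t) (hf' : ContinuousOn f' (Icc a b))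
    (ha : f a = 0) (hb : f b = 0) :
    (π / (b - a)) ^ 2 * ∫ t in a..b, f t ^ 2 ≤ ∫ t in a..b, f' t ^ 2 := by
  have hL : 0 < b - a := sub_pos.2 hab
  have hlim : Tendsto (fun k => k ^ 2 * ∫ t in a..b, f t ^ 2) (𝓝[<] (π / (b - a)))
      (𝓝 ((π / (b - a)) ^ 2 * ∫ t in a..b, f t ^ 2)) :=
    ((continuous_pow 2).mul continuous_const).continuousWithinAt
  refine le_of_tendsto hlim ?_
  filter_upwards [Ioo_mem_nhdsLT (div_pos pi_pos hL)] with k hk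
  exact sq_mul_integral_sq_le_integral_deriv_sq hab.le hk.1.le
    ((lt_div_iff₀ hL).1 hk.2) hf hf' ha hb

/-- Steklov inequality on `[0, π]`: if `f` is continuously differentiable on `[0, π]`
(with derivative `f'`) and vanishes at both endpoints, then the `L²` norm of `f'`
dominates the `L²` norm of `f`. -/
theorem steklov_inequality (f f' : ℝ → ℝ)
    (hderiv : ∀ t ∈ Set.Icc (0 : ℝ) Real.pi, HasDerivAt f (f' t) t)
    (hcont : ContinuousOn f' (Set.Icc (0 : ℝ) Real.pi))
    (h0 : f 0 = 0) (hπ : f Real.pi = 0) :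
    ∫ t in (0 : ℝ)..Real.pi, (f' t) ^ 2 ≥ ∫ t in (0 : ℝ)..Real.pi, (f t) ^ 2 := by
  have h := sq_pi_div_mul_integral_sq_le_integral_deriv_sq pi_pos hderiv hcont h0 hπ
  rwa [sub_zero, div_self pi_ne_zero, one_pow, one_mul] at h
end

section
/- Let f : [0,∞) → ℝ be differentiable with f(t) > 0 for all t ≥ 0, let n be a positive integer, let k ≥ 0 and α ∈ ℝ. Assume that f'(t) + (α − k·f(t)ⁿ)·f(t) ≤ 0 for all t ≥ 0, and that α − k·f(0)ⁿ > 0. Then f(t) < f(0) for all t > 0. -/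
/-!
Wherever `f t ≤ f 0`, the monotonicity of `x ↦ k xⁿ` gives `α - k f(t)ⁿ ≥ α - k f(0)ⁿ > 0`, so the
differential inequality forces `f' t < 0`. A function whose derivative is negative wherever it has
not risen above its initial value never rises above it, hence has negative derivative everywhere and
is strictly decreasing.
-/

open Set

section InitialValue

variable {f f' : ℝ → ℝ} {a : ℝ}

theorem le_initial_of_hasDerivAt_neg_of_le (hf : ∀ t ≥ a, HasDerivAt f (f' t) t)
    (hneg : ∀ t ≥ a, f t ≤ f a → f' t < 0) {t : ℝ} (ht : a ≤ t) : f t ≤ f a :=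
  image_le_of_deriv_right_lt_deriv_boundary (B := fun _ ↦ f a) (B' := 0)
    (fun x hx ↦ (hf x hx.1).continuousAt.continuousWithinAt)
    (fun x hx ↦ (hf x hx.1).hasDerivWithinAt) le_rfl (fun _ ↦ hasDerivAt_const _ _)
    (fun x hx hfx ↦ hneg x hx.1 hfx.le) ⟨ht, le_rfl⟩

theorem strictAntiOn_Ici_of_hasDerivAt_neg_of_le (hf : ∀ t ≥ a, HasDerivAt f (f' t) t)
    (hneg : ∀ t ≥ a, f t ≤ f a → f' t < 0) : StrictAntiOn f (Ici a) := by
  refine strictAntiOn_of_deriv_neg (convex_Ici a)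
    (fun x hx ↦ (hf x hx).continuousAt.continuousWithinAt) fun x hx ↦ ?_
  rw [interior_Ici] at hx
  rw [(hf x hx.le).deriv]
  exact hneg x hx.le (le_initial_of_hasDerivAt_neg_of_le hf hneg hx.le)

end InitialValue

theorem deriv_neg_of_le_initial {f f' : ℝ → ℝ} {n : ℕ} {k α : ℝ} (hk : 0 ≤ k)
    (hpos : ∀ t ≥ (0 : ℝ), 0 < f t)
    (hineq : ∀ t ≥ (0 : ℝ), f' t + (α - k * f t ^ n) * f t ≤ 0)
    (hinit : 0 < α - k * f 0 ^ n) {t : ℝ} (ht : 0 ≤ t) (hft : f t ≤ f 0) : f' t < 0 := by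
  have hpow : k * f t ^ n ≤ k * f 0 ^ n :=
    mul_le_mul_of_nonneg_left (pow_le_pow_left₀ (hpos t ht).le hft n) hk
  have hgrowth : 0 < (α - k * f t ^ n) * f t := mul_pos (by linarith) (hpos t ht)
  linarith [hineq t ht]

theorem comparison_lemma_general (f f' : ℝ → ℝ) (n : ℕ) (k α : ℝ) (hk : 0 ≤ k)
    (hderiv : ∀ t ≥ (0 : ℝ), HasDerivAt f (f' t) t)
    (hpos : ∀ t ≥ (0 : ℝ), 0 < f t)
    (hineq : ∀ t ≥ (0 : ℝ), f' t + (α - k * f t ^ n) * f t ≤ 0)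
    (hinit : 0 < α - k * f 0 ^ n) :
    ∀ t > (0 : ℝ), f t < f 0 := fun _ ht ↦
  strictAntiOn_Ici_of_hasDerivAt_neg_of_le hderiv
    (fun _ hs hfs ↦ deriv_neg_of_le_initial hk hpos hineq hinit hs hfs)
    self_mem_Ici (mem_Ici.2 ht.le) ht

/-- Lemma 2.3 of the paper: if `f > 0` is differentiable on `[0, ∞)`,
`f' + (α - k fⁿ) f ≤ 0` on `[0, ∞)` and `α - k f(0)ⁿ > 0`, then `f(t) < f(0)` for all `t > 0`. -/
theorem comparison_lemma (f f' : ℝ → ℝ) (n : ℕ) (hn : 0 < n) (k α : ℝ) (hk : 0 ≤ k)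
    (hderiv : ∀ t ≥ (0 : ℝ), HasDerivAt f (f' t) t)
    (hpos : ∀ t ≥ (0 : ℝ), 0 < f t)
    (hineq : ∀ t ≥ (0 : ℝ), f' t + (α - k * f t ^ n) * f t ≤ 0)
    (hinit : 0 < α - k * f 0 ^ n) :
    ∀ t > (0 : ℝ), f t < f 0 :=
  comparison_lemma_general f f' n k α hk hderiv hpos hineq hinit
end

section
/- Let f : [0,∞) → ℝ be differentiable with f(t) > 0 for all t ≥ 0, let n be a positive integer, let k ≥ 0, χ > 0 and α ∈ ℝ. Assume that f'(t) + (α − k·f(t)ⁿ)·f(t) ≤ 0 for all t ≥ 0, and that α − k·f(0)ⁿ ≥ χ. Then f(t) ≤ f(0)·e^{−χt} for all t ≥ 0. -/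
open Real

/-! While `f ≤ f 0`, the coefficient `α - k fⁿ` is at least `α - k f(0)ⁿ ≥ χ`, so `f' ≤ -χ f`.
In particular `f' < 0` wherever `f` returns to the level `f 0`, so `f` can never cross it and the
bound `f' ≤ -χ f` holds on all of `[0, ∞)`; Grönwall's inequality then gives the exponential decay. -/

section

variable {f f' : ℝ → ℝ} {a : ℝ}

theorem le_apply_of_hasDerivAt_neg_of_eq (hf : ∀ t ≥ a, HasDerivAt f (f' t) t)
    (hneg : ∀ t ≥ a, f t = f a → f' t < 0) : ∀ t ≥ a, f t ≤ f a := fun _ ht =>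
  image_le_of_deriv_right_lt_deriv_boundary (B := fun _ => f a) (B' := 0)
    (fun x hx => (hf x hx.1).continuousAt.continuousWithinAt)
    (fun x hx => (hf x hx.1).hasDerivWithinAt) le_rfl (fun x => hasDerivAt_const x _)
    (fun x hx => hneg x hx.1) ⟨ht, le_rfl⟩

theorem le_mul_exp_of_hasDerivAt_le_mul (hf : ∀ t ≥ a, HasDerivAt f (f' t) t) {K : ℝ}
    (bound : ∀ t ≥ a, f' t ≤ K * f t) : ∀ t ≥ a, f t ≤ f a * exp (K * (t - a)) := fun t ht => by
  simpa only [gronwallBound_ε0] using le_gronwallBound_of_liminf_deriv_right_le (b := t) (ε := 0)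
    (fun x hx => (hf x hx.1).continuousAt.continuousWithinAt)
    (fun x hx _ hr => (hf x hx.1).hasDerivWithinAt.liminf_right_slope_le hr) le_rfl
    (fun x hx => (bound x hx.1).trans (add_zero _).ge) t ⟨ht, le_rfl⟩

end

theorem comparison_lemma_decay_general (f f' : ℝ → ℝ) (n : ℕ) (k χ α : ℝ)
    (hk : 0 ≤ k) (hχ : 0 < χ)
    (hderiv : ∀ t ≥ (0 : ℝ), HasDerivAt f (f' t) t)
    (hpos : ∀ t ≥ (0 : ℝ), 0 < f t)
    (hineq : ∀ t ≥ (0 : ℝ), f' t + (α - k * f t ^ n) * f t ≤ 0)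
    (hinit : χ ≤ α - k * f 0 ^ n) :
    ∀ t ≥ (0 : ℝ), f t ≤ f 0 * Real.exp (-χ * t) := by
  have hdecay : ∀ t ≥ (0 : ℝ), f t ≤ f 0 → f' t ≤ -χ * f t := by
    intro t ht hft
    have hcoeff : χ ≤ α - k * f t ^ n := hinit.trans <| by
      gcongr
      exact (hpos t ht).le
    nlinarith [mul_le_mul_of_nonneg_right hcoeff (hpos t ht).le, hineq t ht]
  have hbelow := le_apply_of_hasDerivAt_neg_of_eq hderiv fun t ht hft =>
    (hdecay t ht hft.le).trans_lt (mul_neg_of_neg_of_pos (neg_neg_of_pos hχ) (hpos t ht))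
  intro t ht
  simpa only [sub_zero] using
    le_mul_exp_of_hasDerivAt_le_mul hderiv (fun s hs => hdecay s hs (hbelow s hs)) t ht

/-- Exponential-decay consequence of Lemma 2.3: if `f > 0` is differentiable on `[0, ∞)`,
`f' + (α - k fⁿ) f ≤ 0` on `[0, ∞)` and `α - k f(0)ⁿ ≥ χ > 0`,
then `f(t) ≤ f(0) e^{-χ t}` for all `t ≥ 0`. -/
theorem comparison_lemma_decay (f f' : ℝ → ℝ) (n : ℕ) (hn : 0 < n) (k χ α : ℝ)
    (hk : 0 ≤ k) (hχ : 0 < χ)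
    (hderiv : ∀ t ≥ (0 : ℝ), HasDerivAt f (f' t) t)
    (hpos : ∀ t ≥ (0 : ℝ), 0 < f t)
    (hineq : ∀ t ≥ (0 : ℝ), f' t + (α - k * f t ^ n) * f t ≤ 0)
    (hinit : χ ≤ α - k * f 0 ^ n) :
    ∀ t ≥ (0 : ℝ), f t ≤ f 0 * Real.exp (-χ * t) :=
  comparison_lemma_decay_general f f' n k χ α hk hχ hderiv hpos hineq hinit
end

section
/- Let u : ℝ³ → ℝ be continuously differentiable with compact support, and let q ∈ [2,6] with θ = 3(1/2 − 1/q). Then ‖u‖_{L^q(ℝ³)} ≤ 4^θ · ‖∇u‖_{L²(ℝ³)}^θ · ‖u‖_{L²(ℝ³)}^{1−θ}, where ‖∇u‖_{L²(ℝ³)} is the L² norm of the Euclidean length of the gradient of u. -/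
/-!
On `ℝⁿ` with its Euclidean norm, the Gagliardo–Nirenberg–Sobolev inequality
`∫ |v|^(n/(n-1)) ≤ (∫ |∇v|)^(n/(n-1))` holds with constant `1`: on each coordinate line `|v|` is
bounded by the integral of `|∂ᵢv| ≤ |∇v|`, and the grid-lines (Loomis–Whitney) inequality
combines the `n` line bounds. In `ℝ³`, applied to `v = u⁴` with `∇v = 4u³∇u` and followed by
Cauchy–Schwarz, it gives `‖u‖₆⁶ ≤ (4 ‖u‖₆³ ‖∇u‖₂)^(3/2)`, i.e. `‖u‖₆ ≤ 4 ‖∇u‖₂`.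
For `2 ≤ q ≤ 6`, Hölder's inequality interpolates `‖u‖_q ≤ ‖u‖₂^(1-θ) ‖u‖₆^θ`,
where `1/q = (1-θ)/2 + θ/6`, which is exactly `θ = 3(1/2 - 1/q)`.
-/

open Set Function MeasureTheory
open scoped ENNReal

/-- Unlike `lintegral_pow_le_pow_lintegral_fderiv_aux`, which uses the operator norm for the sup
norm on `ι → ℝ`, any measurable majorant `G` of the partial derivatives is allowed; the Euclidean
operator norm is one, which gives the constant `1` below. -/
theorem lintegral_pow_le_pow_lintegral_of_enorm_fderiv_single_le {ι F : Type*} [Fintype ι]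
    [DecidableEq ι] [NormedAddCommGroup F] [NormedSpace ℝ F]
    {p : ℝ} (hp : (Fintype.card ι : ℝ).HolderConjugate p)
    {v : (ι → ℝ) → F} (hv : ContDiff ℝ 1 v) (h2v : HasCompactSupport v)
    {G : (ι → ℝ) → ℝ≥0∞} (hG : Measurable G)
    (hvG : ∀ x i, ‖fderiv ℝ v x (Pi.single i 1)‖ₑ ≤ G x) :
    ∫⁻ x, ‖v x‖ₑ ^ p ≤ (∫⁻ x, G x) ^ p := by
  have hn : (1 : ℝ) ≤ Fintype.card ι - 1 := by
    have : (2 : ℝ) ≤ Fintype.card ι := by exact_mod_cast hp.lt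
    linarith
  calc ∫⁻ x, ‖v x‖ₑ ^ p
      = ∫⁻ x, ∏ _i : ι, ‖v x‖ₑ ^ (1 / (Fintype.card ι - 1 : ℝ)) := by
        congr! 2 with x
        rw [Finset.prod_const, Finset.card_univ, ← ENNReal.rpow_natCast, ← ENNReal.rpow_mul,
          hp.conjugate_eq]
        field_simp
    _ ≤ ∫⁻ x, ∏ i, (∫⁻ t, G (update x i t)) ^ (1 / (Fintype.card ι - 1 : ℝ)) := by
        gcongr with x i
        calc ‖v x‖ₑ
            ≤ ∫⁻ t in Iic (x i), ‖deriv (v ∘ update x i) t‖ₑ := by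
              refine le_trans (by simp) (HasCompactSupport.enorm_le_lintegral_Ici_deriv ?_ ?_ _)
              · exact hv.comp (by convert! contDiff_update 1 x i)
              · exact h2v.comp_isClosedEmbedding (isClosedEmbedding_update x i)
          _ ≤ ∫⁻ t, G (update x i t) := by
              refine (setLIntegral_le_lintegral _ _).trans (lintegral_mono fun t => ?_)
              rw [fderiv_comp_deriv _ (hv.differentiable one_ne_zero).differentiableAt
                (hasDerivAt_update x i t).differentiableAt, deriv_update]
              exact hvG _ i
    _ ≤ (∫⁻ x, G x) ^ p := lintegral_prod_lintegral_pow_le _ hp hG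

theorem lintegral_pow_le_pow_lintegral_fderiv_euclidean {ι F : Type*} [Fintype ι]
    [NormedAddCommGroup F] [NormedSpace ℝ F] {p : ℝ} (hp : (Fintype.card ι : ℝ).HolderConjugate p)
    {v : EuclideanSpace ℝ ι → F} (hv : ContDiff ℝ 1 v) (h2v : HasCompactSupport v) :
    ∫⁻ x, ‖v x‖ₑ ^ p ≤ (∫⁻ x, ‖fderiv ℝ v x‖ₑ) ^ p := by
  classical
  let e : (ι → ℝ) ≃L[ℝ] EuclideanSpace ℝ ι := (EuclideanSpace.equiv ι ℝ).symm
  have he : MeasurePreserving e := PiLp.volume_preserving_toLp ι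
  have he' : MeasurableEmbedding e := e.toHomeomorph.measurableEmbedding
  rw [← he.lintegral_comp_emb he', ← he.lintegral_comp_emb he']
  refine lintegral_pow_le_pow_lintegral_of_enorm_fderiv_single_le hp (hv.comp e.contDiff)
    (h2v.comp_homeomorph e.toHomeomorph)
    ((hv.continuous_fderiv one_ne_zero).comp e.continuous).enorm.measurable fun y i => ?_
  rw [fderiv_comp y (hv.differentiable one_ne_zero _) e.differentiableAt, e.fderiv]
  calc ‖fderiv ℝ v (e y) (e (Pi.single i 1))‖ₑ ≤ ‖fderiv ℝ v (e y)‖ₑ * ‖e (Pi.single i 1)‖ₑ :=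
        ContinuousLinearMap.le_opENorm _ _
    _ = ‖fderiv ℝ v (e y)‖ₑ := by simp [e, enorm_eq_nnnorm, PiLp.nnnorm_single]

theorem eLpNorm'_le_eLpNorm'_rpow_mul_eLpNorm'_rpow {α E : Type*} [MeasurableSpace α]
    [NormedAddCommGroup E] {μ : Measure α} {f : α → E} (hf : AEStronglyMeasurable f μ)
    {p₀ p₁ q θ : ℝ} (hp₀ : 0 < p₀) (hp₁ : 0 < p₁) (hq : 0 < q) (hθ₀ : 0 ≤ θ) (hθ₁ : θ ≤ 1)
    (hpq : 1 / q = (1 - θ) / p₀ + θ / p₁) :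
    eLpNorm' f q μ ≤ eLpNorm' f p₀ μ ^ (1 - θ) * eLpNorm' f p₁ μ ^ θ := by
  have ha : 0 ≤ q * (1 - θ) / p₀ := by have := sub_nonneg.2 hθ₁; positivity
  have hb : 0 ≤ q * θ / p₁ := by positivity
  have hab : q * (1 - θ) / p₀ + q * θ / p₁ = 1 := by
    rw [mul_div_assoc, mul_div_assoc, ← mul_add, ← hpq, mul_one_div_cancel hq.ne']
  have hHolder := ENNReal.lintegral_mul_norm_pow_le (μ := μ)
    (hf.enorm.pow_const p₀) (hf.enorm.pow_const p₁) ha hb hab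
  calc eLpNorm' f q μ
      = (∫⁻ a, (‖f a‖ₑ ^ p₀) ^ (q * (1 - θ) / p₀) * (‖f a‖ₑ ^ p₁) ^ (q * θ / p₁) ∂μ) ^ (1 / q) := by
        rw [eLpNorm']
        congr 1
        refine lintegral_congr fun a => ?_
        rw [← ENNReal.rpow_mul, ← ENNReal.rpow_mul, ← ENNReal.rpow_add_of_nonneg _ _
          (by positivity) (by positivity)]
        congr 1
        field_simp
        ring
    _ ≤ ((∫⁻ a, ‖f a‖ₑ ^ p₀ ∂μ) ^ (q * (1 - θ) / p₀) * (∫⁻ a, ‖f a‖ₑ ^ p₁ ∂μ) ^ (q * θ / p₁))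
          ^ (1 / q) := ENNReal.rpow_le_rpow hHolder (by positivity)
    _ = eLpNorm' f p₀ μ ^ (1 - θ) * eLpNorm' f p₁ μ ^ θ := by
        rw [ENNReal.mul_rpow_of_nonneg _ _ (by positivity), eLpNorm', eLpNorm',
          ← ENNReal.rpow_mul, ← ENNReal.rpow_mul, ← ENNReal.rpow_mul, ← ENNReal.rpow_mul]
        congr 2 <;> field_simp

theorem eLpNorm'_ne_top_of_hasCompactSupport {X E : Type*} [TopologicalSpace X]
    [MeasurableSpace X] [OpensMeasurableSpace X] {μ : Measure X} [IsFiniteMeasureOnCompacts μ]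
    [NormedAddCommGroup E] {f : X → E} (hf : Continuous f) (h'f : HasCompactSupport f)
    {q : ℝ} (hq : 0 < q) : eLpNorm' f q μ ≠ ∞ := by
  have := (hf.memLp_of_hasCompactSupport h'f (p := ENNReal.ofReal q) (μ := μ)).eLpNorm_ne_top
  rwa [eLpNorm_eq_eLpNorm' (by simpa) ENNReal.ofReal_ne_top, ENNReal.toReal_ofReal hq.le] at this

theorem enorm_fderiv_pow {E : Type*} [NormedAddCommGroup E] [NormedSpace ℝ E]
    {u : E → ℝ} {x : E} (n : ℕ) (hu : DifferentiableAt ℝ u x) :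
    ‖fderiv ℝ (fun y => u y ^ n) x‖ₑ = n * ‖u x‖ₑ ^ (n - 1) * ‖fderiv ℝ u x‖ₑ := by
  rw [fderiv_fun_pow n hu, enorm_smul, nsmul_eq_mul, enorm_mul, enorm_pow, Real.enorm_natCast]

theorem lintegral_enorm_fderiv_pow_four_le {E : Type*} [NormedAddCommGroup E] [NormedSpace ℝ E]
    [MeasurableSpace E] [BorelSpace E] {μ : Measure E} {u : E → ℝ} (hu : ContDiff ℝ 1 u) :
    ∫⁻ x, ‖fderiv ℝ (fun y => u y ^ 4) x‖ₑ ∂μ ≤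
      4 * (eLpNorm' u 6 μ ^ 3 * eLpNorm' (fderiv ℝ u) 2 μ) := by
  have hdu := hu.differentiable one_ne_zero
  calc ∫⁻ x, ‖fderiv ℝ (fun y => u y ^ 4) x‖ₑ ∂μ
      = 4 * ∫⁻ x, ‖u x‖ₑ ^ 3 * ‖fderiv ℝ u x‖ₑ ∂μ := by
        simp_rw [enorm_fderiv_pow 4 (hdu _), mul_assoc]
        exact lintegral_const_mul' _ _ (by norm_num)
    _ ≤ 4 * ((∫⁻ x, (‖u x‖ₑ ^ 3) ^ (2 : ℝ) ∂μ) ^ (1 / 2 : ℝ) *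
          (∫⁻ x, ‖fderiv ℝ u x‖ₑ ^ (2 : ℝ) ∂μ) ^ (1 / 2 : ℝ)) := by
        gcongr
        exact ENNReal.lintegral_mul_le_Lp_mul_Lq μ Real.HolderConjugate.two_two
          (hu.continuous.enorm.measurable.pow_const 3).aemeasurable
          (hu.continuous_fderiv one_ne_zero).enorm.aemeasurable
    _ = 4 * (eLpNorm' u 6 μ ^ 3 * eLpNorm' (fderiv ℝ u) 2 μ) := by
        rw [eLpNorm', eLpNorm', ← ENNReal.rpow_natCast, ← ENNReal.rpow_mul]
        norm_num
        congr 3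
        refine lintegral_congr fun x => ?_
        ring

theorem eLpNorm'_six_rpow_six_le_lintegral_enorm_fderiv_pow_four
    {u : EuclideanSpace ℝ (Fin 3) → ℝ} (hu : ContDiff ℝ 1 u) (hsupp : HasCompactSupport u) :
    eLpNorm' u 6 volume ^ (6 : ℝ) ≤
      (∫⁻ x, ‖fderiv ℝ (fun y => u y ^ 4) x‖ₑ) ^ (3 / 2 : ℝ) := by
  have hp : (Fintype.card (Fin 3) : ℝ).HolderConjugate (3 / 2) := by
    rw [Real.holderConjugate_iff]; norm_num
  convert lintegral_pow_le_pow_lintegral_fderiv_euclidean hp (hu.pow 4)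
    (hsupp.comp_left (g := fun t : ℝ => t ^ 4) (by norm_num)) using 1
  rw [eLpNorm', ← ENNReal.rpow_mul]
  norm_num
  refine lintegral_congr fun x => ?_
  rw [← ENNReal.rpow_natCast (‖u x‖ₑ) 4, ← ENNReal.rpow_mul]
  norm_num

theorem eLpNorm'_six_le_four_mul_eLpNorm'_fderiv_two {u : EuclideanSpace ℝ (Fin 3) → ℝ}
    (hu : ContDiff ℝ 1 u) (hsupp : HasCompactSupport u) :
    eLpNorm' u 6 volume ≤ 4 * eLpNorm' (fderiv ℝ u) 2 volume := by
  set N := eLpNorm' u 6 volume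
  set M := eLpNorm' (fderiv ℝ u) 2 volume
  have hN : N * N ^ 3 ≤ 4 * M * N ^ 3 := by
    have h := ENNReal.rpow_le_rpow ((eLpNorm'_six_rpow_six_le_lintegral_enorm_fderiv_pow_four
      hu hsupp).trans (ENNReal.rpow_le_rpow (lintegral_enorm_fderiv_pow_four_le hu)
        (by norm_num))) (by norm_num : (0 : ℝ) ≤ 2 / 3)
    rw [← ENNReal.rpow_mul, ← ENNReal.rpow_mul] at h
    norm_num at h
    calc N * N ^ 3 = N ^ 4 := by ring
      _ ≤ 4 * (N ^ 3 * M) := h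
      _ = 4 * M * N ^ 3 := by ring
  rcases eq_or_ne N 0 with hN0 | hN0
  · simp [hN0]
  have hNtop : N ≠ ∞ := eLpNorm'_ne_top_of_hasCompactSupport hu.continuous hsupp (by norm_num)
  exact (ENNReal.mul_le_mul_iff_left (pow_ne_zero 3 hN0) (ENNReal.pow_ne_top hNtop)).1 hN

theorem integral_norm_rpow_rpow_one_div_eq_toReal_eLpNorm' {α E : Type*} [MeasurableSpace α]
    [NormedAddCommGroup E] {μ : Measure α} {f : α → E} (hf : AEStronglyMeasurable f μ)
    {q : ℝ} (hq : 0 ≤ q) : (∫ a, ‖f a‖ ^ q ∂μ) ^ (1 / q) = (eLpNorm' f q μ).toReal := by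
  rw [eLpNorm', ← ENNReal.toReal_rpow, integral_eq_lintegral_of_nonneg_ae
    (ae_of_all _ fun a => by positivity) (hf.norm.aemeasurable.pow_const q).aestronglyMeasurable]
  simp_rw [← ENNReal.ofReal_rpow_of_nonneg (norm_nonneg _) hq, ofReal_norm]

theorem norm_gradient_eq_norm_fderiv {F : Type*} [NormedAddCommGroup F] [InnerProductSpace ℝ F]
    [CompleteSpace F] (f : F → ℝ) (x : F) : ‖gradient f x‖ = ‖fderiv ℝ f x‖ :=
  (InnerProductSpace.toDual ℝ F).symm.norm_map _

theorem eLpNorm'_le_four_rpow_mul_eLpNorm'_fderiv_rpow_mul_eLpNorm'_rpow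
    {u : EuclideanSpace ℝ (Fin 3) → ℝ} (hu : ContDiff ℝ 1 u) (hsupp : HasCompactSupport u)
    {q θ : ℝ} (hq : 0 < q) (hθ₀ : 0 ≤ θ) (hθ₁ : θ ≤ 1) (hqθ : 1 / q = (1 - θ) / 2 + θ / 6) :
    eLpNorm' u q volume ≤
      4 ^ θ * eLpNorm' (fderiv ℝ u) 2 volume ^ θ * eLpNorm' u 2 volume ^ (1 - θ) :=
  calc eLpNorm' u q volume ≤ eLpNorm' u 2 volume ^ (1 - θ) * eLpNorm' u 6 volume ^ θ :=
        eLpNorm'_le_eLpNorm'_rpow_mul_eLpNorm'_rpow hu.continuous.aestronglyMeasurable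
          two_pos (by norm_num) hq hθ₀ hθ₁ hqθ
    _ ≤ eLpNorm' u 2 volume ^ (1 - θ) * (4 * eLpNorm' (fderiv ℝ u) 2 volume) ^ θ := by
        gcongr
        exact eLpNorm'_six_le_four_mul_eLpNorm'_fderiv_two hu hsupp
    _ = 4 ^ θ * eLpNorm' (fderiv ℝ u) 2 volume ^ θ * eLpNorm' u 2 volume ^ (1 - θ) := by
        rw [ENNReal.mul_rpow_of_nonneg _ _ hθ₀]
        ring

/-- Gagliardo–Nirenberg–Ladyzhenskaya interpolation inequality in ℝ³:
for `u` continuously differentiable with compact support, `2 ≤ q ≤ 6` and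
`θ = 3(1/2 - 1/q)`, one has `‖u‖_{L^q} ≤ 4^θ ‖∇u‖_{L²}^θ ‖u‖_{L²}^{1-θ}`. -/
theorem gagliardo_nirenberg_ladyzhenskaya
    (u : EuclideanSpace ℝ (Fin 3) → ℝ) (hu : ContDiff ℝ 1 u)
    (hsupp : HasCompactSupport u)
    (q θ : ℝ) (hq2 : 2 ≤ q) (hq6 : q ≤ 6) (hθ : θ = 3 * (1 / 2 - 1 / q)) :
    (∫ x, |u x| ^ q) ^ (1 / q) ≤
      4 ^ θ * ((∫ x, ‖gradient u x‖ ^ 2) ^ ((1 : ℝ) / 2)) ^ θ *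
        ((∫ x, (u x) ^ 2) ^ ((1 : ℝ) / 2)) ^ (1 - θ) := by
  have hq : 0 < q := by linarith
  have hθ₀ : 0 ≤ θ := by
    have := one_div_le_one_div_of_le two_pos hq2
    rw [hθ]; linarith
  have hθ₁ : θ ≤ 1 := by
    have := one_div_le_one_div_of_le hq hq6
    rw [hθ]; linarith
  have key := eLpNorm'_le_four_rpow_mul_eLpNorm'_fderiv_rpow_mul_eLpNorm'_rpow hu hsupp hq hθ₀ hθ₁
    (by rw [hθ]; field_simp; ring)
  have hDu : Continuous (fderiv ℝ u) := hu.continuous_fderiv one_ne_zero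
  have hDu_fin := eLpNorm'_ne_top_of_hasCompactSupport hDu (hsupp.fderiv ℝ) two_pos (μ := volume)
  have hu_fin := eLpNorm'_ne_top_of_hasCompactSupport hu.continuous hsupp two_pos (μ := volume)
  have hLq : (∫ x, |u x| ^ q) ^ (1 / q) = (eLpNorm' u q volume).toReal := by
    simpa using integral_norm_rpow_rpow_one_div_eq_toReal_eLpNorm'
      hu.continuous.aestronglyMeasurable hq.le
  have hL2 : (∫ x, (u x) ^ 2) ^ ((1 : ℝ) / 2) = (eLpNorm' u 2 volume).toReal := by
    simpa using integral_norm_rpow_rpow_one_div_eq_toReal_eLpNorm'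
      hu.continuous.aestronglyMeasurable zero_le_two
  have hDL2 : (∫ x, ‖gradient u x‖ ^ 2) ^ ((1 : ℝ) / 2) =
      (eLpNorm' (fderiv ℝ u) 2 volume).toReal := by
    simpa [norm_gradient_eq_norm_fderiv] using
      integral_norm_rpow_rpow_one_div_eq_toReal_eLpNorm' hDu.aestronglyMeasurable zero_le_two
  rw [hLq, hL2, hDL2]
  convert ENNReal.toReal_mono (by finiteness) key using 1
  simp only [ENNReal.toReal_mul, ← ENNReal.toReal_rpow]
  norm_num
end

section
/- Let u : ℝ³ → ℝ be continuously differentiable with compact support. Then (2/3)∫_{ℝ³} u³ ≤ (1/2)‖∇u‖_{L²(ℝ³)}² + (2¹¹/3)‖u‖_{L²(ℝ³)}⁶. -/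
/-!
Put `v = u²`. The Gagliardo–Nirenberg–Sobolev inequality in dimension 3 gives
`∫ |u|³ = ∫ |v|^{3/2} ≤ (√3 ∫ |∇v|)^{3/2}`: with the sup norm on `ℝ³` it holds with constant 1,
and passing to the Euclidean norm costs the factor `√3`. Since `|∇v| = 2 |u| |∇u|`,
Cauchy–Schwarz gives `∫ |∇v| ≤ 2 ‖u‖₂ ‖∇u‖₂`, hence `(∫ |u|³)⁴ ≤ 1728 ‖u‖₂⁶ ‖∇u‖₂⁶`. The inequality
`4 a³ b ≤ (a + b)⁴` with `a = (3/4) ‖∇u‖₂²` and `b = 1024 ‖u‖₂⁶` then splits the product into a sum.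
-/

open MeasureTheory ENNReal NNReal

section EuclideanSpace

variable {ι : Type*} [Fintype ι]

theorem enorm_toLp_two_le (y : ι → ℝ) :
    ‖WithLp.toLp 2 y‖ₑ ≤ NNReal.sqrt (Fintype.card ι) * ‖y‖ₑ := by
  simpa [NNReal.sqrt_eq_rpow, edist_zero_right] using
    (PiLp.lipschitzWith_toLp 2 (fun _ : ι => ℝ)).edist_le_mul y 0

theorem lintegral_pow_le_pow_lintegral_fderiv_euclideanSpace
    {F : Type*} [NormedAddCommGroup F] [NormedSpace ℝ F] {p : ℝ}
    (hp : (Fintype.card ι : ℝ).HolderConjugate p)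
    {u : EuclideanSpace ℝ ι → F} (hu : ContDiff ℝ 1 u) (h2u : HasCompactSupport u) :
    ∫⁻ x, ‖u x‖ₑ ^ p ≤ (NNReal.sqrt (Fintype.card ι) * ∫⁻ x, ‖fderiv ℝ u x‖ₑ) ^ p := by
  set e := (PiLp.continuousLinearEquiv 2 ℝ (fun _ : ι => ℝ)).symm
  have he : MeasurePreserving e := PiLp.volume_preserving_toLp ι
  have hDu : Continuous fun x => ‖fderiv ℝ u x‖ₑ := (hu.continuous_fderiv one_ne_zero).enorm
  calc ∫⁻ x, ‖u x‖ₑ ^ p = ∫⁻ y, ‖u (e y)‖ₑ ^ p :=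
        (he.lintegral_comp (hu.continuous.enorm.measurable.pow_const p)).symm
    _ ≤ (∫⁻ y, ‖fderiv ℝ (u ∘ e) y‖ₑ) ^ p :=
        lintegral_pow_le_pow_lintegral_fderiv_aux hp (hu.comp e.contDiff)
          (h2u.comp_homeomorph e.toHomeomorph)
    _ ≤ (∫⁻ y, NNReal.sqrt (Fintype.card ι) * ‖fderiv ℝ u (e y)‖ₑ) ^ p := by
        refine ENNReal.rpow_le_rpow (lintegral_mono fun y => ?_) hp.symm.nonneg
        rw [fderiv_comp y (hu.differentiable one_ne_zero _) e.differentiableAt, e.fderiv,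
          mul_comm]
        refine (ContinuousLinearMap.opENorm_comp_le _ _).trans (mul_le_mul_right ?_ _)
        exact ContinuousLinearMap.opENorm_le_bound _ enorm_toLp_two_le
    _ = (NNReal.sqrt (Fintype.card ι) * ∫⁻ x, ‖fderiv ℝ u x‖ₑ) ^ p := by
        rw [lintegral_const_mul' _ _ coe_ne_top, he.lintegral_comp hDu.measurable]

theorem enorm_fderiv_sq {E : Type*} [NormedAddCommGroup E] [NormedSpace ℝ E] {u : E → ℝ}
    {x : E} (hu : DifferentiableAt ℝ u x) :
    ‖fderiv ℝ (fun y => u y ^ 2) x‖ₑ = 2 * ‖u x‖ₑ * ‖fderiv ℝ u x‖ₑ := by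
  rw [fderiv_fun_pow 2 hu, enorm_smul, nsmul_eq_mul, enorm_mul, pow_one]
  exact_mod_cast congrArg (· * ‖u x‖ₑ * ‖fderiv ℝ u x‖ₑ) (Real.enorm_natCast 2)

theorem lintegral_pow_two_mul_le_lintegral_sq_mul_lintegral_fderiv_sq
    {p : ℝ} (hp : (Fintype.card ι : ℝ).HolderConjugate p)
    {u : EuclideanSpace ℝ ι → ℝ} (hu : ContDiff ℝ 1 u) (h2u : HasCompactSupport u) :
    ∫⁻ x, ‖u x‖ₑ ^ (2 * p) ≤
      (2 * NNReal.sqrt (Fintype.card ι) * (∫⁻ x, ‖u x‖ₑ ^ (2 : ℝ)) ^ (1 / 2 : ℝ) *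
        (∫⁻ x, ‖fderiv ℝ u x‖ₑ ^ (2 : ℝ)) ^ (1 / 2 : ℝ)) ^ p := by
  have hu_sq : HasCompactSupport fun x => u x ^ 2 := h2u.comp_left (g := (· ^ 2)) (by simp)
  have cauchy_schwarz := ENNReal.lintegral_mul_le_Lp_mul_Lq volume
    Real.HolderConjugate.two_two hu.continuous.enorm.aemeasurable
    (hu.continuous_fderiv one_ne_zero).enorm.aemeasurable
  calc ∫⁻ x, ‖u x‖ₑ ^ (2 * p) = ∫⁻ x, ‖u x ^ 2‖ₑ ^ p := by
        simp_rw [enorm_pow, ENNReal.rpow_mul, ← ENNReal.rpow_natCast]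
        norm_num
    _ ≤ (NNReal.sqrt (Fintype.card ι) * ∫⁻ x, ‖fderiv ℝ (fun y => u y ^ 2) x‖ₑ) ^ p :=
        lintegral_pow_le_pow_lintegral_fderiv_euclideanSpace hp (hu.pow 2) hu_sq
    _ = (NNReal.sqrt (Fintype.card ι) * (2 * ∫⁻ x, ‖u x‖ₑ * ‖fderiv ℝ u x‖ₑ)) ^ p := by
        simp_rw [enorm_fderiv_sq (hu.differentiable one_ne_zero _), mul_assoc]
        rw [lintegral_const_mul' _ _ ofNat_ne_top]
    _ ≤ _ := by
        refine ENNReal.rpow_le_rpow ?_ hp.symm.nonneg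
        calc _ ≤ NNReal.sqrt (Fintype.card ι) * (2 * ((∫⁻ x, ‖u x‖ₑ ^ (2 : ℝ)) ^ (1 / 2 : ℝ) *
                (∫⁻ x, ‖fderiv ℝ u x‖ₑ ^ (2 : ℝ)) ^ (1 / 2 : ℝ))) := by
              gcongr
              exact cauchy_schwarz
          _ = _ := by ring

end EuclideanSpace

theorem ofReal_integral_norm_pow_of_hasCompactSupport {X E : Type*} [TopologicalSpace X]
    [MeasurableSpace X] [OpensMeasurableSpace X] {μ : Measure X} [IsFiniteMeasureOnCompacts μ]
    [NormedAddCommGroup E] {f : X → E} (hf : Continuous f) (h2f : HasCompactSupport f)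
    {n : ℕ} (hn : n ≠ 0) :
    ENNReal.ofReal (∫ x, ‖f x‖ ^ n ∂μ) = ∫⁻ x, ‖f x‖ₑ ^ n ∂μ := by
  have hint : Integrable (fun x => ‖f x‖ ^ n) μ :=
    (by fun_prop : Continuous fun x => ‖f x‖ ^ n).integrable_of_hasCompactSupport
      (h2f.comp_left (g := fun y : E => ‖y‖ ^ n) (by simp [hn]))
  simpa [enorm_pow] using ofReal_integral_norm_eq_lintegral_enorm hint

theorem integral_abs_pow_three_pow_four_le {u : EuclideanSpace ℝ (Fin 3) → ℝ}
    (hu : ContDiff ℝ 1 u) (h2u : HasCompactSupport u) :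
    (∫ x, |u x| ^ 3) ^ 4 ≤ 1728 * (∫ x, u x ^ 2) ^ 3 * (∫ x, ‖fderiv ℝ u x‖ ^ 2) ^ 3 := by
  have hp : ((Fintype.card (Fin 3) : ℕ) : ℝ).HolderConjugate (3 / 2) := by
    rw [Fintype.card_fin]
    exact ⟨by norm_num, by norm_num, by norm_num⟩
  have h := lintegral_pow_two_mul_le_lintegral_sq_mul_lintegral_fderiv_sq hp hu h2u
  have hI : ENNReal.ofReal (∫ x, |u x| ^ 3) = ∫⁻ x, ‖u x‖ₑ ^ (2 * (3 / 2) : ℝ) := by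
    simp_rw [← Real.norm_eq_abs]
    rw [ofReal_integral_norm_pow_of_hasCompactSupport hu.continuous h2u three_ne_zero]
    norm_num
  have hA : ENNReal.ofReal (∫ x, u x ^ 2) = ∫⁻ x, ‖u x‖ₑ ^ (2 : ℝ) := by
    simp_rw [← sq_abs (u _), ← Real.norm_eq_abs]
    rw [ofReal_integral_norm_pow_of_hasCompactSupport hu.continuous h2u two_ne_zero]
    norm_num
  have hB : ENNReal.ofReal (∫ x, ‖fderiv ℝ u x‖ ^ 2) = ∫⁻ x, ‖fderiv ℝ u x‖ₑ ^ (2 : ℝ) := by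
    rw [ofReal_integral_norm_pow_of_hasCompactSupport (hu.continuous_fderiv one_ne_zero)
      (h2u.fderiv ℝ) two_ne_zero]
    norm_num
  rw [← hI, ← hA, ← hB] at h
  have hc : ((2 * NNReal.sqrt (Fintype.card (Fin 3)) : ℝ≥0) : ℝ≥0∞) ^ 6 = 1728 := by
    rw [Fintype.card_fin]
    norm_cast
    rw [show (2 * NNReal.sqrt 3) ^ 6 = 64 * (NNReal.sqrt 3 ^ 2) ^ 3 by ring, NNReal.sq_sqrt]
    norm_num
  rw [← ENNReal.ofReal_le_ofReal_iff (by positivity), ENNReal.ofReal_mul (by positivity),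
    ENNReal.ofReal_mul (by norm_num), ENNReal.ofReal_pow (by positivity),
    ENNReal.ofReal_pow (by positivity), ENNReal.ofReal_pow (by positivity),
    ENNReal.ofReal_ofNat, ← hc]
  calc _ ≤ _ := pow_le_pow_left' h 4
    _ = _ := by
      simp only [← ENNReal.rpow_natCast, ← ENNReal.rpow_mul,
        ENNReal.mul_rpow_of_nonneg _ _ (by norm_num : (0 : ℝ) ≤ 3 / 2 * (4 : ℕ))]
      norm_num
      ring

theorem four_mul_pow_three_mul_le_add_pow_four {a b : ℝ} (ha : 0 ≤ a) (hb : 0 ≤ b) :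
    4 * a ^ 3 * b ≤ (a + b) ^ 4 := by
  nlinarith [show 0 ≤ a ^ 4 + 6 * a ^ 2 * b ^ 2 + 4 * a * b ^ 3 + b ^ 4 by positivity]

/-- Inequality (2.11) of the paper: for `u` continuously differentiable with
compact support on ℝ³, `(2/3) ∫ u³ ≤ (1/2) ‖∇u‖² + (2¹¹/3) ‖u‖⁶`. -/
theorem cube_integral_bound
    (u : EuclideanSpace ℝ (Fin 3) → ℝ) (hu : ContDiff ℝ 1 u)
    (hsupp : HasCompactSupport u) :
    (2 / 3) * ∫ x, (u x) ^ 3 ≤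
      (1 / 2) * (∫ x, ‖gradient u x‖ ^ 2) +
        (2 ^ 11 / 3) * (∫ x, (u x) ^ 2) ^ 3 := by
  have hgrad : ∫ x, ‖gradient u x‖ ^ 2 = ∫ x, ‖fderiv ℝ u x‖ ^ 2 := by
    simp only [gradient, LinearIsometryEquiv.norm_map]
  have hcube : ∫ x, u x ^ 3 ≤ ∫ x, |u x| ^ 3 :=
    calc _ ≤ ∫ x, |u x ^ 3| := (le_abs_self _).trans abs_integral_le_integral_abs
      _ = _ := by simp_rw [abs_pow]
  have hsplit :
      ∫ x, |u x| ^ 3 ≤ 3 / 4 * (∫ x, ‖fderiv ℝ u x‖ ^ 2) + 1024 * (∫ x, u x ^ 2) ^ 3 := by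
    refine le_of_pow_le_pow_left₀ four_ne_zero (by positivity) ?_
    calc _ ≤ 1728 * (∫ x, u x ^ 2) ^ 3 * (∫ x, ‖fderiv ℝ u x‖ ^ 2) ^ 3 :=
          integral_abs_pow_three_pow_four_le hu hsupp
      _ = 4 * (3 / 4 * (∫ x, ‖fderiv ℝ u x‖ ^ 2)) ^ 3 * (1024 * (∫ x, u x ^ 2) ^ 3) := by ring
      _ ≤ _ := four_mul_pow_three_mul_le_add_pow_four (by positivity) (by positivity)
  rw [hgrad]
  linarith
end

section
/- Let u : ℝ³ → ℝ be continuously differentiable with compact support. Then ∫_{ℝ³} u⁴ ≤ 4³ · ‖u‖_{L²(ℝ³)} · ‖∇u‖_{L²(ℝ³)}³. -/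
/-!
Along every coordinate line, `u² ≤ 2 ∫ |u| |∇u|` (fundamental theorem of calculus for `u²`).
Multiplying the bounds along the `y`- and `z`-lines and integrating over a plane `x = const` gives
`∫∫ u⁴ ≤ 4 (∫∫ |u| |∇u|)²`. Cauchy–Schwarz on the plane, together with the bound along the
`x`-lines (which gives `∫∫ u² ≤ 2 ∫∫∫ |u| |∇u|`), turns this into
`∫∫ u⁴ ≤ 8 (∫∫∫ |u| |∇u|) ∫∫ |∇u|²`. Integrating in `x` and applying Cauchy–Schwarz once more
yields `∫ u⁴ ≤ 8 ‖u‖₂ ‖∇u‖₂³`, a better constant than `4³`.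
-/

open MeasureTheory Set
open scoped ENNReal

theorem HasCompactSupport.enorm_sq_le_lintegral_enorm_mul_enorm_deriv {g : ℝ → ℝ}
    (hg : ContDiff ℝ 1 g) (hsupp : HasCompactSupport g) (x : ℝ) :
    ‖g x‖ₑ ^ 2 ≤ 2 * ∫⁻ t, ‖g t‖ₑ * ‖deriv g t‖ₑ := by
  have hderiv (t : ℝ) : deriv (fun s => g s ^ 2) t = 2 * g t * deriv g t := by
    rw [deriv_fun_pow (hg.differentiable one_ne_zero t)]
    norm_num
  calc ‖g x‖ₑ ^ 2 = ‖g x ^ 2‖ₑ := by rw [enorm_pow]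
    _ ≤ ∫⁻ t in Iic x, ‖deriv (fun s => g s ^ 2) t‖ₑ :=
        HasCompactSupport.enorm_le_lintegral_Ici_deriv (hg.pow 2)
          (hsupp.comp_left (g := (· ^ 2)) (zero_pow two_ne_zero)) x
    _ ≤ ∫⁻ t, ‖deriv (fun s => g s ^ 2) t‖ₑ := setLIntegral_le_lintegral _ _
    _ = 2 * ∫⁻ t, ‖g t‖ₑ * ‖deriv g t‖ₑ := by
        simp_rw [hderiv, enorm_mul, mul_assoc]
        rw [lintegral_const_mul' _ _ (by simp), Real.enorm_of_nonneg zero_le_two]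
        simp

theorem HasCompactSupport.comp_add_smul {E F : Type*} [NormedAddCommGroup E] [NormedSpace ℝ E]
    [Zero F] {u : E → F} (hsupp : HasCompactSupport u) (c : E) {v : E} (hv : v ≠ 0) :
    HasCompactSupport fun t : ℝ => u (c + t • v) :=
  hsupp.comp_isClosedEmbedding
    ((Homeomorph.addLeft c).isClosedEmbedding.comp (isClosedEmbedding_smul_left hv))

theorem HasCompactSupport.enorm_sq_le_lintegral_enorm_mul_enorm_fderiv {E : Type*}
    [NormedAddCommGroup E] [NormedSpace ℝ E] {u : E → ℝ} (hu : ContDiff ℝ 1 u)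
    (hsupp : HasCompactSupport u) (c : E) {v : E} (hv : ‖v‖ = 1) (x : ℝ) :
    ‖u (c + x • v)‖ₑ ^ 2 ≤ 2 * ∫⁻ t : ℝ, ‖u (c + t • v)‖ₑ * ‖fderiv ℝ u (c + t • v)‖ₑ := by
  have hg : ContDiff ℝ 1 fun t : ℝ => u (c + t • v) := hu.comp (by fun_prop)
  have hderiv (t : ℝ) : deriv (fun s => u (c + s • v)) t = fderiv ℝ u (c + t • v) v := by
    have hline : HasDerivAt (fun s : ℝ => c + s • v) v t := by
      simpa using ((hasDerivAt_id t).smul_const v).const_add c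
    exact ((hu.differentiable one_ne_zero _).hasFDerivAt.comp_hasDerivAt t hline).deriv
  have hv' : ‖v‖ₑ = 1 := by rw [← ofReal_norm, hv, ENNReal.ofReal_one]
  have hv₀ : v ≠ 0 := norm_ne_zero_iff.mp (by simp [hv])
  refine ((hsupp.comp_add_smul c hv₀).enorm_sq_le_lintegral_enorm_mul_enorm_deriv hg x).trans ?_
  gcongr with t
  rw [hderiv]
  simpa [hv'] using (fderiv ℝ u (c + t • v)).le_opENorm v

section ProductIntegrals

variable {α β γ : Type*} [MeasurableSpace α] [MeasurableSpace β] [MeasurableSpace γ]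
  {μ : Measure α} {ν : Measure β} {ρ : Measure γ}

theorem lintegral_mul_le_L2_mul_L2 {f g : α → ℝ≥0∞} (hf : AEMeasurable f μ)
    (hg : AEMeasurable g μ) :
    ∫⁻ a, f a * g a ∂μ ≤ (∫⁻ a, f a ^ 2 ∂μ) ^ (1 / 2 : ℝ) * (∫⁻ a, g a ^ 2 ∂μ) ^ (1 / 2 : ℝ) := by
  simpa only [Pi.mul_apply, ENNReal.rpow_two] using
    ENNReal.lintegral_mul_le_Lp_mul_Lq μ Real.HolderConjugate.two_two hf hg

theorem sq_lintegral_mul_le_mul_lintegral_sq {f g : α → ℝ≥0∞} (hf : AEMeasurable f μ)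
    (hg : AEMeasurable g μ) :
    (∫⁻ a, f a * g a ∂μ) ^ 2 ≤ (∫⁻ a, f a ^ 2 ∂μ) * ∫⁻ a, g a ^ 2 ∂μ := by
  calc (∫⁻ a, f a * g a ∂μ) ^ 2
      ≤ ((∫⁻ a, f a ^ 2 ∂μ) ^ (1 / 2 : ℝ) * (∫⁻ a, g a ^ 2 ∂μ) ^ (1 / 2 : ℝ)) ^ 2 := by
        gcongr; exact lintegral_mul_le_L2_mul_L2 hf hg
    _ = (∫⁻ a, f a ^ 2 ∂μ) * ∫⁻ a, g a ^ 2 ∂μ := by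
        rw [mul_pow, ← ENNReal.rpow_natCast, ← ENNReal.rpow_natCast, ← ENNReal.rpow_mul,
          ← ENNReal.rpow_mul]
        norm_num

variable [SFinite ν] [SFinite ρ]

theorem lintegral_prod_pow_four_le_of_sq_le_lintegral_lines {V W : β × γ → ℝ≥0∞}
    (hW : Measurable W) {c : ℝ≥0∞} (h₁ : ∀ y z, V (y, z) ^ 2 ≤ c * ∫⁻ s, W (s, z) ∂ν)
    (h₂ : ∀ y z, V (y, z) ^ 2 ≤ c * ∫⁻ r, W (y, r) ∂ρ) :
    ∫⁻ q, V q ^ 4 ∂ν.prod ρ ≤ c ^ 2 * (∫⁻ q, W q ∂ν.prod ρ) ^ 2 := by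
  have hF : Measurable fun y => ∫⁻ r, W (y, r) ∂ρ := hW.lintegral_prod_right'
  have hG : Measurable fun z => ∫⁻ s, W (s, z) ∂ν := hW.lintegral_prod_left'
  calc ∫⁻ q, V q ^ 4 ∂ν.prod ρ
      ≤ ∫⁻ q, (c * ∫⁻ r, W (q.1, r) ∂ρ) * (c * ∫⁻ s, W (s, q.2) ∂ν) ∂ν.prod ρ :=
        lintegral_mono fun q => by
          rw [show V q ^ 4 = V q ^ 2 * V q ^ 2 by ring]
          exact mul_le_mul' (h₂ q.1 q.2) (h₁ q.1 q.2)
    _ = (c * ∫⁻ q, W q ∂ν.prod ρ) * (c * ∫⁻ q, W q ∂ν.prod ρ) := by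
        rw [lintegral_prod_mul (hF.const_mul c).aemeasurable (hG.const_mul c).aemeasurable,
          lintegral_const_mul _ hF, lintegral_const_mul _ hG, ← lintegral_prod _ hW.aemeasurable,
          ← lintegral_prod_symm _ hW.aemeasurable]
    _ = c ^ 2 * (∫⁻ q, W q ∂ν.prod ρ) ^ 2 := by ring

variable [SFinite μ]

theorem lintegral_prod_prod_pow_four_le_of_sq_le_lintegral_lines {U D : α × β × γ → ℝ≥0∞}
    (hU : Measurable U) (hD : Measurable D) {c : ℝ≥0∞}
    (h₁ : ∀ x q, U (x, q) ^ 2 ≤ c * ∫⁻ t, U (t, q) * D (t, q) ∂μ)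
    (h₂ : ∀ x y z, U (x, y, z) ^ 2 ≤ c * ∫⁻ s, U (x, s, z) * D (x, s, z) ∂ν)
    (h₃ : ∀ x y z, U (x, y, z) ^ 2 ≤ c * ∫⁻ r, U (x, y, r) * D (x, y, r) ∂ρ) :
    ∫⁻ p, U p ^ 4 ∂μ.prod (ν.prod ρ) ≤
      c ^ 3 * (∫⁻ p, U p ^ 2 ∂μ.prod (ν.prod ρ)) ^ (1 / 2 : ℝ) *
        (∫⁻ p, D p ^ 2 ∂μ.prod (ν.prod ρ)) ^ (3 / 2 : ℝ) := by
  set K := ∫⁻ p, U p * D p ∂μ.prod (ν.prod ρ)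
  set B := ∫⁻ p, D p ^ 2 ∂μ.prod (ν.prod ρ)
  have hplane_sq (x : α) : ∫⁻ q, U (x, q) ^ 2 ∂ν.prod ρ ≤ c * K :=
    calc ∫⁻ q, U (x, q) ^ 2 ∂ν.prod ρ
        ≤ ∫⁻ q, c * ∫⁻ t, U (t, q) * D (t, q) ∂μ ∂ν.prod ρ := lintegral_mono (h₁ x)
      _ = c * K := by
        rw [lintegral_const_mul _ (by fun_prop)]
        exact congrArg (c * ·) (lintegral_prod_symm _ (hU.mul hD).aemeasurable).symm
  have hplane (x : α) :
      ∫⁻ q, U (x, q) ^ 4 ∂ν.prod ρ ≤ c ^ 3 * K * ∫⁻ q, D (x, q) ^ 2 ∂ν.prod ρ :=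
    calc ∫⁻ q, U (x, q) ^ 4 ∂ν.prod ρ
        ≤ c ^ 2 * (∫⁻ q, U (x, q) * D (x, q) ∂ν.prod ρ) ^ 2 :=
          lintegral_prod_pow_four_le_of_sq_le_lintegral_lines (by fun_prop) (h₂ x) (h₃ x)
      _ ≤ c ^ 2 * ((∫⁻ q, U (x, q) ^ 2 ∂ν.prod ρ) * ∫⁻ q, D (x, q) ^ 2 ∂ν.prod ρ) := by
          gcongr
          exact sq_lintegral_mul_le_mul_lintegral_sq (by fun_prop) (by fun_prop)
      _ ≤ c ^ 2 * ((c * K) * ∫⁻ q, D (x, q) ^ 2 ∂ν.prod ρ) := by gcongr; exact hplane_sq x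
      _ = c ^ 3 * K * ∫⁻ q, D (x, q) ^ 2 ∂ν.prod ρ := by ring
  calc ∫⁻ p, U p ^ 4 ∂μ.prod (ν.prod ρ)
      = ∫⁻ x, ∫⁻ q, U (x, q) ^ 4 ∂ν.prod ρ ∂μ := lintegral_prod _ (by fun_prop)
    _ ≤ ∫⁻ x, c ^ 3 * K * ∫⁻ q, D (x, q) ^ 2 ∂ν.prod ρ ∂μ := lintegral_mono hplane
    _ = c ^ 3 * K * B := by
        rw [lintegral_const_mul _ (by fun_prop)]
        exact congrArg (c ^ 3 * K * ·) (lintegral_prod _ (hD.pow_const 2).aemeasurable).symm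
    _ ≤ c ^ 3 * ((∫⁻ p, U p ^ 2 ∂μ.prod (ν.prod ρ)) ^ (1 / 2 : ℝ) * B ^ (1 / 2 : ℝ)) * B := by
        gcongr
        exact lintegral_mul_le_L2_mul_L2 hU.aemeasurable hD.aemeasurable
    _ = c ^ 3 * (∫⁻ p, U p ^ 2 ∂μ.prod (ν.prod ρ)) ^ (1 / 2 : ℝ) * B ^ (3 / 2 : ℝ) := by
        rw [show (3 / 2 : ℝ) = 1 / 2 + 1 by norm_num,
          ENNReal.rpow_add_of_nonneg _ _ (by norm_num) zero_le_one, ENNReal.rpow_one]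
        ring

end ProductIntegrals

theorem HasCompactSupport.lintegral_enorm_pow_lt_top {X E : Type*} [TopologicalSpace X]
    [MeasurableSpace X] [OpensMeasurableSpace X] {μ : Measure X} [IsFiniteMeasureOnCompacts μ]
    [NormedAddCommGroup E] {f : X → E} (hsupp : HasCompactSupport f) (hf : Continuous f) {n : ℕ}
    (hn : n ≠ 0) : ∫⁻ x, ‖f x‖ₑ ^ n ∂μ < ∞ := by
  have hint : Integrable (fun x => ‖f x‖ ^ n) μ :=
    (hf.norm.pow n).integrable_of_hasCompactSupport
      (hsupp.norm.comp_left (g := (· ^ n)) (zero_pow hn))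
  simpa [HasFiniteIntegral, enorm_pow] using hint.hasFiniteIntegral

theorem integral_norm_pow_eq_toReal_lintegral {X E : Type*} [MeasurableSpace X] {μ : Measure X}
    [NormedAddCommGroup E] {f : X → E} (hf : AEStronglyMeasurable f μ) (n : ℕ) :
    ∫ x, ‖f x‖ ^ n ∂μ = (∫⁻ x, ‖f x‖ₑ ^ n ∂μ).toReal := by
  rw [← integral_toReal (hf.enorm.pow_const n) (ae_of_all _ fun x => by finiteness)]
  simp [ENNReal.toReal_pow]

namespace EuclideanSpace

def measurableEquivOfProdProd : ℝ × ℝ × ℝ ≃ᵐ EuclideanSpace ℝ (Fin 3) :=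
  ((MeasurableEquiv.refl ℝ).prodCongr MeasurableEquiv.finTwoArrow.symm).trans
    ((MeasurableEquiv.piFinSuccAbove (fun _ => ℝ) 0).symm.trans
      (MeasurableEquiv.toLp 2 (Fin 3 → ℝ)))

theorem measurableEquivOfProdProd_apply (x y z : ℝ) :
    measurableEquivOfProdProd (x, y, z) = x • single 0 1 + y • single 1 1 + z • single 2 1 := by
  ext i; fin_cases i <;> simp <;> rfl

theorem volume_preserving_measurableEquivOfProdProd :
    MeasurePreserving measurableEquivOfProdProd :=
  ((MeasurePreserving.id volume).prod (volume_preserving_finTwoArrow ℝ).symm).trans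
    ((volume_preserving_piFinSuccAbove (fun _ : Fin 3 => ℝ) 0).symm.trans
      (PiLp.volume_preserving_toLp (Fin 3)))

end EuclideanSpace

open EuclideanSpace in
theorem HasCompactSupport.lintegral_enorm_pow_four_le {u : EuclideanSpace ℝ (Fin 3) → ℝ}
    (hu : ContDiff ℝ 1 u) (hsupp : HasCompactSupport u) :
    ∫⁻ x, ‖u x‖ₑ ^ 4 ≤
      8 * (∫⁻ x, ‖u x‖ₑ ^ 2) ^ (1 / 2 : ℝ) * (∫⁻ x, ‖fderiv ℝ u x‖ₑ ^ 2) ^ (3 / 2 : ℝ) := by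
  set e := measurableEquivOfProdProd
  have hline (f : ℝ → ℝ × ℝ × ℝ) (i : Fin 3) (hf : ∀ t, e (f t) = e (f 0) + t • single i 1)
      (x : ℝ) : ‖u (e (f x))‖ₑ ^ 2 ≤ 2 * ∫⁻ t, ‖u (e (f t))‖ₑ * ‖fderiv ℝ u (e (f t))‖ₑ := by
    simpa only [← hf] using
      hsupp.enorm_sq_le_lintegral_enorm_mul_enorm_fderiv hu (e (f 0)) (v := single i 1) (by simp) x
  have key := lintegral_prod_prod_pow_four_le_of_sq_le_lintegral_lines (μ := volume)
    (ν := volume) (ρ := volume) (c := 2) (U := fun p => ‖u (e p)‖ₑ)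
    (D := fun p => ‖fderiv ℝ u (e p)‖ₑ)
    (hu.continuous.measurable.comp e.measurable).enorm
    ((hu.continuous_fderiv one_ne_zero).measurable.comp e.measurable).enorm
    (fun x q => hline (fun t => (t, q.1, q.2)) 0
      (fun t => by simp only [e, measurableEquivOfProdProd_apply]; module) x)
    (fun x y z => hline (fun t => (x, t, z)) 1
      (fun t => by simp only [e, measurableEquivOfProdProd_apply]; module) y)
    (fun x y z => hline (fun t => (x, y, t)) 2
      (fun t => by simp only [e, measurableEquivOfProdProd_apply]; module) z)
  simp_rw [← volume_preserving_measurableEquivOfProdProd.lintegral_comp_emb e.measurableEmbedding]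
  norm_num at key
  exact key

/-- The `L⁴` interpolation estimate: for `u` continuously differentiable with
compact support on ℝ³, `∫ u⁴ ≤ 4³ ‖u‖_{L²} ‖∇u‖_{L²}³`. -/
theorem fourth_power_integral_bound
    (u : EuclideanSpace ℝ (Fin 3) → ℝ) (hu : ContDiff ℝ 1 u)
    (hsupp : HasCompactSupport u) :
    ∫ x, (u x) ^ 4 ≤
      4 ^ 3 * (∫ x, (u x) ^ 2) ^ ((1 : ℝ) / 2) *
        (∫ x, ‖gradient u x‖ ^ 2) ^ ((3 : ℝ) / 2) := by
  have hcu := hu.continuous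
  have hcDu := hu.continuous_fderiv one_ne_zero
  have hu_fin := hsupp.lintegral_enorm_pow_lt_top (μ := volume) hcu two_ne_zero
  have hDu_fin := (hsupp.fderiv ℝ).lintegral_enorm_pow_lt_top (μ := volume) hcDu two_ne_zero
  have h4 : ∫ x, u x ^ 4 = (∫⁻ x, ‖u x‖ₑ ^ 4).toReal := by
    simpa [Even.pow_abs ⟨2, rfl⟩] using
      integral_norm_pow_eq_toReal_lintegral hcu.aestronglyMeasurable 4
  have h2 : ∫ x, u x ^ 2 = (∫⁻ x, ‖u x‖ₑ ^ 2).toReal := by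
    simpa using integral_norm_pow_eq_toReal_lintegral hcu.aestronglyMeasurable 2
  have hgrad : ∫ x, ‖gradient u x‖ ^ 2 = (∫⁻ x, ‖fderiv ℝ u x‖ₑ ^ 2).toReal := by
    simp_rw [gradient, LinearIsometryEquiv.norm_map]
    exact integral_norm_pow_eq_toReal_lintegral hcDu.aestronglyMeasurable 2
  rw [h4, h2, hgrad]
  calc _ ≤ (8 * (∫⁻ x, ‖u x‖ₑ ^ 2) ^ (1 / 2 : ℝ) *
          (∫⁻ x, ‖fderiv ℝ u x‖ₑ ^ 2) ^ (3 / 2 : ℝ)).toReal :=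
        ENNReal.toReal_mono (by finiteness) (hsupp.lintegral_enorm_pow_four_le hu)
    _ = 8 * (∫⁻ x, ‖u x‖ₑ ^ 2).toReal ^ (1 / 2 : ℝ) *
          (∫⁻ x, ‖fderiv ℝ u x‖ₑ ^ 2).toReal ^ (3 / 2 : ℝ) := by
        simp [ENNReal.toReal_rpow]
    _ ≤ _ := by gcongr; norm_num
end

section
/- Let u be an admissible function. Then 2∫_Ω (1+x)·u·(u_{xxx} + u_{xyy} + u_{xzz}) dΩ = 3‖u_x‖² + ‖u_y‖² + ‖u_z‖² + ∫_{ℝ²} (u_x(0,y,z))² dy dz. -/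
open MeasureTheory

/-- Partial derivative in the first variable (`x`). -/
noncomputable def px (u : ℝ → ℝ → ℝ → ℝ) : ℝ → ℝ → ℝ → ℝ :=
  fun x y z => deriv (fun x' => u x' y z) x

/-- Partial derivative in the second variable (`y`). -/
noncomputable def py (u : ℝ → ℝ → ℝ → ℝ) : ℝ → ℝ → ℝ → ℝ :=
  fun x y z => deriv (fun y' => u x y' z) y

/-- Partial derivative in the third variable (`z`). -/
noncomputable def pz (u : ℝ → ℝ → ℝ → ℝ) : ℝ → ℝ → ℝ → ℝ :=
  fun x y z => deriv (fun z' => u x y z') z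

/-- The domain `Ω = (0,L) × ℝ²`. -/
def Omega (L : ℝ) : Set (ℝ × ℝ × ℝ) := Set.Ioo 0 L ×ˢ (Set.univ : Set (ℝ × ℝ))

/-- `u` is admissible: it is `C^∞`, vanishes for `y² + z² ≥ R²` for some `R > 0`, and
satisfies the boundary conditions `u(0,y,z) = u(L,y,z) = u_x(L,y,z) = 0`. -/
def Admissible (L : ℝ) (u : ℝ → ℝ → ℝ → ℝ) : Prop :=
  ContDiff ℝ (⊤ : ℕ∞) (fun p : ℝ × ℝ × ℝ => u p.1 p.2.1 p.2.2) ∧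
  (∃ R > 0, ∀ x y z : ℝ, R ^ 2 ≤ y ^ 2 + z ^ 2 → u x y z = 0) ∧
  (∀ y z : ℝ, u 0 y z = 0) ∧ (∀ y z : ℝ, u L y z = 0) ∧ (∀ y z : ℝ, px u L y z = 0)

namespace EstII

variable {F : Type*} [NormedAddCommGroup F] [NormedSpace ℝ F]

lemma hasDerivAt_slice_x {U : ℝ × ℝ × ℝ → F} (hU : Differentiable ℝ U) (x y z : ℝ) :
    HasDerivAt (fun x' => U (x', y, z)) (fderiv ℝ U (x, y, z) (1, 0, 0)) x := by
  have hc : HasDerivAt (fun x' : ℝ => ((x', y, z) : ℝ × ℝ × ℝ)) (1, 0, 0) x :=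
    (hasDerivAt_id x).prodMk (hasDerivAt_const x (y, z))
  exact (hU (x, y, z)).hasFDerivAt.comp_hasDerivAt x hc

lemma hasDerivAt_slice_y {U : ℝ × ℝ × ℝ → F} (hU : Differentiable ℝ U) (x y z : ℝ) :
    HasDerivAt (fun y' => U (x, y', z)) (fderiv ℝ U (x, y, z) (0, 1, 0)) y := by
  have hc : HasDerivAt (fun y' : ℝ => ((x, y', z) : ℝ × ℝ × ℝ)) (0, 1, 0) y :=
    (hasDerivAt_const y x).prodMk ((hasDerivAt_id y).prodMk (hasDerivAt_const y z))
  exact (hU (x, y, z)).hasFDerivAt.comp_hasDerivAt y hc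

lemma hasDerivAt_slice_z {U : ℝ × ℝ × ℝ → F} (hU : Differentiable ℝ U) (x y z : ℝ) :
    HasDerivAt (fun z' => U (x, y, z')) (fderiv ℝ U (x, y, z) (0, 0, 1)) z := by
  have hc : HasDerivAt (fun z' : ℝ => ((x, y, z') : ℝ × ℝ × ℝ)) (0, 0, 1) z :=
    (hasDerivAt_const z x).prodMk ((hasDerivAt_const z y).prodMk (hasDerivAt_id z))
  exact (hU (x, y, z)).hasFDerivAt.comp_hasDerivAt z hc

variable {u v w a b : ℝ → ℝ → ℝ → ℝ}

lemma px_eq (hU : Differentiable ℝ (fun p : ℝ × ℝ × ℝ => u p.1 p.2.1 p.2.2)) (x y z : ℝ) :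
    px u x y z = fderiv ℝ (fun p : ℝ × ℝ × ℝ => u p.1 p.2.1 p.2.2) (x, y, z) (1, 0, 0) :=
  (hasDerivAt_slice_x hU x y z).deriv

lemma py_eq (hU : Differentiable ℝ (fun p : ℝ × ℝ × ℝ => u p.1 p.2.1 p.2.2)) (x y z : ℝ) :
    py u x y z = fderiv ℝ (fun p : ℝ × ℝ × ℝ => u p.1 p.2.1 p.2.2) (x, y, z) (0, 1, 0) :=
  (hasDerivAt_slice_y hU x y z).deriv

lemma pz_eq (hU : Differentiable ℝ (fun p : ℝ × ℝ × ℝ => u p.1 p.2.1 p.2.2)) (x y z : ℝ) :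
    pz u x y z = fderiv ℝ (fun p : ℝ × ℝ × ℝ => u p.1 p.2.1 p.2.2) (x, y, z) (0, 0, 1) :=
  (hasDerivAt_slice_z hU x y z).deriv

lemma contDiff_px (hU : ContDiff ℝ (⊤ : ℕ∞) (fun p : ℝ × ℝ × ℝ => u p.1 p.2.1 p.2.2)) :
    ContDiff ℝ (⊤ : ℕ∞) (fun p : ℝ × ℝ × ℝ => px u p.1 p.2.1 p.2.2) := by
  have : (fun p : ℝ × ℝ × ℝ => px u p.1 p.2.1 p.2.2) =
      fun p => fderiv ℝ (fun p : ℝ × ℝ × ℝ => u p.1 p.2.1 p.2.2) p (1, 0, 0) := by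
    funext p
    rw [px_eq (hU.differentiable (by simp)) p.1 p.2.1 p.2.2]
  rw [this]
  exact (hU.fderiv_right (by simp)).clm_apply contDiff_const

lemma contDiff_py (hU : ContDiff ℝ (⊤ : ℕ∞) (fun p : ℝ × ℝ × ℝ => u p.1 p.2.1 p.2.2)) :
    ContDiff ℝ (⊤ : ℕ∞) (fun p : ℝ × ℝ × ℝ => py u p.1 p.2.1 p.2.2) := by
  have : (fun p : ℝ × ℝ × ℝ => py u p.1 p.2.1 p.2.2) =
      fun p => fderiv ℝ (fun p : ℝ × ℝ × ℝ => u p.1 p.2.1 p.2.2) p (0, 1, 0) := by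
    funext p
    rw [py_eq (hU.differentiable (by simp)) p.1 p.2.1 p.2.2]
  rw [this]
  exact (hU.fderiv_right (by simp)).clm_apply contDiff_const

lemma contDiff_pz (hU : ContDiff ℝ (⊤ : ℕ∞) (fun p : ℝ × ℝ × ℝ => u p.1 p.2.1 p.2.2)) :
    ContDiff ℝ (⊤ : ℕ∞) (fun p : ℝ × ℝ × ℝ => pz u p.1 p.2.1 p.2.2) := by
  have : (fun p : ℝ × ℝ × ℝ => pz u p.1 p.2.1 p.2.2) =
      fun p => fderiv ℝ (fun p : ℝ × ℝ × ℝ => u p.1 p.2.1 p.2.2) p (0, 0, 1) := by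
    funext p
    rw [pz_eq (hU.differentiable (by simp)) p.1 p.2.1 p.2.2]
  rw [this]
  exact (hU.fderiv_right (by simp)).clm_apply contDiff_const

lemma symm_xy (hU : ContDiff ℝ (⊤ : ℕ∞) (fun p : ℝ × ℝ × ℝ => u p.1 p.2.1 p.2.2)) (x y z : ℝ) :
    px (py u) x y z = py (px u) x y z := by
  set U : ℝ × ℝ × ℝ → ℝ := fun p => u p.1 p.2.1 p.2.2 with hUdef
  have hdiff : Differentiable ℝ U := hU.differentiable (by simp)
  have hdf : ContDiff ℝ (⊤ : ℕ∞) (fderiv ℝ U) := hU.fderiv_right (by simp)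
  have hdiff2 : Differentiable ℝ (fderiv ℝ U) := hdf.differentiable (by simp)
  have hsym : ∀ v w, fderiv ℝ (fderiv ℝ U) (x, y, z) v w =
      fderiv ℝ (fderiv ℝ U) (x, y, z) w v := by
    intro v w
    exact second_derivative_symmetric (fun p => (hdiff p).hasFDerivAt)
      ((hdiff2 (x, y, z)).hasFDerivAt) v w
  have h1 : px (py u) x y z = fderiv ℝ (fderiv ℝ U) (x, y, z) (1, 0, 0) (0, 1, 0) := by
    have heq : (fun x' => py u x' y z) = fun x' => fderiv ℝ U (x', y, z) (0, 1, 0) := by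
      funext x'
      exact py_eq hdiff x' y z
    have hd : HasDerivAt (fun x' => fderiv ℝ U (x', y, z) (0, 1, 0))
        (fderiv ℝ (fderiv ℝ U) (x, y, z) (1, 0, 0) (0, 1, 0)) x := by
      have h := hasDerivAt_slice_x hdiff2 x y z
      exact h.clm_apply (hasDerivAt_const x _) |>.congr_deriv (by simp)
    show deriv (fun x' => py u x' y z) x = _
    rw [heq]
    exact hd.deriv
  have h2 : py (px u) x y z = fderiv ℝ (fderiv ℝ U) (x, y, z) (0, 1, 0) (1, 0, 0) := by
    have heq : (fun y' => px u x y' z) = fun y' => fderiv ℝ U (x, y', z) (1, 0, 0) := by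
      funext y'
      exact px_eq hdiff x y' z
    have hd : HasDerivAt (fun y' => fderiv ℝ U (x, y', z) (1, 0, 0))
        (fderiv ℝ (fderiv ℝ U) (x, y, z) (0, 1, 0) (1, 0, 0)) y := by
      have h := hasDerivAt_slice_y hdiff2 x y z
      exact h.clm_apply (hasDerivAt_const y _) |>.congr_deriv (by simp)
    show deriv (fun y' => px u x y' z) y = _
    rw [heq]
    exact hd.deriv
  rw [h1, h2, hsym]

lemma symm_xz (hU : ContDiff ℝ (⊤ : ℕ∞) (fun p : ℝ × ℝ × ℝ => u p.1 p.2.1 p.2.2)) (x y z : ℝ) :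
    px (pz u) x y z = pz (px u) x y z := by
  set U : ℝ × ℝ × ℝ → ℝ := fun p => u p.1 p.2.1 p.2.2 with hUdef
  have hdiff : Differentiable ℝ U := hU.differentiable (by simp)
  have hdf : ContDiff ℝ (⊤ : ℕ∞) (fderiv ℝ U) := hU.fderiv_right (by simp)
  have hdiff2 : Differentiable ℝ (fderiv ℝ U) := hdf.differentiable (by simp)
  have hsym : ∀ v w, fderiv ℝ (fderiv ℝ U) (x, y, z) v w =
      fderiv ℝ (fderiv ℝ U) (x, y, z) w v := by
    intro v w
    exact second_derivative_symmetric (fun p => (hdiff p).hasFDerivAt)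
      ((hdiff2 (x, y, z)).hasFDerivAt) v w
  have h1 : px (pz u) x y z = fderiv ℝ (fderiv ℝ U) (x, y, z) (1, 0, 0) (0, 0, 1) := by
    have heq : (fun x' => pz u x' y z) = fun x' => fderiv ℝ U (x', y, z) (0, 0, 1) := by
      funext x'
      exact pz_eq hdiff x' y z
    have hd : HasDerivAt (fun x' => fderiv ℝ U (x', y, z) (0, 0, 1))
        (fderiv ℝ (fderiv ℝ U) (x, y, z) (1, 0, 0) (0, 0, 1)) x := by
      have h := hasDerivAt_slice_x hdiff2 x y z
      exact h.clm_apply (hasDerivAt_const x _) |>.congr_deriv (by simp)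
    show deriv (fun x' => pz u x' y z) x = _
    rw [heq]
    exact hd.deriv
  have h2 : pz (px u) x y z = fderiv ℝ (fderiv ℝ U) (x, y, z) (0, 0, 1) (1, 0, 0) := by
    have heq : (fun z' => px u x y z') = fun z' => fderiv ℝ U (x, y, z') (1, 0, 0) := by
      funext z'
      exact px_eq hdiff x y z'
    have hd : HasDerivAt (fun z' => fderiv ℝ U (x, y, z') (1, 0, 0))
        (fderiv ℝ (fderiv ℝ U) (x, y, z) (0, 0, 1) (1, 0, 0)) z := by
      have h := hasDerivAt_slice_z hdiff2 x y z
      exact h.clm_apply (hasDerivAt_const z _) |>.congr_deriv (by simp)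
    show deriv (fun z' => px u x y z') z = _
    rw [heq]
    exact hd.deriv
  rw [h1, h2, hsym]

structure Nice (u : ℝ → ℝ → ℝ → ℝ) : Prop where
  smooth : ContDiff ℝ (⊤ : ℕ∞) (fun p : ℝ × ℝ × ℝ => u p.1 p.2.1 p.2.2)
  vanish : ∃ R : ℝ, ∀ x y z : ℝ, R ≤ y ^ 2 + z ^ 2 → u x y z = 0

lemma Nice.px (h : Nice u) : Nice (px u) := by
  obtain ⟨R, hR⟩ := h.vanish
  refine ⟨contDiff_px h.smooth, R, fun x y z hyz => ?_⟩
  have : (fun x' => u x' y z) = fun _ => (0 : ℝ) := funext fun x' => hR x' y z hyz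
  show deriv (fun x' => u x' y z) x = 0
  rw [this, deriv_const']

lemma Nice.py (h : Nice u) : Nice (py u) := by
  obtain ⟨R, hR⟩ := h.vanish
  refine ⟨contDiff_py h.smooth, R + 1, fun x y z hyz => ?_⟩
  have hopen : IsOpen {y' : ℝ | R < y' ^ 2 + z ^ 2} :=
    isOpen_lt continuous_const (by fun_prop)
  have hy : y ∈ {y' : ℝ | R < y' ^ 2 + z ^ 2} := by
    simp only [Set.mem_setOf_eq]; nlinarith [sq_nonneg y, sq_nonneg z]
  have hev : (fun y' => u x y' z) =ᶠ[nhds y] fun _ => (0 : ℝ) := by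
    filter_upwards [hopen.mem_nhds hy] with y' hy'
    exact hR x y' z (le_of_lt hy')
  show deriv (fun y' => u x y' z) y = 0
  rw [hev.deriv_eq, deriv_const']

lemma Nice.pz (h : Nice u) : Nice (pz u) := by
  obtain ⟨R, hR⟩ := h.vanish
  refine ⟨contDiff_pz h.smooth, R + 1, fun x y z hyz => ?_⟩
  have hopen : IsOpen {z' : ℝ | R < y ^ 2 + z' ^ 2} :=
    isOpen_lt continuous_const (by fun_prop)
  have hz : z ∈ {z' : ℝ | R < y ^ 2 + z' ^ 2} := by
    simp only [Set.mem_setOf_eq]; nlinarith [sq_nonneg y, sq_nonneg z]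
  have hev : (fun z' => u x y z') =ᶠ[nhds z] fun _ => (0 : ℝ) := by
    filter_upwards [hopen.mem_nhds hz] with z' hz'
    exact hR x y z' (le_of_lt hz')
  show deriv (fun z' => u x y z') z = 0
  rw [hev.deriv_eq, deriv_const']

lemma Nice.mul (h : Nice u) (hv : Nice v) :
    Nice (fun x y z => u x y z * v x y z) := by
  obtain ⟨R, hR⟩ := h.vanish
  exact ⟨h.smooth.mul hv.smooth, R, fun x y z hyz => by rw [hR x y z hyz, zero_mul]⟩

lemma Nice.add (h : Nice u) (hv : Nice v) :
    Nice (fun x y z => u x y z + v x y z) := by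
  obtain ⟨R, hR⟩ := h.vanish
  obtain ⟨S, hS⟩ := hv.vanish
  refine ⟨h.smooth.add hv.smooth, max R S, fun x y z hyz => ?_⟩
  rw [hR x y z (le_trans (le_max_left _ _) hyz), hS x y z (le_trans (le_max_right _ _) hyz),
    add_zero]

lemma Nice.xmul (h : Nice u) : Nice (fun x y z => (1 + x) * u x y z) := by
  obtain ⟨R, hR⟩ := h.vanish
  refine ⟨ContDiff.mul ?_ h.smooth, R, fun x y z hyz => by rw [hR x y z hyz, mul_zero]⟩
  exact (contDiff_const.add (contDiff_fst (𝕜 := ℝ)))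

lemma Nice.cmul (h : Nice u) (c : ℝ) : Nice (fun x y z => c * u x y z) :=
  ⟨contDiff_const.mul h.smooth, h.vanish.imp fun R hR x y z hyz => by
    rw [hR x y z hyz, mul_zero]⟩

lemma Nice.sq (h : Nice u) : Nice (fun x y z => (u x y z) ^ 2) := by
  have := h.mul h
  convert this using 1
  funext x y z
  ring

lemma nice_of (h : Nice v) (hw : ∀ x y z, w x y z = v x y z) : Nice w := by
  have : w = v := funext fun x => funext fun y => funext fun z => hw x y z
  rw [this]
  exact h

lemma py_zero_of {x : ℝ} (hx : ∀ y z, v x y z = 0) : ∀ y z, py v x y z = 0 := by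
  intro y z
  have : (fun y' => v x y' z) = fun _ => (0 : ℝ) := funext fun y' => hx y' z
  show deriv (fun y' => v x y' z) y = 0
  rw [this, deriv_const']

lemma pz_zero_of {x : ℝ} (hx : ∀ y z, v x y z = 0) : ∀ y z, pz v x y z = 0 := by
  intro y z
  have : (fun z' => v x y z') = fun _ => (0 : ℝ) := funext fun z' => hx y z'
  show deriv (fun z' => v x y z') z = 0
  rw [this, deriv_const']

lemma Nice.exists_S (h : Nice u) :
    ∃ S : ℝ, 0 ≤ S ∧ ∀ x : ℝ, ∀ q : ℝ × ℝ, S < ‖q‖ → u x q.1 q.2 = 0 := by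
  obtain ⟨R, hR⟩ := h.vanish
  refine ⟨Real.sqrt (max R 0), Real.sqrt_nonneg _, fun x q hq => ?_⟩
  apply hR
  have h1 : max R 0 ≤ ‖q‖ ^ 2 := by
    rw [← Real.sq_sqrt (le_max_right R 0)]
    have h0 : (0:ℝ) ≤ Real.sqrt (max R 0) := Real.sqrt_nonneg _
    nlinarith
  have h2 : ‖q‖ ^ 2 ≤ q.1 ^ 2 + q.2 ^ 2 := by
    rw [Prod.norm_def]
    rcases max_cases ‖q.1‖ ‖q.2‖ with ⟨he, _⟩ | ⟨he, _⟩ <;> rw [he] <;>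
      simp only [Real.norm_eq_abs, sq_abs] <;> nlinarith [sq_nonneg q.1, sq_nonneg q.2]
  calc R ≤ max R 0 := le_max_left _ _
    _ ≤ ‖q‖ ^ 2 := h1
    _ ≤ _ := h2

lemma Nice.integrableOn (h : Nice u) (L : ℝ) :
    IntegrableOn (fun p : ℝ × ℝ × ℝ => u p.1 p.2.1 p.2.2) (Omega L) volume := by
  obtain ⟨S, hS0, hS⟩ := h.exists_S
  set K : Set (ℝ × ℝ × ℝ) := Set.Icc 0 L ×ˢ Metric.closedBall (0 : ℝ × ℝ) S with hK
  have hKc : IsCompact K := isCompact_Icc.prod (isCompact_closedBall _ _)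
  have hcont : Continuous (fun p : ℝ × ℝ × ℝ => u p.1 p.2.1 p.2.2) := h.smooth.continuous
  have hIK : IntegrableOn (fun p : ℝ × ℝ × ℝ => u p.1 p.2.1 p.2.2) K volume :=
    hcont.continuousOn.integrableOn_compact hKc
  have hmeas : MeasurableSet (Omega L) := measurableSet_Ioo.prod MeasurableSet.univ
  rw [← integrable_indicator_iff hmeas]
  have : (Omega L).indicator (fun p : ℝ × ℝ × ℝ => u p.1 p.2.1 p.2.2) =
      (Omega L ∩ K).indicator (fun p : ℝ × ℝ × ℝ => u p.1 p.2.1 p.2.2) := by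
    funext p
    by_cases hp : p ∈ Omega L
    · by_cases hpK : p ∈ K
      · have hm : p ∈ Omega L ∩ K := ⟨hp, hpK⟩
        rw [Set.indicator_of_mem hp, Set.indicator_of_mem hm]
      · rw [Set.indicator_of_mem hp, Set.indicator_of_notMem (fun hc => hpK hc.2)]
        have hq : S < ‖p.2‖ := by
          by_contra hle
          push_neg at hle
          exact hpK ⟨⟨le_of_lt hp.1.1, le_of_lt hp.1.2⟩, by simpa [Metric.mem_closedBall] using hle⟩
        exact (hS p.1 p.2 hq).symm ▸ rfl
    · rw [Set.indicator_of_notMem hp, Set.indicator_of_notMem (fun hc => hp hc.1)]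
  rw [this, integrable_indicator_iff (hmeas.inter hKc.measurableSet)]
  exact hIK.mono_set Set.inter_subset_right

lemma Nice.integrable_fiber (h : Nice u) (x : ℝ) :
    Integrable (fun q : ℝ × ℝ => u x q.1 q.2) volume := by
  obtain ⟨S, hS0, hS⟩ := h.exists_S
  have hcont : Continuous (fun q : ℝ × ℝ => u x q.1 q.2) := by
    have := h.smooth.continuous
    fun_prop
  apply hcont.integrable_of_hasCompactSupport
  apply HasCompactSupport.intro (isCompact_closedBall (0 : ℝ × ℝ) S)
  intro q hq
  simp only [Metric.mem_closedBall, dist_zero_right, not_le] at hq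
  exact hS x q hq

lemma Nice.hasCompactSupport_y (h : Nice u) (x z : ℝ) :
    HasCompactSupport (fun y => u x y z) := by
  obtain ⟨S, hS0, hS⟩ := h.exists_S
  apply HasCompactSupport.intro (isCompact_Icc (a := -S) (b := S))
  intro y hy
  simp only [Set.mem_Icc, not_and_or, not_le] at hy
  apply hS x (y, z)
  rw [Prod.norm_def]
  simp only [Real.norm_eq_abs]
  rcases hy with hy | hy
  · exact lt_of_lt_of_le (by cases abs_cases y <;> linarith) (le_max_left _ _)
  · exact lt_of_lt_of_le (by cases abs_cases y <;> linarith) (le_max_left _ _)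

lemma Nice.hasCompactSupport_z (h : Nice u) (x y : ℝ) :
    HasCompactSupport (fun z => u x y z) := by
  obtain ⟨S, hS0, hS⟩ := h.exists_S
  apply HasCompactSupport.intro (isCompact_Icc (a := -S) (b := S))
  intro z hz
  simp only [Set.mem_Icc, not_and_or, not_le] at hz
  apply hS x (y, z)
  rw [Prod.norm_def]
  simp only [Real.norm_eq_abs]
  rcases hz with hz | hz
  · exact lt_of_lt_of_le (by cases abs_cases z <;> linarith) (le_max_right _ _)
  · exact lt_of_lt_of_le (by cases abs_cases z <;> linarith) (le_max_right _ _)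

lemma restrict_omega (L : ℝ) :
    (volume : Measure (ℝ × ℝ × ℝ)).restrict (Omega L) =
      ((volume : Measure ℝ).restrict (Set.Ioo 0 L)).prod (volume : Measure (ℝ × ℝ)) := by
  rw [Omega, MeasureTheory.Measure.volume_eq_prod, ← Measure.prod_restrict,
    Measure.restrict_univ]

lemma fub_qx (h : Nice u) (L : ℝ) :
    ∫ p in Omega L, u p.1 p.2.1 p.2.2 =
      ∫ q : ℝ × ℝ, ∫ x in Set.Ioo 0 L, u x q.1 q.2 := by
  have hi := h.integrableOn L
  rw [IntegrableOn, restrict_omega] at hi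
  rw [show (∫ p in Omega L, u p.1 p.2.1 p.2.2) =
      ∫ p : ℝ × ℝ × ℝ, u p.1 p.2.1 p.2.2
        ∂((volume : Measure ℝ).restrict (Set.Ioo 0 L)).prod (volume : Measure (ℝ × ℝ))
    from by rw [← restrict_omega]]
  exact integral_prod_symm _ hi

lemma fub_xq (h : Nice u) (L : ℝ) :
    ∫ p in Omega L, u p.1 p.2.1 p.2.2 =
      ∫ x in Set.Ioo 0 L, ∫ q : ℝ × ℝ, u x q.1 q.2 := by
  have hi := h.integrableOn L
  rw [IntegrableOn, restrict_omega] at hi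
  rw [show (∫ p in Omega L, u p.1 p.2.1 p.2.2) =
      ∫ p : ℝ × ℝ × ℝ, u p.1 p.2.1 p.2.2
        ∂((volume : Measure ℝ).restrict (Set.Ioo 0 L)).prod (volume : Measure (ℝ × ℝ))
    from by rw [← restrict_omega]]
  exact integral_prod _ hi

lemma Nice.integrable_marginal (h : Nice u) (L : ℝ) :
    Integrable (fun q : ℝ × ℝ => ∫ x in Set.Ioo 0 L, u x q.1 q.2) volume := by
  have hi := h.integrableOn L
  rw [IntegrableOn, restrict_omega] at hi
  exact hi.integral_prod_right

lemma fiber_zy (h : Nice u) (x : ℝ) :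
    ∫ q : ℝ × ℝ, u x q.1 q.2 = ∫ z : ℝ, ∫ y : ℝ, u x y z := by
  have hi := h.integrable_fiber x
  rw [MeasureTheory.Measure.volume_eq_prod] at hi
  rw [show (∫ q : ℝ × ℝ, u x q.1 q.2) =
      ∫ q : ℝ × ℝ, u x q.1 q.2 ∂((volume : Measure ℝ).prod (volume : Measure ℝ))
    from by rw [← MeasureTheory.Measure.volume_eq_prod]]
  exact integral_prod_symm _ hi

lemma fiber_yz (h : Nice u) (x : ℝ) :
    ∫ q : ℝ × ℝ, u x q.1 q.2 = ∫ y : ℝ, ∫ z : ℝ, u x y z := by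
  have hi := h.integrable_fiber x
  rw [MeasureTheory.Measure.volume_eq_prod] at hi
  rw [show (∫ q : ℝ × ℝ, u x q.1 q.2) =
      ∫ q : ℝ × ℝ, u x q.1 q.2 ∂((volume : Measure ℝ).prod (volume : Measure ℝ))
    from by rw [← MeasureTheory.Measure.volume_eq_prod]]
  exact integral_prod _ hi

lemma Nice.contDiff_slice_x (h : Nice u) (y z : ℝ) : ContDiff ℝ (⊤ : ℕ∞) fun x => u x y z :=
  h.smooth.comp (by fun_prop : ContDiff ℝ (⊤ : ℕ∞) fun x : ℝ => ((x, y, z) : ℝ × ℝ × ℝ))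

lemma Nice.contDiff_slice_y (h : Nice u) (x z : ℝ) : ContDiff ℝ (⊤ : ℕ∞) fun y => u x y z :=
  h.smooth.comp (by fun_prop : ContDiff ℝ (⊤ : ℕ∞) fun y : ℝ => ((x, y, z) : ℝ × ℝ × ℝ))

lemma Nice.contDiff_slice_z (h : Nice u) (x y : ℝ) : ContDiff ℝ (⊤ : ℕ∞) fun z => u x y z :=
  h.smooth.comp (by fun_prop : ContDiff ℝ (⊤ : ℕ∞) fun z : ℝ => ((x, y, z) : ℝ × ℝ × ℝ))

lemma Nice.hd_x (h : Nice u) (x y z : ℝ) :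
    HasDerivAt (fun t => u t y z) (_root_.px u x y z) x :=
  (((h.contDiff_slice_x y z).differentiable (by simp)) x).hasDerivAt

lemma Nice.hd_y (h : Nice u) (x y z : ℝ) :
    HasDerivAt (fun t => u x t z) (_root_.py u x y z) y :=
  (((h.contDiff_slice_y x z).differentiable (by simp)) y).hasDerivAt

lemma Nice.hd_z (h : Nice u) (x y z : ℝ) :
    HasDerivAt (fun t => u x y t) (_root_.pz u x y z) z :=
  (((h.contDiff_slice_z x y).differentiable (by simp)) z).hasDerivAt

lemma Nice.cont_x (h : Nice u) (y z : ℝ) : Continuous fun x => u x y z :=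
  (h.contDiff_slice_x y z).continuous

lemma Nice.integrable_y (h : Nice u) (x z : ℝ) :
    Integrable (fun y => u x y z) volume :=
  (h.contDiff_slice_y x z).continuous.integrable_of_hasCompactSupport
    (h.hasCompactSupport_y x z)

lemma Nice.integrable_z (h : Nice u) (x y : ℝ) :
    Integrable (fun z => u x y z) volume :=
  (h.contDiff_slice_z x y).continuous.integrable_of_hasCompactSupport
    (h.hasCompactSupport_z x y)

lemma integral_deriv_eq_zero' {f : ℝ → ℝ} (hf : ContDiff ℝ 1 f) (hc : HasCompactSupport f) :
    ∫ x : ℝ, deriv f x = 0 := by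
  have hder : Continuous (deriv f) := hf.continuous_deriv le_rfl
  have hint : Integrable (deriv f) volume :=
    hder.integrable_of_hasCompactSupport hc.deriv
  have hsum := intervalIntegral.integral_Iic_add_Ioi (b := 0) (f := deriv f) (μ := volume)
    hint.integrableOn hint.integrableOn
  rw [HasCompactSupport.integral_Iic_deriv_eq hf hc 0,
    HasCompactSupport.integral_Ioi_deriv_eq hf hc 0] at hsum
  rw [← hsum]; ring

lemma integral_py_eq_zero (h : Nice w) (x z : ℝ) : ∫ y : ℝ, py w x y z = 0 :=
  integral_deriv_eq_zero' ((h.contDiff_slice_y x z).of_le (by simp))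
    (h.hasCompactSupport_y x z)

lemma integral_pz_eq_zero (h : Nice w) (x y : ℝ) : ∫ z : ℝ, pz w x y z = 0 :=
  integral_deriv_eq_zero' ((h.contDiff_slice_z x y).of_le (by simp))
    (h.hasCompactSupport_z x y)

lemma py_mul (ha : Nice a) (hb : Nice b) (x y z : ℝ) :
    py (fun x y z => a x y z * b x y z) x y z =
      py a x y z * b x y z + a x y z * py b x y z :=
  ((ha.hd_y x y z).mul (hb.hd_y x y z)).deriv

lemma pz_mul (ha : Nice a) (hb : Nice b) (x y z : ℝ) :
    pz (fun x y z => a x y z * b x y z) x y z =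
      pz a x y z * b x y z + a x y z * pz b x y z :=
  ((ha.hd_z x y z).mul (hb.hd_z x y z)).deriv

lemma ibp_y (ha : Nice a) (hb : Nice b) (x z : ℝ) :
    ∫ y : ℝ, a x y z * py b x y z = - ∫ y : ℝ, py a x y z * b x y z := by
  have hz := integral_py_eq_zero (ha.mul hb) x z
  have hcong : (fun y => py (fun x y z => a x y z * b x y z) x y z) =
      fun y => py a x y z * b x y z + a x y z * py b x y z := by
    funext y; exact py_mul ha hb x y z
  rw [hcong] at hz
  have h1 : Integrable (fun y => py a x y z * b x y z) volume :=
    ((ha.py).mul hb).integrable_y x z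
  have h2 : Integrable (fun y => a x y z * py b x y z) volume :=
    (ha.mul hb.py).integrable_y x z
  rw [integral_add h1 h2] at hz
  linarith

lemma ibp_z (ha : Nice a) (hb : Nice b) (x y : ℝ) :
    ∫ z : ℝ, a x y z * pz b x y z = - ∫ z : ℝ, pz a x y z * b x y z := by
  have hz := integral_pz_eq_zero (ha.mul hb) x y
  have hcong : (fun z => pz (fun x y z => a x y z * b x y z) x y z) =
      fun z => pz a x y z * b x y z + a x y z * pz b x y z := by
    funext z; exact pz_mul ha hb x y z
  rw [hcong] at hz
  have h1 : Integrable (fun z => pz a x y z * b x y z) volume :=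
    ((ha.pz).mul hb).integrable_z x y
  have h2 : Integrable (fun z => a x y z * pz b x y z) volume :=
    (ha.mul hb.pz).integrable_z x y
  rw [integral_add h1 h2] at hz
  linarith

lemma hd_two_one_plus (x : ℝ) : HasDerivAt (fun t : ℝ => 2 * (1 + t)) 2 x := by
  simpa using ((hasDerivAt_id x).const_add 1).const_mul 2

lemma hd_one_plus (x : ℝ) : HasDerivAt (fun t : ℝ => 1 + t) 1 x :=
  by simpa using (hasDerivAt_id x).const_add 1

lemma ftcA {L y z : ℝ} (hL : 0 ≤ L) (h : Nice u)
    (h0 : u 0 y z = 0) (hLv : u L y z = 0) (hLx : px u L y z = 0) :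
    ∫ x in Set.Ioo 0 L, 2 * (1 + x) * u x y z * px (px (px u)) x y z
      = 3 * (∫ x in Set.Ioo 0 L, (px u x y z) ^ 2) + (px u 0 y z) ^ 2 := by
  set Φ : ℝ → ℝ := fun x => 2 * (1 + x) * u x y z * px (px u) x y z
    - (1 + x) * (px u x y z) ^ 2 - 2 * (u x y z * px u x y z) with hΦdef
  have hΦ : ∀ x : ℝ, HasDerivAt Φ
      (2 * (1 + x) * u x y z * px (px (px u)) x y z - 3 * (px u x y z) ^ 2) x := by
    intro x
    have h1 := h.hd_x x y z
    have h2 := (h.px).hd_x x y z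
    have h3 := (h.px.px).hd_x x y z
    have hA := ((hd_two_one_plus x).mul h1).mul h3
    have hB := (hd_one_plus x).mul (h2.pow 2)
    have hC := (h1.mul h2).const_mul 2
    have := (hA.sub hB).sub hC
    refine this.congr_deriv ?_
    push_cast
    simp only [Pi.mul_apply, Pi.pow_apply]
    ring
  have hcont : Continuous (fun x =>
      2 * (1 + x) * u x y z * px (px (px u)) x y z - 3 * (px u x y z) ^ 2) := by
    have c1 := h.cont_x y z
    have c2 := (h.px).cont_x y z
    have c3 := (h.px.px.px).cont_x y z
    fun_prop
  have hFTC := intervalIntegral.integral_eq_sub_of_hasDerivAt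
    (f := Φ) (a := 0) (b := L) (fun x _ => hΦ x) (hcont.intervalIntegrable 0 L)
  have hΦL : Φ L = 0 := by simp [hΦdef, hLv, hLx]
  have hΦ0 : Φ 0 = -(px u 0 y z) ^ 2 := by simp [hΦdef, h0]
  rw [hΦL, hΦ0, zero_sub, neg_neg] at hFTC
  have c1 : Continuous (fun x => 2 * (1 + x) * u x y z * px (px (px u)) x y z) := by
    have d1 := h.cont_x y z
    have d3 := (h.px.px.px).cont_x y z
    fun_prop
  have c2 : Continuous (fun x => (px u x y z) ^ 2) := by
    have d2 := (h.px).cont_x y z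
    fun_prop
  rw [intervalIntegral.integral_sub (c1.intervalIntegrable 0 L)
    ((show Continuous (fun x => 3 * (px u x y z) ^ 2) from continuous_const.mul c2).intervalIntegrable 0 L),
    intervalIntegral.integral_const_mul] at hFTC
  have e1 : ∫ x in (0:ℝ)..L, 2 * (1 + x) * u x y z * px (px (px u)) x y z
      = ∫ x in Set.Ioo 0 L, 2 * (1 + x) * u x y z * px (px (px u)) x y z := by
    rw [intervalIntegral.integral_of_le hL, integral_Ioc_eq_integral_Ioo]
  have e2 : ∫ x in (0:ℝ)..L, (px u x y z) ^ 2
      = ∫ x in Set.Ioo 0 L, (px u x y z) ^ 2 := by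
    rw [intervalIntegral.integral_of_le hL, integral_Ioc_eq_integral_Ioo]
  rw [e1, e2] at hFTC
  linarith

lemma ftcB1 {L y z : ℝ} (hL : 0 ≤ L) (hu : Nice u) (hw : Nice w)
    (h0 : u 0 y z = 0) (hLv : u L y z = 0) :
    ∫ x in Set.Ioo 0 L, 2 * (1 + x) * u x y z * px w x y z
      = - ∫ x in Set.Ioo 0 L,
          (2 * u x y z * w x y z + 2 * (1 + x) * px u x y z * w x y z) := by
  set Φ : ℝ → ℝ := fun x => 2 * (1 + x) * u x y z * w x y z with hΦdef
  have hΦ : ∀ x : ℝ, HasDerivAt Φ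
      (2 * (1 + x) * u x y z * px w x y z +
        (2 * u x y z * w x y z + 2 * (1 + x) * px u x y z * w x y z)) x := by
    intro x
    have h1 := hu.hd_x x y z
    have h2 := hw.hd_x x y z
    have := ((hd_two_one_plus x).mul h1).mul h2
    refine this.congr_deriv ?_
    simp only [Pi.mul_apply]
    ring
  have hcont : Continuous (fun x =>
      2 * (1 + x) * u x y z * px w x y z +
        (2 * u x y z * w x y z + 2 * (1 + x) * px u x y z * w x y z)) := by
    have c1 := hu.cont_x y z
    have c2 := hw.cont_x y z
    have c3 := (hu.px).cont_x y z
    have c4 := (hw.px).cont_x y z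
    fun_prop
  have hFTC := intervalIntegral.integral_eq_sub_of_hasDerivAt
    (f := Φ) (a := 0) (b := L) (fun x _ => hΦ x) (hcont.intervalIntegrable 0 L)
  have hΦL : Φ L = 0 := by simp [hΦdef, hLv]
  have hΦ0 : Φ 0 = 0 := by simp [hΦdef, h0]
  rw [hΦL, hΦ0, sub_zero] at hFTC
  have c1 : Continuous (fun x => 2 * (1 + x) * u x y z * px w x y z) := by
    have d1 := hu.cont_x y z
    have d2 := (hw.px).cont_x y z
    fun_prop
  have c2 : Continuous (fun x =>
      2 * u x y z * w x y z + 2 * (1 + x) * px u x y z * w x y z) := by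
    have d1 := hu.cont_x y z
    have d2 := hw.cont_x y z
    have d3 := (hu.px).cont_x y z
    fun_prop
  rw [intervalIntegral.integral_add (c1.intervalIntegrable 0 L)
    (c2.intervalIntegrable 0 L)] at hFTC
  have e1 : ∫ x in (0:ℝ)..L, 2 * (1 + x) * u x y z * px w x y z
      = ∫ x in Set.Ioo 0 L, 2 * (1 + x) * u x y z * px w x y z := by
    rw [intervalIntegral.integral_of_le hL, integral_Ioc_eq_integral_Ioo]
  have e2 : ∫ x in (0:ℝ)..L,
        (2 * u x y z * w x y z + 2 * (1 + x) * px u x y z * w x y z)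
      = ∫ x in Set.Ioo 0 L,
        (2 * u x y z * w x y z + 2 * (1 + x) * px u x y z * w x y z) := by
    rw [intervalIntegral.integral_of_le hL, integral_Ioc_eq_integral_Ioo]
  rw [e1, e2] at hFTC
  linarith

lemma ftcB3 {L y z : ℝ} (hL : 0 ≤ L) (hv : Nice v)
    (h0 : v 0 y z = 0) (hLv : v L y z = 0) :
    ∫ x in Set.Ioo 0 L, 2 * (1 + x) * px v x y z * v x y z
      = - ∫ x in Set.Ioo 0 L, (v x y z) ^ 2 := by
  set Θ : ℝ → ℝ := fun x => (1 + x) * (v x y z) ^ 2 with hΘdef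
  have hΘ : ∀ x : ℝ, HasDerivAt Θ
      (2 * (1 + x) * px v x y z * v x y z + (v x y z) ^ 2) x := by
    intro x
    have h1 := hv.hd_x x y z
    have := (hd_one_plus x).mul (h1.pow 2)
    refine this.congr_deriv ?_
    push_cast
    simp only [Pi.mul_apply, Pi.pow_apply]
    ring
  have hcont : Continuous (fun x =>
      2 * (1 + x) * px v x y z * v x y z + (v x y z) ^ 2) := by
    have c1 := hv.cont_x y z
    have c2 := (hv.px).cont_x y z
    fun_prop
  have hFTC := intervalIntegral.integral_eq_sub_of_hasDerivAt
    (f := Θ) (a := 0) (b := L) (fun x _ => hΘ x) (hcont.intervalIntegrable 0 L)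
  have hΘL : Θ L = 0 := by simp [hΘdef, hLv]
  have hΘ0 : Θ 0 = 0 := by simp [hΘdef, h0]
  rw [hΘL, hΘ0, sub_zero] at hFTC
  have c1 : Continuous (fun x => 2 * (1 + x) * px v x y z * v x y z) := by
    have d1 := hv.cont_x y z
    have d2 := (hv.px).cont_x y z
    fun_prop
  have c2 : Continuous (fun x => (v x y z) ^ 2) := hv.cont_x y z |>.pow 2
  rw [intervalIntegral.integral_add (c1.intervalIntegrable 0 L)
    (c2.intervalIntegrable 0 L)] at hFTC
  have e1 : ∫ x in (0:ℝ)..L, 2 * (1 + x) * px v x y z * v x y z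
      = ∫ x in Set.Ioo 0 L, 2 * (1 + x) * px v x y z * v x y z := by
    rw [intervalIntegral.integral_of_le hL, integral_Ioc_eq_integral_Ioo]
  have e2 : ∫ x in (0:ℝ)..L, (v x y z) ^ 2 = ∫ x in Set.Ioo 0 L, (v x y z) ^ 2 := by
    rw [intervalIntegral.integral_of_le hL, integral_Ioc_eq_integral_Ioo]
  rw [e1, e2] at hFTC
  linarith

end EstII

/-- Integration-by-parts identity for `Δu_x` tested against `2(1+x)u` (Estimate II). -/
theorem estimateII_laplacian_identity (L : ℝ) (hL : 0 < L) (u : ℝ → ℝ → ℝ → ℝ)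
    (hu : Admissible L u) :
    2 * ∫ p in Omega L, (1 + p.1) * u p.1 p.2.1 p.2.2 *
        (px (px (px u)) p.1 p.2.1 p.2.2 + px (py (py u)) p.1 p.2.1 p.2.2 +
          px (pz (pz u)) p.1 p.2.1 p.2.2) =
      3 * (∫ p in Omega L, (px u p.1 p.2.1 p.2.2) ^ 2) +
        (∫ p in Omega L, (py u p.1 p.2.1 p.2.2) ^ 2) +
        (∫ p in Omega L, (pz u p.1 p.2.1 p.2.2) ^ 2) +
        ∫ q : ℝ × ℝ, (px u 0 q.1 q.2) ^ 2 := by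
  obtain ⟨hsm, hexR, h0, hLv, hLx⟩ := hu
  have N : EstII.Nice u := ⟨hsm, by obtain ⟨R, _, hR⟩ := hexR; exact ⟨R ^ 2, hR⟩⟩
  have hL0 : (0:ℝ) ≤ L := hL.le
  have N1 : EstII.Nice (px u) := N.px
  have N2 : EstII.Nice (py u) := N.py
  have N3 : EstII.Nice (pz u) := N.pz
  have N22 : EstII.Nice (py (py u)) := N2.py
  have N33 : EstII.Nice (pz (pz u)) := N3.pz
  have NA : EstII.Nice (px (px (px u))) := N1.px.px
  have NB : EstII.Nice (px (py (py u))) := N22.px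
  have NC : EstII.Nice (px (pz (pz u))) := N33.px
  have N12 : EstII.Nice (px (py u)) := N2.px
  have N13 : EstII.Nice (px (pz u)) := N3.px
  have hpy0 : ∀ y z, py u 0 y z = 0 := EstII.py_zero_of h0
  have hpyL : ∀ y z, py u L y z = 0 := EstII.py_zero_of hLv
  have hpz0 : ∀ y z, pz u 0 y z = 0 := EstII.pz_zero_of h0
  have hpzL : ∀ y z, pz u L y z = 0 := EstII.pz_zero_of hLv
  -- Nice instances for composite integrands
  have Ng1 : EstII.Nice (fun a b c => 2 * (1 + a) * u a b c * px (px (px u)) a b c) :=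
    EstII.nice_of (((N.xmul).mul NA).cmul 2) (fun a b c => by ring)
  have Ng2 : EstII.Nice (fun a b c => 2 * (1 + a) * u a b c * px (py (py u)) a b c) :=
    EstII.nice_of (((N.xmul).mul NB).cmul 2) (fun a b c => by ring)
  have Ng3 : EstII.Nice (fun a b c => 2 * (1 + a) * u a b c * px (pz (pz u)) a b c) :=
    EstII.nice_of (((N.xmul).mul NC).cmul 2) (fun a b c => by ring)
  have Nsq1 : EstII.Nice (fun a b c => (px u a b c) ^ 2) := N1.sq
  have Nsq2 : EstII.Nice (fun a b c => (py u a b c) ^ 2) := N2.sq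
  have Nsq3 : EstII.Nice (fun a b c => (pz u a b c) ^ 2) := N3.sq
  have eqsq1 : (∫ p in Omega L, (px u p.1 p.2.1 p.2.2) ^ 2)
      = ∫ q : ℝ × ℝ, ∫ x in Set.Ioo 0 L, (px u x q.1 q.2) ^ 2 := EstII.fub_qx Nsq1 L
  have eqsq2 : (∫ p in Omega L, (py u p.1 p.2.1 p.2.2) ^ 2)
      = ∫ q : ℝ × ℝ, ∫ x in Set.Ioo 0 L, (py u x q.1 q.2) ^ 2 := EstII.fub_qx Nsq2 L
  have eqsq3 : (∫ p in Omega L, (pz u p.1 p.2.1 p.2.2) ^ 2)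
      = ∫ q : ℝ × ℝ, ∫ x in Set.Ioo 0 L, (pz u x q.1 q.2) ^ 2 := EstII.fub_qx Nsq3 L
  -- Term A
  have termA : (∫ p in Omega L,
        2 * (1 + p.1) * u p.1 p.2.1 p.2.2 * px (px (px u)) p.1 p.2.1 p.2.2)
      = 3 * (∫ p in Omega L, (px u p.1 p.2.1 p.2.2) ^ 2)
          + ∫ q : ℝ × ℝ, (px u 0 q.1 q.2) ^ 2 := by
    have hmarg : Integrable (fun q : ℝ × ℝ => ∫ x in Set.Ioo 0 L, (px u x q.1 q.2) ^ 2)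
        volume := Nsq1.integrable_marginal L
    have hbd : Integrable (fun q : ℝ × ℝ => (px u 0 q.1 q.2) ^ 2) volume :=
      Nsq1.integrable_fiber 0
    calc (∫ p in Omega L,
          2 * (1 + p.1) * u p.1 p.2.1 p.2.2 * px (px (px u)) p.1 p.2.1 p.2.2)
        = ∫ q : ℝ × ℝ, ∫ x in Set.Ioo 0 L,
            2 * (1 + x) * u x q.1 q.2 * px (px (px u)) x q.1 q.2 := EstII.fub_qx Ng1 L
      _ = ∫ q : ℝ × ℝ, (3 * (∫ x in Set.Ioo 0 L, (px u x q.1 q.2) ^ 2)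
            + (px u 0 q.1 q.2) ^ 2) :=
          integral_congr_ae (Filter.Eventually.of_forall fun q =>
            EstII.ftcA hL0 N (h0 q.1 q.2) (hLv q.1 q.2) (hLx q.1 q.2))
      _ = (∫ q : ℝ × ℝ, 3 * (∫ x in Set.Ioo 0 L, (px u x q.1 q.2) ^ 2))
            + ∫ q : ℝ × ℝ, (px u 0 q.1 q.2) ^ 2 :=
          integral_add (hmarg.const_mul 3) hbd
      _ = 3 * (∫ q : ℝ × ℝ, ∫ x in Set.Ioo 0 L, (px u x q.1 q.2) ^ 2)
            + ∫ q : ℝ × ℝ, (px u 0 q.1 q.2) ^ 2 := by rw [integral_const_mul]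
      _ = 3 * (∫ p in Omega L, (px u p.1 p.2.1 p.2.2) ^ 2)
            + ∫ q : ℝ × ℝ, (px u 0 q.1 q.2) ^ 2 := by rw [← eqsq1]
  -- coefficient function and its y/z-derivatives
  have Nc : EstII.Nice (fun a b c => 2 * u a b c + 2 * (1 + a) * px u a b c) :=
    EstII.nice_of ((N.cmul 2).add ((N1.xmul).cmul 2)) (fun a b c => by ring)
  have pyc : ∀ x y z : ℝ, py (fun a b c => 2 * u a b c + 2 * (1 + a) * px u a b c) x y z
      = 2 * py u x y z + 2 * (1 + x) * py (px u) x y z := fun x y z =>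
    (((N.hd_y x y z).const_mul 2).add ((N1.hd_y x y z).const_mul (2 * (1 + x)))).deriv
  have pzc : ∀ x y z : ℝ, pz (fun a b c => 2 * u a b c + 2 * (1 + a) * px u a b c) x y z
      = 2 * pz u x y z + 2 * (1 + x) * pz (px u) x y z := fun x y z =>
    (((N.hd_z x y z).const_mul 2).add ((N1.hd_z x y z).const_mul (2 * (1 + x)))).deriv
  -- Term B
  have Nh2 : EstII.Nice (fun a b c =>
      2 * u a b c * py (py u) a b c + 2 * (1 + a) * px u a b c * py (py u) a b c) :=
    EstII.nice_of (Nc.mul N22) (fun a b c => by ring)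
  have Nh2' : EstII.Nice (fun a b c =>
      2 * (py u a b c) ^ 2 + 2 * (1 + a) * px (py u) a b c * py u a b c) :=
    EstII.nice_of (((N2.mul N2).cmul 2).add (((N12.mul N2).xmul).cmul 2))
      (fun a b c => by ring)
  have Nt2 : EstII.Nice (fun a b c => 2 * (1 + a) * px (py u) a b c * py u a b c) :=
    EstII.nice_of (((N12.mul N2).xmul).cmul 2) (fun a b c => by ring)
  have stepB2 : ∀ x z : ℝ,
      (∫ y : ℝ, (2 * u x y z * py (py u) x y z
          + 2 * (1 + x) * px u x y z * py (py u) x y z))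
        = -∫ y : ℝ, (2 * (py u x y z) ^ 2
          + 2 * (1 + x) * px (py u) x y z * py u x y z) := by
    intro x z
    calc (∫ y : ℝ, (2 * u x y z * py (py u) x y z
            + 2 * (1 + x) * px u x y z * py (py u) x y z))
        = ∫ y : ℝ, (2 * u x y z + 2 * (1 + x) * px u x y z) * py (py u) x y z :=
          integral_congr_ae (Filter.Eventually.of_forall fun y => by ring)
      _ = -∫ y : ℝ, py (fun a b c => 2 * u a b c + 2 * (1 + a) * px u a b c) x y z
            * py u x y z := EstII.ibp_y Nc N2 x z
      _ = -∫ y : ℝ, (2 * (py u x y z) ^ 2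
            + 2 * (1 + x) * px (py u) x y z * py u x y z) := by
          refine congrArg Neg.neg (integral_congr_ae (Filter.Eventually.of_forall fun y => ?_))
          simp only [pyc x y z, EstII.symm_xy hsm x y z]
          ring
  have termB3 : (∫ p in Omega L,
        2 * (1 + p.1) * px (py u) p.1 p.2.1 p.2.2 * py u p.1 p.2.1 p.2.2)
      = -∫ p in Omega L, (py u p.1 p.2.1 p.2.2) ^ 2 := by
    calc (∫ p in Omega L,
          2 * (1 + p.1) * px (py u) p.1 p.2.1 p.2.2 * py u p.1 p.2.1 p.2.2)
        = ∫ q : ℝ × ℝ, ∫ x in Set.Ioo 0 L,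
            2 * (1 + x) * px (py u) x q.1 q.2 * py u x q.1 q.2 := EstII.fub_qx Nt2 L
      _ = ∫ q : ℝ × ℝ, -∫ x in Set.Ioo 0 L, (py u x q.1 q.2) ^ 2 :=
          integral_congr_ae (Filter.Eventually.of_forall fun q =>
            EstII.ftcB3 hL0 N2 (hpy0 q.1 q.2) (hpyL q.1 q.2))
      _ = -∫ q : ℝ × ℝ, ∫ x in Set.Ioo 0 L, (py u x q.1 q.2) ^ 2 := integral_neg _
      _ = -∫ p in Omega L, (py u p.1 p.2.1 p.2.2) ^ 2 := congrArg Neg.neg eqsq2.symm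
  have termB : (∫ p in Omega L,
        2 * (1 + p.1) * u p.1 p.2.1 p.2.2 * px (py (py u)) p.1 p.2.1 p.2.2)
      = ∫ p in Omega L, (py u p.1 p.2.1 p.2.2) ^ 2 := by
    calc (∫ p in Omega L,
          2 * (1 + p.1) * u p.1 p.2.1 p.2.2 * px (py (py u)) p.1 p.2.1 p.2.2)
        = ∫ q : ℝ × ℝ, ∫ x in Set.Ioo 0 L,
            2 * (1 + x) * u x q.1 q.2 * px (py (py u)) x q.1 q.2 := EstII.fub_qx Ng2 L
      _ = ∫ q : ℝ × ℝ, -∫ x in Set.Ioo 0 L, (2 * u x q.1 q.2 * py (py u) x q.1 q.2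
            + 2 * (1 + x) * px u x q.1 q.2 * py (py u) x q.1 q.2) :=
          integral_congr_ae (Filter.Eventually.of_forall fun q =>
            EstII.ftcB1 hL0 N N22 (h0 q.1 q.2) (hLv q.1 q.2))
      _ = -∫ q : ℝ × ℝ, ∫ x in Set.Ioo 0 L, (2 * u x q.1 q.2 * py (py u) x q.1 q.2
            + 2 * (1 + x) * px u x q.1 q.2 * py (py u) x q.1 q.2) := integral_neg _
      _ = -∫ p in Omega L, (2 * u p.1 p.2.1 p.2.2 * py (py u) p.1 p.2.1 p.2.2
            + 2 * (1 + p.1) * px u p.1 p.2.1 p.2.2 * py (py u) p.1 p.2.1 p.2.2) :=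
          congrArg Neg.neg (EstII.fub_qx Nh2 L).symm
      _ = -∫ x in Set.Ioo 0 L, ∫ q : ℝ × ℝ, (2 * u x q.1 q.2 * py (py u) x q.1 q.2
            + 2 * (1 + x) * px u x q.1 q.2 * py (py u) x q.1 q.2) :=
          congrArg Neg.neg (EstII.fub_xq Nh2 L)
      _ = -∫ x in Set.Ioo 0 L, ∫ z : ℝ, ∫ y : ℝ, (2 * u x y z * py (py u) x y z
            + 2 * (1 + x) * px u x y z * py (py u) x y z) :=
          congrArg Neg.neg (integral_congr_ae (Filter.Eventually.of_forall fun x =>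
            EstII.fiber_zy Nh2 x))
      _ = -∫ x in Set.Ioo 0 L, ∫ z : ℝ, -∫ y : ℝ, (2 * (py u x y z) ^ 2
            + 2 * (1 + x) * px (py u) x y z * py u x y z) :=
          congrArg Neg.neg (integral_congr_ae (Filter.Eventually.of_forall fun x =>
            integral_congr_ae (Filter.Eventually.of_forall fun z => stepB2 x z)))
      _ = ∫ x in Set.Ioo 0 L, ∫ z : ℝ, ∫ y : ℝ, (2 * (py u x y z) ^ 2
            + 2 * (1 + x) * px (py u) x y z * py u x y z) := by
          simp only [integral_neg, neg_neg]
      _ = ∫ x in Set.Ioo 0 L, ∫ q : ℝ × ℝ, (2 * (py u x q.1 q.2) ^ 2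
            + 2 * (1 + x) * px (py u) x q.1 q.2 * py u x q.1 q.2) :=
          integral_congr_ae (Filter.Eventually.of_forall fun x =>
            (EstII.fiber_zy Nh2' x).symm)
      _ = ∫ p in Omega L, (2 * (py u p.1 p.2.1 p.2.2) ^ 2
            + 2 * (1 + p.1) * px (py u) p.1 p.2.1 p.2.2 * py u p.1 p.2.1 p.2.2) :=
          (EstII.fub_xq Nh2' L).symm
      _ = (∫ p in Omega L, 2 * (py u p.1 p.2.1 p.2.2) ^ 2)
            + ∫ p in Omega L,
              2 * (1 + p.1) * px (py u) p.1 p.2.1 p.2.2 * py u p.1 p.2.1 p.2.2 :=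
          integral_add ((Nsq2.cmul 2).integrableOn L) (Nt2.integrableOn L)
      _ = 2 * (∫ p in Omega L, (py u p.1 p.2.1 p.2.2) ^ 2)
            + -∫ p in Omega L, (py u p.1 p.2.1 p.2.2) ^ 2 := by
          rw [integral_const_mul, termB3]
      _ = ∫ p in Omega L, (py u p.1 p.2.1 p.2.2) ^ 2 := by ring
  -- Term C
  have Nh3 : EstII.Nice (fun a b c =>
      2 * u a b c * pz (pz u) a b c + 2 * (1 + a) * px u a b c * pz (pz u) a b c) :=
    EstII.nice_of (Nc.mul N33) (fun a b c => by ring)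
  have Nh3' : EstII.Nice (fun a b c =>
      2 * (pz u a b c) ^ 2 + 2 * (1 + a) * px (pz u) a b c * pz u a b c) :=
    EstII.nice_of (((N3.mul N3).cmul 2).add (((N13.mul N3).xmul).cmul 2))
      (fun a b c => by ring)
  have Nt3 : EstII.Nice (fun a b c => 2 * (1 + a) * px (pz u) a b c * pz u a b c) :=
    EstII.nice_of (((N13.mul N3).xmul).cmul 2) (fun a b c => by ring)
  have stepC2 : ∀ x y : ℝ,
      (∫ z : ℝ, (2 * u x y z * pz (pz u) x y z
          + 2 * (1 + x) * px u x y z * pz (pz u) x y z))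
        = -∫ z : ℝ, (2 * (pz u x y z) ^ 2
          + 2 * (1 + x) * px (pz u) x y z * pz u x y z) := by
    intro x y
    calc (∫ z : ℝ, (2 * u x y z * pz (pz u) x y z
            + 2 * (1 + x) * px u x y z * pz (pz u) x y z))
        = ∫ z : ℝ, (2 * u x y z + 2 * (1 + x) * px u x y z) * pz (pz u) x y z :=
          integral_congr_ae (Filter.Eventually.of_forall fun z => by ring)
      _ = -∫ z : ℝ, pz (fun a b c => 2 * u a b c + 2 * (1 + a) * px u a b c) x y z
            * pz u x y z := EstII.ibp_z Nc N3 x y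
      _ = -∫ z : ℝ, (2 * (pz u x y z) ^ 2
            + 2 * (1 + x) * px (pz u) x y z * pz u x y z) := by
          refine congrArg Neg.neg (integral_congr_ae (Filter.Eventually.of_forall fun z => ?_))
          simp only [pzc x y z, EstII.symm_xz hsm x y z]
          ring
  have termC3 : (∫ p in Omega L,
        2 * (1 + p.1) * px (pz u) p.1 p.2.1 p.2.2 * pz u p.1 p.2.1 p.2.2)
      = -∫ p in Omega L, (pz u p.1 p.2.1 p.2.2) ^ 2 := by
    calc (∫ p in Omega L,
          2 * (1 + p.1) * px (pz u) p.1 p.2.1 p.2.2 * pz u p.1 p.2.1 p.2.2)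
        = ∫ q : ℝ × ℝ, ∫ x in Set.Ioo 0 L,
            2 * (1 + x) * px (pz u) x q.1 q.2 * pz u x q.1 q.2 := EstII.fub_qx Nt3 L
      _ = ∫ q : ℝ × ℝ, -∫ x in Set.Ioo 0 L, (pz u x q.1 q.2) ^ 2 :=
          integral_congr_ae (Filter.Eventually.of_forall fun q =>
            EstII.ftcB3 hL0 N3 (hpz0 q.1 q.2) (hpzL q.1 q.2))
      _ = -∫ q : ℝ × ℝ, ∫ x in Set.Ioo 0 L, (pz u x q.1 q.2) ^ 2 := integral_neg _
      _ = -∫ p in Omega L, (pz u p.1 p.2.1 p.2.2) ^ 2 := congrArg Neg.neg eqsq3.symm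
  have termC : (∫ p in Omega L,
        2 * (1 + p.1) * u p.1 p.2.1 p.2.2 * px (pz (pz u)) p.1 p.2.1 p.2.2)
      = ∫ p in Omega L, (pz u p.1 p.2.1 p.2.2) ^ 2 := by
    calc (∫ p in Omega L,
          2 * (1 + p.1) * u p.1 p.2.1 p.2.2 * px (pz (pz u)) p.1 p.2.1 p.2.2)
        = ∫ q : ℝ × ℝ, ∫ x in Set.Ioo 0 L,
            2 * (1 + x) * u x q.1 q.2 * px (pz (pz u)) x q.1 q.2 := EstII.fub_qx Ng3 L
      _ = ∫ q : ℝ × ℝ, -∫ x in Set.Ioo 0 L, (2 * u x q.1 q.2 * pz (pz u) x q.1 q.2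
            + 2 * (1 + x) * px u x q.1 q.2 * pz (pz u) x q.1 q.2) :=
          integral_congr_ae (Filter.Eventually.of_forall fun q =>
            EstII.ftcB1 hL0 N N33 (h0 q.1 q.2) (hLv q.1 q.2))
      _ = -∫ q : ℝ × ℝ, ∫ x in Set.Ioo 0 L, (2 * u x q.1 q.2 * pz (pz u) x q.1 q.2
            + 2 * (1 + x) * px u x q.1 q.2 * pz (pz u) x q.1 q.2) := integral_neg _
      _ = -∫ p in Omega L, (2 * u p.1 p.2.1 p.2.2 * pz (pz u) p.1 p.2.1 p.2.2
            + 2 * (1 + p.1) * px u p.1 p.2.1 p.2.2 * pz (pz u) p.1 p.2.1 p.2.2) :=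
          congrArg Neg.neg (EstII.fub_qx Nh3 L).symm
      _ = -∫ x in Set.Ioo 0 L, ∫ q : ℝ × ℝ, (2 * u x q.1 q.2 * pz (pz u) x q.1 q.2
            + 2 * (1 + x) * px u x q.1 q.2 * pz (pz u) x q.1 q.2) :=
          congrArg Neg.neg (EstII.fub_xq Nh3 L)
      _ = -∫ x in Set.Ioo 0 L, ∫ y : ℝ, ∫ z : ℝ, (2 * u x y z * pz (pz u) x y z
            + 2 * (1 + x) * px u x y z * pz (pz u) x y z) :=
          congrArg Neg.neg (integral_congr_ae (Filter.Eventually.of_forall fun x =>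
            EstII.fiber_yz Nh3 x))
      _ = -∫ x in Set.Ioo 0 L, ∫ y : ℝ, -∫ z : ℝ, (2 * (pz u x y z) ^ 2
            + 2 * (1 + x) * px (pz u) x y z * pz u x y z) :=
          congrArg Neg.neg (integral_congr_ae (Filter.Eventually.of_forall fun x =>
            integral_congr_ae (Filter.Eventually.of_forall fun y => stepC2 x y)))
      _ = ∫ x in Set.Ioo 0 L, ∫ y : ℝ, ∫ z : ℝ, (2 * (pz u x y z) ^ 2
            + 2 * (1 + x) * px (pz u) x y z * pz u x y z) := by
          simp only [integral_neg, neg_neg]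
      _ = ∫ x in Set.Ioo 0 L, ∫ q : ℝ × ℝ, (2 * (pz u x q.1 q.2) ^ 2
            + 2 * (1 + x) * px (pz u) x q.1 q.2 * pz u x q.1 q.2) :=
          integral_congr_ae (Filter.Eventually.of_forall fun x =>
            (EstII.fiber_yz Nh3' x).symm)
      _ = ∫ p in Omega L, (2 * (pz u p.1 p.2.1 p.2.2) ^ 2
            + 2 * (1 + p.1) * px (pz u) p.1 p.2.1 p.2.2 * pz u p.1 p.2.1 p.2.2) :=
          (EstII.fub_xq Nh3' L).symm
      _ = (∫ p in Omega L, 2 * (pz u p.1 p.2.1 p.2.2) ^ 2)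
            + ∫ p in Omega L,
              2 * (1 + p.1) * px (pz u) p.1 p.2.1 p.2.2 * pz u p.1 p.2.1 p.2.2 :=
          integral_add ((Nsq3.cmul 2).integrableOn L) (Nt3.integrableOn L)
      _ = 2 * (∫ p in Omega L, (pz u p.1 p.2.1 p.2.2) ^ 2)
            + -∫ p in Omega L, (pz u p.1 p.2.1 p.2.2) ^ 2 := by
          rw [integral_const_mul, termC3]
      _ = ∫ p in Omega L, (pz u p.1 p.2.1 p.2.2) ^ 2 := by ring
  -- Assemble
  have Ng12 : EstII.Nice (fun a b c =>
      2 * (1 + a) * u a b c * px (px (px u)) a b c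
        + 2 * (1 + a) * u a b c * px (py (py u)) a b c) := Ng1.add Ng2
  have split : (2:ℝ) * ∫ p in Omega L, (1 + p.1) * u p.1 p.2.1 p.2.2 *
        (px (px (px u)) p.1 p.2.1 p.2.2 + px (py (py u)) p.1 p.2.1 p.2.2 +
          px (pz (pz u)) p.1 p.2.1 p.2.2)
      = (∫ p in Omega L,
          2 * (1 + p.1) * u p.1 p.2.1 p.2.2 * px (px (px u)) p.1 p.2.1 p.2.2)
        + (∫ p in Omega L,
          2 * (1 + p.1) * u p.1 p.2.1 p.2.2 * px (py (py u)) p.1 p.2.1 p.2.2)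
        + ∫ p in Omega L,
          2 * (1 + p.1) * u p.1 p.2.1 p.2.2 * px (pz (pz u)) p.1 p.2.1 p.2.2 := by
    calc (2:ℝ) * ∫ p in Omega L, (1 + p.1) * u p.1 p.2.1 p.2.2 *
          (px (px (px u)) p.1 p.2.1 p.2.2 + px (py (py u)) p.1 p.2.1 p.2.2 +
            px (pz (pz u)) p.1 p.2.1 p.2.2)
        = ∫ p in Omega L, 2 * ((1 + p.1) * u p.1 p.2.1 p.2.2 *
            (px (px (px u)) p.1 p.2.1 p.2.2 + px (py (py u)) p.1 p.2.1 p.2.2 +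
              px (pz (pz u)) p.1 p.2.1 p.2.2)) := (integral_const_mul 2 _).symm
      _ = ∫ p in Omega L,
            (2 * (1 + p.1) * u p.1 p.2.1 p.2.2 * px (px (px u)) p.1 p.2.1 p.2.2
              + 2 * (1 + p.1) * u p.1 p.2.1 p.2.2 * px (py (py u)) p.1 p.2.1 p.2.2
              + 2 * (1 + p.1) * u p.1 p.2.1 p.2.2 * px (pz (pz u)) p.1 p.2.1 p.2.2) :=
          integral_congr_ae (Filter.Eventually.of_forall fun p => by ring)
      _ = (∫ p in Omega L,
            (2 * (1 + p.1) * u p.1 p.2.1 p.2.2 * px (px (px u)) p.1 p.2.1 p.2.2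
              + 2 * (1 + p.1) * u p.1 p.2.1 p.2.2 * px (py (py u)) p.1 p.2.1 p.2.2))
            + ∫ p in Omega L,
              2 * (1 + p.1) * u p.1 p.2.1 p.2.2 * px (pz (pz u)) p.1 p.2.1 p.2.2 :=
          integral_add (Ng12.integrableOn L) (Ng3.integrableOn L)
      _ = (∫ p in Omega L,
            2 * (1 + p.1) * u p.1 p.2.1 p.2.2 * px (px (px u)) p.1 p.2.1 p.2.2)
            + (∫ p in Omega L,
              2 * (1 + p.1) * u p.1 p.2.1 p.2.2 * px (py (py u)) p.1 p.2.1 p.2.2)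
            + ∫ p in Omega L,
              2 * (1 + p.1) * u p.1 p.2.1 p.2.2 * px (pz (pz u)) p.1 p.2.1 p.2.2 := by
          rw [integral_add (Ng1.integrableOn L) (Ng2.integrableOn L)]
  rw [split, termA, termB, termC]
  ring
end

section
/- Let u be an admissible function. Then 2∫_Ω (1+x)·u_{xxx}·(u_{yyyy} + u_{yyzz} + u_{zzzz}) dΩ = 3(‖u_{xyy}‖² + ‖u_{xyz}‖² + ‖u_{xzz}‖²) + ∫_{ℝ²} [ (u_{xyy}(0,y,z))² + (u_{xyz}(0,y,z))² + (u_{xzz}(0,y,z))² ] dy dz. -/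
open MeasureTheory

namespace J3

noncomputable def DD (v : ℝ×ℝ×ℝ) (F : ℝ × ℝ × ℝ → ℝ) : ℝ×ℝ×ℝ → ℝ := fun p => fderiv ℝ F p v

def E1 : ℝ×ℝ×ℝ := (1,0,0)
def E2 : ℝ×ℝ×ℝ := (0,1,0)
def E3 : ℝ×ℝ×ℝ := (0,0,1)

theorem smooth_DD {F} (v) (hF : ContDiff ℝ (⊤ : ℕ∞) F) : ContDiff ℝ (⊤ : ℕ∞) (DD v F) :=
  (hF.fderiv_right (by simp)).clm_apply contDiff_const

theorem diff_smooth {F : ℝ×ℝ×ℝ → ℝ} (hF : ContDiff ℝ (⊤ : ℕ∞) F) : Differentiable ℝ F :=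
  hF.differentiable (by simp)

theorem hdx {G : ℝ×ℝ×ℝ → ℝ} (hG : Differentiable ℝ G) (x : ℝ) (q : ℝ×ℝ) :
    HasDerivAt (fun x' => G (x', q)) (DD E1 G (x, q)) x := by
  have h2 : HasDerivAt (fun x' : ℝ => (x', q)) ((1:ℝ),(0:ℝ),(0:ℝ)) x :=
    (hasDerivAt_id x).prodMk (hasDerivAt_const x q)
  exact (hG (x,q)).hasFDerivAt.comp_hasDerivAt x h2

theorem hdy {G : ℝ×ℝ×ℝ → ℝ} (hG : Differentiable ℝ G) (x y z : ℝ) :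
    HasDerivAt (fun y' => G (x, y', z)) (DD E2 G (x, y, z)) y := by
  have h2 : HasDerivAt (fun y' : ℝ => (x, y', z)) ((0:ℝ),(1:ℝ),(0:ℝ)) y :=
    (hasDerivAt_const y x).prodMk ((hasDerivAt_id y).prodMk (hasDerivAt_const y z))
  exact (hG (x,y,z)).hasFDerivAt.comp_hasDerivAt y h2

theorem hdz {G : ℝ×ℝ×ℝ → ℝ} (hG : Differentiable ℝ G) (x y z : ℝ) :
    HasDerivAt (fun z' => G (x, y, z')) (DD E3 G (x, y, z)) z := by
  have h2 : HasDerivAt (fun z' : ℝ => (x, y, z')) ((0:ℝ),(0:ℝ),(1:ℝ)) z :=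
    (hasDerivAt_const z x).prodMk ((hasDerivAt_const z y).prodMk (hasDerivAt_id z))
  exact (hG (x,y,z)).hasFDerivAt.comp_hasDerivAt z h2

theorem DD_comm {F} (v w : ℝ×ℝ×ℝ) (hF : ContDiff ℝ (⊤ : ℕ∞) F) : DD v (DD w F) = DD w (DD v F) := by
  funext p
  have hd : DifferentiableAt ℝ (fderiv ℝ F) p :=
    ((hF.fderiv_right (m := (⊤ : ℕ∞)) (by simp)).differentiable (by simp)) p
  have hsymm := (hF.contDiffAt (x := p)).isSymmSndFDerivAt (by rw [minSmoothness_of_isRCLikeNormedField]; exact WithTop.coe_le_coe.mpr (le_top : (2:ℕ∞) ≤ ⊤))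
  have key : ∀ a b : ℝ×ℝ×ℝ, DD b (DD a F) p = fderiv ℝ (fderiv ℝ F) p b a := by
    intro a b
    show fderiv ℝ (fun q => (fderiv ℝ F q) a) p b = _
    rw [fderiv_clm_apply hd (differentiableAt_const a)]
    simp
  rw [key w v, key v w]
  exact hsymm v w

theorem comm3 (v : ℝ×ℝ×ℝ) {F} (hF : ContDiff ℝ (⊤ : ℕ∞) F) :
    DD v (DD E1 (DD E1 (DD E1 F))) = DD E1 (DD E1 (DD E1 (DD v F))) := by
  rw [DD_comm v E1 (smooth_DD E1 (smooth_DD E1 hF)), DD_comm v E1 (smooth_DD E1 hF),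
    DD_comm v E1 hF]

theorem vanish_DD {F : ℝ×ℝ×ℝ → ℝ} {S : ℝ} (hF : Differentiable ℝ F)
    (h : ∀ p : ℝ×ℝ×ℝ, S ≤ p.2.1^2 + p.2.2^2 → F p = 0) (v : ℝ×ℝ×ℝ) :
    ∀ p : ℝ×ℝ×ℝ, S + 1 ≤ p.2.1^2 + p.2.2^2 → DD v F p = 0 := by
  intro p hp
  have hopen : IsOpen {q : ℝ×ℝ×ℝ | S < q.2.1^2 + q.2.2^2} :=
    isOpen_lt continuous_const (by fun_prop)
  have hev : F =ᶠ[nhds p] (fun _ => (0:ℝ)) := by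
    filter_upwards [hopen.mem_nhds (by simp only [Set.mem_setOf_eq]; linarith)] with q hq
    exact h q hq.le
  have : fderiv ℝ F p = fderiv ℝ (fun _ : ℝ×ℝ×ℝ => (0:ℝ)) p := hev.fderiv_eq
  simp [DD, this]

theorem bdry2 {G : ℝ×ℝ×ℝ → ℝ} (hG : Differentiable ℝ G) {a : ℝ}
    (h : ∀ y z, G (a,y,z) = 0) : ∀ y z, DD E2 G (a,y,z) = 0 := by
  intro y z
  have h1 := hdy hG a y z
  rw [show (fun y' => G (a,y',z)) = fun _ => (0:ℝ) from funext fun y' => h y' z] at h1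
  exact h1.unique (hasDerivAt_const _ _)

theorem bdry3 {G : ℝ×ℝ×ℝ → ℝ} (hG : Differentiable ℝ G) {a : ℝ}
    (h : ∀ y z, G (a,y,z) = 0) : ∀ y z, DD E3 G (a,y,z) = 0 := by
  intro y z
  have h1 := hdz hG a y z
  rw [show (fun z' => G (a,y,z')) = fun _ => (0:ℝ) from funext fun z' => h y z'] at h1
  exact h1.unique (hasDerivAt_const _ _)

theorem vanish_off_ball {f : ℝ×ℝ×ℝ → ℝ} {S : ℝ}
    (h : ∀ p : ℝ×ℝ×ℝ, S ≤ p.2.1^2 + p.2.2^2 → f p = 0) :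
    ∀ p : ℝ×ℝ×ℝ, p.2 ∉ Metric.closedBall (0:ℝ×ℝ) (Real.sqrt (max S 0)) → f p = 0 := by
  intro p hp
  have hr0 : 0 ≤ Real.sqrt (max S 0) := Real.sqrt_nonneg _
  have hrsq : Real.sqrt (max S 0)^2 = max S 0 := Real.sq_sqrt (le_max_right S 0)
  have hnorm : Real.sqrt (max S 0) < ‖p.2‖ := by
    simpa [Metric.mem_closedBall, dist_zero_right] using hp
  have hmax : Real.sqrt (max S 0) < max |p.2.1| |p.2.2| := by
    rw [Prod.norm_def] at hnorm
    simpa [Real.norm_eq_abs] using hnorm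
  apply h
  rcases lt_max_iff.mp hmax with h1 | h1
  · nlinarith [sq_abs p.2.1, sq_abs p.2.2, sq_nonneg p.2.2, le_max_left S 0]
  · nlinarith [sq_abs p.2.1, sq_abs p.2.2, sq_nonneg p.2.1, le_max_left S 0]

theorem integrableOn_omega {f : ℝ×ℝ×ℝ → ℝ} {S L : ℝ} (hf : Continuous f)
    (h : ∀ p : ℝ×ℝ×ℝ, S ≤ p.2.1^2 + p.2.2^2 → f p = 0) :
    IntegrableOn f (Set.Ioo 0 L ×ˢ (Set.univ : Set (ℝ×ℝ))) := by
  set r := Real.sqrt (max S 0) with hr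
  set K : Set (ℝ×ℝ×ℝ) := Set.Icc 0 L ×ˢ Metric.closedBall (0:ℝ×ℝ) r with hK
  have hKc : IsCompact K := isCompact_Icc.prod (isCompact_closedBall _ _)
  have hIK : IntegrableOn f K := hf.continuousOn.integrableOn_compact hKc
  have hms : MeasurableSet (Set.Ioo (0:ℝ) L ×ˢ (Set.univ : Set (ℝ×ℝ))) :=
    measurableSet_Ioo.prod MeasurableSet.univ
  have hmK : MeasurableSet K := measurableSet_Icc.prod measurableSet_closedBall
  have heq : (Set.Ioo (0:ℝ) L ×ˢ (Set.univ : Set (ℝ×ℝ))).indicator f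
      = ((Set.Ioo (0:ℝ) L ×ˢ (Set.univ : Set (ℝ×ℝ))) ∩ K).indicator f := by
    funext p
    by_cases hs : p ∈ Set.Ioo (0:ℝ) L ×ˢ (Set.univ : Set (ℝ×ℝ))
    · by_cases hKp : p ∈ K
      · simp [Set.indicator_of_mem, hs, hKp, Set.mem_inter_iff]
      · have hf0 : f p = 0 := by
          apply vanish_off_ball h
          intro hball
          exact hKp ⟨⟨hs.1.1.le, hs.1.2.le⟩, hball⟩
        simp [Set.indicator, hs, hKp, hf0]
    · simp [Set.indicator, hs]
  have key : Integrable ((Set.Ioo (0:ℝ) L ×ˢ (Set.univ : Set (ℝ×ℝ))).indicator f) := by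
    rw [heq, integrable_indicator_iff (hms.inter hmK)]
    exact hIK.mono_set Set.inter_subset_right
  exact (integrable_indicator_iff hms).mp key

theorem integral_deriv_zero {g : ℝ → ℝ} (hg : ContDiff ℝ 1 g) (hs : HasCompactSupport g) :
    ∫ y : ℝ, deriv g y = 0 := by
  have hint : Integrable (deriv g) :=
    (hg.continuous_deriv le_rfl).integrable_of_hasCompactSupport hs.deriv
  rw [← intervalIntegral.integral_Iic_add_Ioi (b := 0) hint.integrableOn hint.integrableOn,
    hs.integral_Iic_deriv_eq hg 0, hs.integral_Ioi_deriv_eq hg 0]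
  ring

theorem fiber_y_support {F : ℝ×ℝ×ℝ → ℝ} {S : ℝ}
    (h : ∀ p : ℝ×ℝ×ℝ, S ≤ p.2.1^2 + p.2.2^2 → F p = 0) (x z : ℝ) :
    HasCompactSupport (fun y => F (x,y,z)) := by
  apply HasCompactSupport.intro (isCompact_Icc
    (a := -(Real.sqrt (max S 0))) (b := Real.sqrt (max S 0)))
  intro y hy
  rw [Set.mem_Icc, ← abs_le] at hy
  have h1 : Real.sqrt (max S 0) < |y| := lt_of_not_ge hy
  have hrsq : Real.sqrt (max S 0)^2 = max S 0 := Real.sq_sqrt (le_max_right S 0)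
  have hr0 : 0 ≤ Real.sqrt (max S 0) := Real.sqrt_nonneg _
  exact h (x,y,z) (by nlinarith [sq_abs y, sq_nonneg z, le_max_left S 0])

theorem fiber_z_support {F : ℝ×ℝ×ℝ → ℝ} {S : ℝ}
    (h : ∀ p : ℝ×ℝ×ℝ, S ≤ p.2.1^2 + p.2.2^2 → F p = 0) (x y : ℝ) :
    HasCompactSupport (fun z => F (x,y,z)) := by
  apply HasCompactSupport.intro (isCompact_Icc
    (a := -(Real.sqrt (max S 0))) (b := Real.sqrt (max S 0)))
  intro z hz
  rw [Set.mem_Icc, ← abs_le] at hz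
  have h1 : Real.sqrt (max S 0) < |z| := lt_of_not_ge hz
  have hrsq : Real.sqrt (max S 0)^2 = max S 0 := Real.sq_sqrt (le_max_right S 0)
  have hr0 : 0 ≤ Real.sqrt (max S 0) := Real.sqrt_nonneg _
  exact h (x,y,z) (by nlinarith [sq_abs z, sq_nonneg y, le_max_left S 0])

theorem fiber_q_integrable {F : ℝ×ℝ×ℝ → ℝ} {S : ℝ} (hF : Continuous F)
    (h : ∀ p : ℝ×ℝ×ℝ, S ≤ p.2.1^2 + p.2.2^2 → F p = 0) (a : ℝ) :
    Integrable (fun q : ℝ×ℝ => F (a,q)) := by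
  apply (hF.comp (continuous_const.prodMk continuous_id)).integrable_of_hasCompactSupport
  exact HasCompactSupport.intro (isCompact_closedBall _ _)
    (fun q hq => vanish_off_ball h (a,q) hq)

theorem integral_x {F f : ℝ×ℝ×ℝ → ℝ} {S L : ℝ} (hL : 0 < L)
    (hF : Continuous F) (hf : Continuous f)
    (hFv : ∀ p : ℝ×ℝ×ℝ, S ≤ p.2.1^2 + p.2.2^2 → F p = 0)
    (hfv : ∀ p : ℝ×ℝ×ℝ, S ≤ p.2.1^2 + p.2.2^2 → f p = 0)
    (hd : ∀ (x : ℝ) (q : ℝ×ℝ), HasDerivAt (fun x' => F (x', q)) (f (x, q)) x) :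
    ∫ p in Set.Ioo 0 L ×ˢ (Set.univ : Set (ℝ×ℝ)), f p
      = (∫ q : ℝ×ℝ, F (L, q)) - ∫ q : ℝ×ℝ, F (0, q) := by
  have hint : IntegrableOn f (Set.Ioo 0 L ×ˢ (Set.univ : Set (ℝ×ℝ))) :=
    integrableOn_omega hf hfv
  rw [Measure.volume_eq_prod ℝ (ℝ×ℝ)] at hint ⊢
  rw [← Measure.prod_restrict, Measure.restrict_univ]
  have hint2 : Integrable f ((volume.restrict (Set.Ioo 0 L)).prod
      ((volume : Measure (ℝ×ℝ)).restrict Set.univ)) := by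
    rw [Measure.prod_restrict]; exact hint
  rw [Measure.restrict_univ] at hint2
  rw [integral_prod_symm f hint2]
  have hFTC : ∀ q : ℝ×ℝ, (∫ x in Set.Ioo 0 L, f (x,q)) = F (L,q) - F (0,q) := by
    intro q
    rw [← integral_Ioc_eq_integral_Ioo, ← intervalIntegral.integral_of_le hL.le]
    exact intervalIntegral.integral_eq_sub_of_hasDerivAt (fun x _ => hd x q)
      ((hf.comp (continuous_id.prodMk continuous_const)).intervalIntegrable _ _)
  simp only [hFTC]
  exact integral_sub (fiber_q_integrable hF hFv L) (fiber_q_integrable hF hFv 0)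

theorem integral_y {F f : ℝ×ℝ×ℝ → ℝ} {S L : ℝ}
    (hf : Continuous f)
    (hFv : ∀ p : ℝ×ℝ×ℝ, S ≤ p.2.1^2 + p.2.2^2 → F p = 0)
    (hfv : ∀ p : ℝ×ℝ×ℝ, S ≤ p.2.1^2 + p.2.2^2 → f p = 0)
    (hd : ∀ x y z : ℝ, HasDerivAt (fun y' => F (x,y',z)) (f (x,y,z)) y) :
    ∫ p in Set.Ioo 0 L ×ˢ (Set.univ : Set (ℝ×ℝ)), f p = 0 := by
  have hint : IntegrableOn f (Set.Ioo 0 L ×ˢ (Set.univ : Set (ℝ×ℝ))) :=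
    integrableOn_omega hf hfv
  rw [Measure.volume_eq_prod ℝ (ℝ×ℝ)] at hint ⊢
  rw [setIntegral_prod f hint]
  have hinner : ∀ x : ℝ, (∫ q in (Set.univ : Set (ℝ×ℝ)), f (x, q)) = 0 := by
    intro x
    rw [Measure.restrict_univ]
    have hg : Integrable (fun q : ℝ×ℝ => f (x,q)) := fiber_q_integrable hf hfv x
    rw [Measure.volume_eq_prod ℝ ℝ] at hg ⊢
    rw [integral_prod_symm _ hg]
    have hz : ∀ z : ℝ, (∫ y : ℝ, f (x,y,z)) = 0 := by
      intro z
      have hdiff : Differentiable ℝ (fun y => F (x,y,z)) :=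
        fun y => (hd x y z).differentiableAt
      have hderiv : deriv (fun y => F (x,y,z)) = fun y => f (x,y,z) :=
        funext fun y => (hd x y z).deriv
      have hc1 : ContDiff ℝ 1 (fun y => F (x,y,z)) := by
        rw [contDiff_one_iff_deriv]
        refine ⟨hdiff, ?_⟩
        rw [hderiv]
        exact hf.comp (by fun_prop)
      rw [← hderiv]
      exact integral_deriv_zero hc1 (fiber_y_support hFv x z)
    simp only [hz]
    simp
  simp only [hinner]
  simp

theorem integral_z {F f : ℝ×ℝ×ℝ → ℝ} {S L : ℝ}
    (hf : Continuous f)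
    (hFv : ∀ p : ℝ×ℝ×ℝ, S ≤ p.2.1^2 + p.2.2^2 → F p = 0)
    (hfv : ∀ p : ℝ×ℝ×ℝ, S ≤ p.2.1^2 + p.2.2^2 → f p = 0)
    (hd : ∀ x y z : ℝ, HasDerivAt (fun z' => F (x,y,z')) (f (x,y,z)) z) :
    ∫ p in Set.Ioo 0 L ×ˢ (Set.univ : Set (ℝ×ℝ)), f p = 0 := by
  have hint : IntegrableOn f (Set.Ioo 0 L ×ˢ (Set.univ : Set (ℝ×ℝ))) :=
    integrableOn_omega hf hfv
  rw [Measure.volume_eq_prod ℝ (ℝ×ℝ)] at hint ⊢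
  rw [setIntegral_prod f hint]
  have hinner : ∀ x : ℝ, (∫ q in (Set.univ : Set (ℝ×ℝ)), f (x, q)) = 0 := by
    intro x
    rw [Measure.restrict_univ]
    have hg : Integrable (fun q : ℝ×ℝ => f (x,q)) := fiber_q_integrable hf hfv x
    rw [Measure.volume_eq_prod ℝ ℝ] at hg ⊢
    rw [integral_prod _ hg]
    have hy : ∀ y : ℝ, (∫ z : ℝ, f (x,y,z)) = 0 := by
      intro y
      have hdiff : Differentiable ℝ (fun z => F (x,y,z)) :=
        fun z => (hd x y z).differentiableAt
      have hderiv : deriv (fun z => F (x,y,z)) = fun z => f (x,y,z) :=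
        funext fun z => (hd x y z).deriv
      have hc1 : ContDiff ℝ 1 (fun z => F (x,y,z)) := by
        rw [contDiff_one_iff_deriv]
        refine ⟨hdiff, ?_⟩
        rw [hderiv]
        exact hf.comp (by fun_prop)
      rw [← hderiv]
      exact integral_deriv_zero hc1 (fiber_z_support hFv x y)
    simp only [hy]
    simp
  simp only [hinner]
  simp


noncomputable def AA (U : ℝ×ℝ×ℝ → ℝ) : ℝ×ℝ×ℝ → ℝ := DD E2 (DD E2 U)
noncomputable def BB (U : ℝ×ℝ×ℝ → ℝ) : ℝ×ℝ×ℝ → ℝ := DD E2 (DD E3 U)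
noncomputable def CC (U : ℝ×ℝ×ℝ → ℝ) : ℝ×ℝ×ℝ → ℝ := DD E3 (DD E3 U)
noncomputable def TT (U : ℝ×ℝ×ℝ → ℝ) : ℝ×ℝ×ℝ → ℝ := DD E1 (DD E1 (DD E1 U))

noncomputable def G1 (W : ℝ×ℝ×ℝ → ℝ) : ℝ×ℝ×ℝ → ℝ := fun p =>
  2*(1+p.1) * DD E1 (DD E1 W) p * W p - 2 * (DD E1 W p * W p) - (1+p.1) * (DD E1 W p)^2

noncomputable def g1 (W : ℝ×ℝ×ℝ → ℝ) : ℝ×ℝ×ℝ → ℝ := fun p =>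
  2*(1+p.1) * DD E1 (DD E1 (DD E1 W)) p * W p - 3 * (DD E1 W p)^2

noncomputable def FF1 (U : ℝ×ℝ×ℝ → ℝ) : ℝ×ℝ×ℝ → ℝ := fun p =>
  G1 (AA U) p + G1 (BB U) p + G1 (CC U) p

noncomputable def ff1 (U : ℝ×ℝ×ℝ → ℝ) : ℝ×ℝ×ℝ → ℝ := fun p =>
  g1 (AA U) p + g1 (BB U) p + g1 (CC U) p

noncomputable def FF2 (U : ℝ×ℝ×ℝ → ℝ) : ℝ×ℝ×ℝ → ℝ := fun p =>
  2*(1+p.1) * (TT U p * DD E2 (AA U) p - DD E2 (TT U) p * AA U p + TT U p * DD E3 (BB U) p)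

noncomputable def ff2 (U : ℝ×ℝ×ℝ → ℝ) : ℝ×ℝ×ℝ → ℝ := fun p =>
  2*(1+p.1) * (TT U p * DD E2 (DD E2 (AA U)) p - DD E2 (DD E2 (TT U)) p * AA U p
    + DD E2 (TT U) p * DD E3 (BB U) p + TT U p * DD E2 (DD E3 (BB U)) p)

noncomputable def FF3 (U : ℝ×ℝ×ℝ → ℝ) : ℝ×ℝ×ℝ → ℝ := fun p =>
  2*(1+p.1) * (-(DD E2 (TT U) p * BB U p) + TT U p * DD E3 (CC U) p - DD E3 (TT U) p * CC U p)

noncomputable def ff3 (U : ℝ×ℝ×ℝ → ℝ) : ℝ×ℝ×ℝ → ℝ := fun p =>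
  2*(1+p.1) * (-(DD E3 (DD E2 (TT U)) p * BB U p) - DD E2 (TT U) p * DD E3 (BB U) p
    + TT U p * DD E3 (DD E3 (CC U)) p - DD E3 (DD E3 (TT U)) p * CC U p)

theorem hdG1 {W : ℝ×ℝ×ℝ → ℝ} (hW : ContDiff ℝ (⊤ : ℕ∞) W) (x : ℝ) (q : ℝ×ℝ) :
    HasDerivAt (fun x' => G1 W (x',q)) (g1 W (x,q)) x := by
  have hW0 := diff_smooth hW
  have hW1 := diff_smooth (smooth_DD E1 hW)
  have hW2 := diff_smooth (smooth_DD E1 (smooth_DD E1 hW))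
  have h2x : HasDerivAt (fun x' : ℝ => 2*(1+x')) 2 x := by
    simpa using ((hasDerivAt_id x).const_add (1:ℝ)).const_mul (2:ℝ)
  have h1x : HasDerivAt (fun x' : ℝ => 1+x') 1 x := (hasDerivAt_id x).const_add (1:ℝ)
  have t1 := (h2x.mul (hdx hW2 x q)).mul (hdx hW0 x q)
  have t2 := ((hdx hW1 x q).mul (hdx hW0 x q)).const_mul (2:ℝ)
  have t3 := h1x.mul ((hdx hW1 x q).pow 2)
  have h := (t1.sub t2).sub t3
  have hval : g1 W (x,q) =
      (2 * DD E1 (DD E1 W) (x,q) + 2*(1+x) * DD E1 (DD E1 (DD E1 W)) (x,q)) * W (x,q)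
        + 2*(1+x) * DD E1 (DD E1 W) (x,q) * DD E1 W (x,q)
      - 2 * (DD E1 (DD E1 W) (x,q) * W (x,q) + DD E1 W (x,q) * DD E1 W (x,q))
      - (1 * (DD E1 W (x,q))^2
          + (1+x) * ((2:ℕ) * DD E1 W (x,q) ^ (2-1) * DD E1 (DD E1 W) (x,q))) := by
    simp only [g1]
    push_cast
    ring
  rw [hval]
  exact h

theorem hd_FF1 {U : ℝ×ℝ×ℝ → ℝ} (hU : ContDiff ℝ (⊤ : ℕ∞) U) (x : ℝ) (q : ℝ×ℝ) :
    HasDerivAt (fun x' => FF1 U (x',q)) (ff1 U (x,q)) x := by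
  have hA : ContDiff ℝ (⊤ : ℕ∞) (AA U) := smooth_DD E2 (smooth_DD E2 hU)
  have hB : ContDiff ℝ (⊤ : ℕ∞) (BB U) := smooth_DD E2 (smooth_DD E3 hU)
  have hC : ContDiff ℝ (⊤ : ℕ∞) (CC U) := smooth_DD E3 (smooth_DD E3 hU)
  exact ((hdG1 hA x q).add (hdG1 hB x q)).add (hdG1 hC x q)

theorem hd_FF2 {U : ℝ×ℝ×ℝ → ℝ} (hU : ContDiff ℝ (⊤ : ℕ∞) U) (x y z : ℝ) :
    HasDerivAt (fun y' => FF2 U (x,y',z)) (ff2 U (x,y,z)) y := by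
  have hT := diff_smooth (smooth_DD E1 (smooth_DD E1 (smooth_DD E1 hU)) : ContDiff ℝ (⊤ : ℕ∞) (TT U))
  have hA := diff_smooth (smooth_DD E2 (smooth_DD E2 hU) : ContDiff ℝ (⊤ : ℕ∞) (AA U))
  have hD2A := diff_smooth (smooth_DD E2 (smooth_DD E2 (smooth_DD E2 hU)) :
    ContDiff ℝ (⊤ : ℕ∞) (DD E2 (AA U)))
  have hD2T := diff_smooth (smooth_DD E2 (smooth_DD E1 (smooth_DD E1 (smooth_DD E1 hU))) :
    ContDiff ℝ (⊤ : ℕ∞) (DD E2 (TT U)))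
  have hD3B := diff_smooth (smooth_DD E3 (smooth_DD E2 (smooth_DD E3 hU)) :
    ContDiff ℝ (⊤ : ℕ∞) (DD E3 (BB U)))
  have inner := (((hdy hT x y z).mul (hdy hD2A x y z)).sub
    ((hdy hD2T x y z).mul (hdy hA x y z))).add ((hdy hT x y z).mul (hdy hD3B x y z))
  have h := inner.const_mul (2*(1+x))
  have hval : ff2 U (x,y,z) = 2*(1+x) *
      ((DD E2 (TT U) (x,y,z) * DD E2 (AA U) (x,y,z)
          + TT U (x,y,z) * DD E2 (DD E2 (AA U)) (x,y,z))
        - (DD E2 (DD E2 (TT U)) (x,y,z) * AA U (x,y,z)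
          + DD E2 (TT U) (x,y,z) * DD E2 (AA U) (x,y,z))
        + (DD E2 (TT U) (x,y,z) * DD E3 (BB U) (x,y,z)
          + TT U (x,y,z) * DD E2 (DD E3 (BB U)) (x,y,z))) := by
    simp only [ff2]; ring
  rw [hval]
  exact h

theorem hd_FF3 {U : ℝ×ℝ×ℝ → ℝ} (hU : ContDiff ℝ (⊤ : ℕ∞) U) (x y z : ℝ) :
    HasDerivAt (fun z' => FF3 U (x,y,z')) (ff3 U (x,y,z)) z := by
  have hT := diff_smooth (smooth_DD E1 (smooth_DD E1 (smooth_DD E1 hU)) : ContDiff ℝ (⊤ : ℕ∞) (TT U))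
  have hB := diff_smooth (smooth_DD E2 (smooth_DD E3 hU) : ContDiff ℝ (⊤ : ℕ∞) (BB U))
  have hC := diff_smooth (smooth_DD E3 (smooth_DD E3 hU) : ContDiff ℝ (⊤ : ℕ∞) (CC U))
  have hD2T := diff_smooth (smooth_DD E2 (smooth_DD E1 (smooth_DD E1 (smooth_DD E1 hU))) :
    ContDiff ℝ (⊤ : ℕ∞) (DD E2 (TT U)))
  have hD3T := diff_smooth (smooth_DD E3 (smooth_DD E1 (smooth_DD E1 (smooth_DD E1 hU))) :
    ContDiff ℝ (⊤ : ℕ∞) (DD E3 (TT U)))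
  have hD3C := diff_smooth (smooth_DD E3 (smooth_DD E3 (smooth_DD E3 hU)) :
    ContDiff ℝ (⊤ : ℕ∞) (DD E3 (CC U)))
  have inner := ((((hdz hD2T x y z).mul (hdz hB x y z)).neg).add
    ((hdz hT x y z).mul (hdz hD3C x y z))).sub ((hdz hD3T x y z).mul (hdz hC x y z))
  have h := inner.const_mul (2*(1+x))
  have hval : ff3 U (x,y,z) = 2*(1+x) *
      (-(DD E3 (DD E2 (TT U)) (x,y,z) * BB U (x,y,z)
          + DD E2 (TT U) (x,y,z) * DD E3 (BB U) (x,y,z))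
        + (DD E3 (TT U) (x,y,z) * DD E3 (CC U) (x,y,z)
          + TT U (x,y,z) * DD E3 (DD E3 (CC U)) (x,y,z))
        - (DD E3 (DD E3 (TT U)) (x,y,z) * CC U (x,y,z)
          + DD E3 (TT U) (x,y,z) * DD E3 (CC U) (x,y,z))) := by
    simp only [ff3]; ring
  rw [hval]
  exact h

theorem main_id {U : ℝ×ℝ×ℝ → ℝ} (hU : ContDiff ℝ (⊤ : ℕ∞) U) (p : ℝ×ℝ×ℝ) :
    2*(1+p.1) * TT U p * (DD E2 (DD E2 (DD E2 (DD E2 U))) p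
        + DD E2 (DD E2 (DD E3 (DD E3 U))) p + DD E3 (DD E3 (DD E3 (DD E3 U))) p)
      = 3*((DD E1 (AA U) p)^2 + (DD E1 (BB U) p)^2 + (DD E1 (CC U) p)^2)
        + (ff1 U p + ff2 U p + ff3 U p) := by
  have hc1 : DD E2 (DD E2 (TT U)) = DD E1 (DD E1 (DD E1 (AA U))) := by
    show DD E2 (DD E2 (DD E1 (DD E1 (DD E1 U)))) = DD E1 (DD E1 (DD E1 (DD E2 (DD E2 U))))
    rw [comm3 E2 hU, comm3 E2 (smooth_DD E2 hU)]
  have hc2 : DD E3 (DD E2 (TT U)) = DD E1 (DD E1 (DD E1 (BB U))) := by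
    show DD E3 (DD E2 (DD E1 (DD E1 (DD E1 U)))) = DD E1 (DD E1 (DD E1 (DD E2 (DD E3 U))))
    rw [comm3 E2 hU, comm3 E3 (smooth_DD E2 hU), DD_comm E3 E2 hU]
  have hc3 : DD E3 (DD E3 (TT U)) = DD E1 (DD E1 (DD E1 (CC U))) := by
    show DD E3 (DD E3 (DD E1 (DD E1 (DD E1 U)))) = DD E1 (DD E1 (DD E1 (DD E3 (DD E3 U))))
    rw [comm3 E3 hU, comm3 E3 (smooth_DD E3 hU)]
  have hc4 : DD E2 (DD E3 (BB U)) = DD E2 (DD E2 (DD E3 (DD E3 U))) := by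
    show DD E2 (DD E3 (DD E2 (DD E3 U))) = DD E2 (DD E2 (DD E3 (DD E3 U)))
    rw [DD_comm E3 E2 (smooth_DD E3 hU)]
  have hc5 : DD E2 (DD E2 (AA U)) = DD E2 (DD E2 (DD E2 (DD E2 U))) := rfl
  have hc6 : DD E3 (DD E3 (CC U)) = DD E3 (DD E3 (DD E3 (DD E3 U))) := rfl
  simp only [ff1, ff2, ff3, g1]
  rw [hc1, hc2, hc3, hc4, hc5, hc6]
  ring


theorem FF1_at_L {U : ℝ×ℝ×ℝ → ℝ} (hU : ContDiff ℝ (⊤ : ℕ∞) U) {L : ℝ}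
    (hUL : ∀ y z, U (L,y,z) = 0) (hD1L : ∀ y z, DD E1 U (L,y,z) = 0) :
    ∀ q : ℝ×ℝ, FF1 U (L,q) = 0 := by
  have hA1 : DD E1 (AA U) = DD E2 (DD E2 (DD E1 U)) := by
    show DD E1 (DD E2 (DD E2 U)) = _
    rw [DD_comm E1 E2 (smooth_DD E2 hU), DD_comm E1 E2 hU]
  have hB1 : DD E1 (BB U) = DD E2 (DD E3 (DD E1 U)) := by
    show DD E1 (DD E2 (DD E3 U)) = _
    rw [DD_comm E1 E2 (smooth_DD E3 hU), DD_comm E1 E3 hU]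
  have hC1 : DD E1 (CC U) = DD E3 (DD E3 (DD E1 U)) := by
    show DD E1 (DD E3 (DD E3 U)) = _
    rw [DD_comm E1 E3 (smooth_DD E3 hU), DD_comm E1 E3 hU]
  have hAL : ∀ y z, AA U (L,y,z) = 0 :=
    bdry2 (diff_smooth (smooth_DD E2 hU)) (bdry2 (diff_smooth hU) hUL)
  have hBL : ∀ y z, BB U (L,y,z) = 0 :=
    bdry2 (diff_smooth (smooth_DD E3 hU)) (bdry3 (diff_smooth hU) hUL)
  have hCL : ∀ y z, CC U (L,y,z) = 0 :=
    bdry3 (diff_smooth (smooth_DD E3 hU)) (bdry3 (diff_smooth hU) hUL)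
  have hA1L : ∀ y z, DD E1 (AA U) (L,y,z) = 0 := by
    intro y z; rw [hA1]
    exact bdry2 (diff_smooth (smooth_DD E2 (smooth_DD E1 hU)))
      (bdry2 (diff_smooth (smooth_DD E1 hU)) hD1L) y z
  have hB1L : ∀ y z, DD E1 (BB U) (L,y,z) = 0 := by
    intro y z; rw [hB1]
    exact bdry2 (diff_smooth (smooth_DD E3 (smooth_DD E1 hU)))
      (bdry3 (diff_smooth (smooth_DD E1 hU)) hD1L) y z
  have hC1L : ∀ y z, DD E1 (CC U) (L,y,z) = 0 := by
    intro y z; rw [hC1]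
    exact bdry3 (diff_smooth (smooth_DD E3 (smooth_DD E1 hU)))
      (bdry3 (diff_smooth (smooth_DD E1 hU)) hD1L) y z
  rintro ⟨y,z⟩
  simp only [FF1, G1]
  rw [hAL y z, hBL y z, hCL y z, hA1L y z, hB1L y z, hC1L y z]
  ring

theorem FF1_at_0 {U : ℝ×ℝ×ℝ → ℝ} (hU : ContDiff ℝ (⊤ : ℕ∞) U)
    (hU0 : ∀ y z, U (0,y,z) = 0) :
    ∀ q : ℝ×ℝ, FF1 U (0,q) =
      -((DD E1 (AA U) (0,q))^2 + (DD E1 (BB U) (0,q))^2 + (DD E1 (CC U) (0,q))^2) := by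
  have hA0 : ∀ y z, AA U (0,y,z) = 0 :=
    bdry2 (diff_smooth (smooth_DD E2 hU)) (bdry2 (diff_smooth hU) hU0)
  have hB0 : ∀ y z, BB U (0,y,z) = 0 :=
    bdry2 (diff_smooth (smooth_DD E3 hU)) (bdry3 (diff_smooth hU) hU0)
  have hC0 : ∀ y z, CC U (0,y,z) = 0 :=
    bdry3 (diff_smooth (smooth_DD E3 hU)) (bdry3 (diff_smooth hU) hU0)
  rintro ⟨y,z⟩
  simp only [FF1, G1]
  rw [hA0 y z, hB0 y z, hC0 y z]
  ring

section Vanish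

variable {U : ℝ×ℝ×ℝ → ℝ} {S : ℝ}

theorem van1 (hU : ContDiff ℝ (⊤ : ℕ∞) U) (hv : ∀ p : ℝ×ℝ×ℝ, S ≤ p.2.1^2+p.2.2^2 → U p = 0)
    (a : ℝ×ℝ×ℝ) : ∀ p : ℝ×ℝ×ℝ, S+1 ≤ p.2.1^2+p.2.2^2 → DD a U p = 0 :=
  vanish_DD (diff_smooth hU) hv a

theorem van2 (hU : ContDiff ℝ (⊤ : ℕ∞) U) (hv : ∀ p : ℝ×ℝ×ℝ, S ≤ p.2.1^2+p.2.2^2 → U p = 0)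
    (a b : ℝ×ℝ×ℝ) : ∀ p : ℝ×ℝ×ℝ, S+1+1 ≤ p.2.1^2+p.2.2^2 → DD a (DD b U) p = 0 :=
  vanish_DD (diff_smooth (smooth_DD b hU)) (van1 hU hv b) a

theorem van3 (hU : ContDiff ℝ (⊤ : ℕ∞) U) (hv : ∀ p : ℝ×ℝ×ℝ, S ≤ p.2.1^2+p.2.2^2 → U p = 0)
    (a b c : ℝ×ℝ×ℝ) : ∀ p : ℝ×ℝ×ℝ, S+1+1+1 ≤ p.2.1^2+p.2.2^2 → DD a (DD b (DD c U)) p = 0 :=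
  vanish_DD (diff_smooth (smooth_DD b (smooth_DD c hU))) (van2 hU hv b c) a

theorem van4 (hU : ContDiff ℝ (⊤ : ℕ∞) U) (hv : ∀ p : ℝ×ℝ×ℝ, S ≤ p.2.1^2+p.2.2^2 → U p = 0)
    (a b c d : ℝ×ℝ×ℝ) :
    ∀ p : ℝ×ℝ×ℝ, S+1+1+1+1 ≤ p.2.1^2+p.2.2^2 → DD a (DD b (DD c (DD d U))) p = 0 :=
  vanish_DD (diff_smooth (smooth_DD b (smooth_DD c (smooth_DD d hU)))) (van3 hU hv b c d) a

theorem van5 (hU : ContDiff ℝ (⊤ : ℕ∞) U) (hv : ∀ p : ℝ×ℝ×ℝ, S ≤ p.2.1^2+p.2.2^2 → U p = 0)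
    (a b c d e : ℝ×ℝ×ℝ) :
    ∀ p : ℝ×ℝ×ℝ, S+1+1+1+1+1 ≤ p.2.1^2+p.2.2^2 → DD a (DD b (DD c (DD d (DD e U)))) p = 0 :=
  vanish_DD (diff_smooth (smooth_DD b (smooth_DD c (smooth_DD d (smooth_DD e hU)))))
    (van4 hU hv b c d e) a

theorem vanish_FF1 (hU : ContDiff ℝ (⊤ : ℕ∞) U) (hv : ∀ p : ℝ×ℝ×ℝ, S ≤ p.2.1^2+p.2.2^2 → U p = 0) : ∀ p : ℝ×ℝ×ℝ, S+1+1+1+1+1 ≤ p.2.1^2+p.2.2^2 → FF1 U p = 0 := by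
  intro p hp
  simp only [FF1, G1, AA, BB, CC]
  rw [van4 hU hv E1 E1 E2 E2 p (by linarith), van2 hU hv E2 E2 p (by linarith),
    van3 hU hv E1 E2 E2 p (by linarith), van4 hU hv E1 E1 E2 E3 p (by linarith),
    van2 hU hv E2 E3 p (by linarith), van3 hU hv E1 E2 E3 p (by linarith),
    van4 hU hv E1 E1 E3 E3 p (by linarith), van2 hU hv E3 E3 p (by linarith),
    van3 hU hv E1 E3 E3 p (by linarith)]
  ring

theorem vanish_ff1 (hU : ContDiff ℝ (⊤ : ℕ∞) U) (hv : ∀ p : ℝ×ℝ×ℝ, S ≤ p.2.1^2+p.2.2^2 → U p = 0) : ∀ p : ℝ×ℝ×ℝ, S+1+1+1+1+1 ≤ p.2.1^2+p.2.2^2 → ff1 U p = 0 := by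
  intro p hp
  simp only [ff1, g1, AA, BB, CC]
  rw [van5 hU hv E1 E1 E1 E2 E2 p (by linarith), van2 hU hv E2 E2 p (by linarith),
    van3 hU hv E1 E2 E2 p (by linarith), van5 hU hv E1 E1 E1 E2 E3 p (by linarith),
    van2 hU hv E2 E3 p (by linarith), van3 hU hv E1 E2 E3 p (by linarith),
    van5 hU hv E1 E1 E1 E3 E3 p (by linarith), van2 hU hv E3 E3 p (by linarith),
    van3 hU hv E1 E3 E3 p (by linarith)]
  ring

theorem vanish_FF2 (hU : ContDiff ℝ (⊤ : ℕ∞) U) (hv : ∀ p : ℝ×ℝ×ℝ, S ≤ p.2.1^2+p.2.2^2 → U p = 0) : ∀ p : ℝ×ℝ×ℝ, S+1+1+1+1+1 ≤ p.2.1^2+p.2.2^2 → FF2 U p = 0 := by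
  intro p hp
  simp only [FF2, AA, BB, TT]
  rw [van3 hU hv E1 E1 E1 p (by linarith), van3 hU hv E2 E2 E2 p (by linarith),
    van4 hU hv E2 E1 E1 E1 p (by linarith), van2 hU hv E2 E2 p (by linarith),
    van3 hU hv E3 E2 E3 p (by linarith)]
  ring

theorem vanish_ff2 (hU : ContDiff ℝ (⊤ : ℕ∞) U) (hv : ∀ p : ℝ×ℝ×ℝ, S ≤ p.2.1^2+p.2.2^2 → U p = 0) : ∀ p : ℝ×ℝ×ℝ, S+1+1+1+1+1 ≤ p.2.1^2+p.2.2^2 → ff2 U p = 0 := by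
  intro p hp
  simp only [ff2, AA, BB, TT]
  rw [van3 hU hv E1 E1 E1 p (by linarith), van4 hU hv E2 E2 E2 E2 p (by linarith),
    van5 hU hv E2 E2 E1 E1 E1 p (by linarith), van2 hU hv E2 E2 p (by linarith),
    van4 hU hv E2 E1 E1 E1 p (by linarith), van3 hU hv E3 E2 E3 p (by linarith),
    van4 hU hv E2 E3 E2 E3 p (by linarith)]
  ring

theorem vanish_FF3 (hU : ContDiff ℝ (⊤ : ℕ∞) U) (hv : ∀ p : ℝ×ℝ×ℝ, S ≤ p.2.1^2+p.2.2^2 → U p = 0) : ∀ p : ℝ×ℝ×ℝ, S+1+1+1+1+1 ≤ p.2.1^2+p.2.2^2 → FF3 U p = 0 := by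
  intro p hp
  simp only [FF3, BB, CC, TT]
  rw [van4 hU hv E2 E1 E1 E1 p (by linarith), van2 hU hv E2 E3 p (by linarith),
    van3 hU hv E1 E1 E1 p (by linarith), van3 hU hv E3 E3 E3 p (by linarith),
    van4 hU hv E3 E1 E1 E1 p (by linarith), van2 hU hv E3 E3 p (by linarith)]
  ring

theorem vanish_ff3 (hU : ContDiff ℝ (⊤ : ℕ∞) U) (hv : ∀ p : ℝ×ℝ×ℝ, S ≤ p.2.1^2+p.2.2^2 → U p = 0) : ∀ p : ℝ×ℝ×ℝ, S+1+1+1+1+1 ≤ p.2.1^2+p.2.2^2 → ff3 U p = 0 := by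
  intro p hp
  simp only [ff3, BB, CC, TT]
  rw [van5 hU hv E3 E2 E1 E1 E1 p (by linarith), van2 hU hv E2 E3 p (by linarith),
    van4 hU hv E2 E1 E1 E1 p (by linarith), van3 hU hv E3 E2 E3 p (by linarith),
    van3 hU hv E1 E1 E1 p (by linarith), van4 hU hv E3 E3 E3 E3 p (by linarith),
    van5 hU hv E3 E3 E1 E1 E1 p (by linarith), van2 hU hv E3 E3 p (by linarith)]
  ring

end Vanish

section Cont

variable {U : ℝ×ℝ×ℝ → ℝ}

theorem cont_FF1 (hU : ContDiff ℝ (⊤ : ℕ∞) U) : Continuous (FF1 U) := by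
  have h1 : Continuous (AA U) := (smooth_DD E2 (smooth_DD E2 hU)).continuous
  have h2 : Continuous (BB U) := (smooth_DD E2 (smooth_DD E3 hU)).continuous
  have h3 : Continuous (CC U) := (smooth_DD E3 (smooth_DD E3 hU)).continuous
  have h4 : Continuous (DD E1 (AA U)) :=
    (smooth_DD E1 (smooth_DD E2 (smooth_DD E2 hU))).continuous
  have h5 : Continuous (DD E1 (BB U)) :=
    (smooth_DD E1 (smooth_DD E2 (smooth_DD E3 hU))).continuous
  have h6 : Continuous (DD E1 (CC U)) :=
    (smooth_DD E1 (smooth_DD E3 (smooth_DD E3 hU))).continuous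
  have h7 : Continuous (DD E1 (DD E1 (AA U))) :=
    (smooth_DD E1 (smooth_DD E1 (smooth_DD E2 (smooth_DD E2 hU)))).continuous
  have h8 : Continuous (DD E1 (DD E1 (BB U))) :=
    (smooth_DD E1 (smooth_DD E1 (smooth_DD E2 (smooth_DD E3 hU)))).continuous
  have h9 : Continuous (DD E1 (DD E1 (CC U))) :=
    (smooth_DD E1 (smooth_DD E1 (smooth_DD E3 (smooth_DD E3 hU)))).continuous
  unfold FF1 G1
  fun_prop

theorem cont_ff1 (hU : ContDiff ℝ (⊤ : ℕ∞) U) : Continuous (ff1 U) := by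
  have h1 : Continuous (AA U) := (smooth_DD E2 (smooth_DD E2 hU)).continuous
  have h2 : Continuous (BB U) := (smooth_DD E2 (smooth_DD E3 hU)).continuous
  have h3 : Continuous (CC U) := (smooth_DD E3 (smooth_DD E3 hU)).continuous
  have h4 : Continuous (DD E1 (AA U)) :=
    (smooth_DD E1 (smooth_DD E2 (smooth_DD E2 hU))).continuous
  have h5 : Continuous (DD E1 (BB U)) :=
    (smooth_DD E1 (smooth_DD E2 (smooth_DD E3 hU))).continuous
  have h6 : Continuous (DD E1 (CC U)) :=
    (smooth_DD E1 (smooth_DD E3 (smooth_DD E3 hU))).continuous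
  have h7 : Continuous (DD E1 (DD E1 (DD E1 (AA U)))) :=
    (smooth_DD E1 (smooth_DD E1 (smooth_DD E1 (smooth_DD E2 (smooth_DD E2 hU))))).continuous
  have h8 : Continuous (DD E1 (DD E1 (DD E1 (BB U)))) :=
    (smooth_DD E1 (smooth_DD E1 (smooth_DD E1 (smooth_DD E2 (smooth_DD E3 hU))))).continuous
  have h9 : Continuous (DD E1 (DD E1 (DD E1 (CC U)))) :=
    (smooth_DD E1 (smooth_DD E1 (smooth_DD E1 (smooth_DD E3 (smooth_DD E3 hU))))).continuous
  unfold ff1 g1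
  fun_prop

theorem cont_ff2 (hU : ContDiff ℝ (⊤ : ℕ∞) U) : Continuous (ff2 U) := by
  have h1 : Continuous (TT U) := (smooth_DD E1 (smooth_DD E1 (smooth_DD E1 hU))).continuous
  have h2 : Continuous (DD E2 (DD E2 (AA U))) :=
    (smooth_DD E2 (smooth_DD E2 (smooth_DD E2 (smooth_DD E2 hU)))).continuous
  have h3 : Continuous (DD E2 (DD E2 (TT U))) :=
    (smooth_DD E2 (smooth_DD E2 (smooth_DD E1 (smooth_DD E1 (smooth_DD E1 hU))))).continuous
  have h4 : Continuous (AA U) := (smooth_DD E2 (smooth_DD E2 hU)).continuous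
  have h5 : Continuous (DD E2 (TT U)) :=
    (smooth_DD E2 (smooth_DD E1 (smooth_DD E1 (smooth_DD E1 hU)))).continuous
  have h6 : Continuous (DD E3 (BB U)) :=
    (smooth_DD E3 (smooth_DD E2 (smooth_DD E3 hU))).continuous
  have h7 : Continuous (DD E2 (DD E3 (BB U))) :=
    (smooth_DD E2 (smooth_DD E3 (smooth_DD E2 (smooth_DD E3 hU)))).continuous
  unfold ff2
  fun_prop

theorem cont_ff3 (hU : ContDiff ℝ (⊤ : ℕ∞) U) : Continuous (ff3 U) := by
  have h1 : Continuous (TT U) := (smooth_DD E1 (smooth_DD E1 (smooth_DD E1 hU))).continuous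
  have h2 : Continuous (DD E3 (DD E2 (TT U))) :=
    (smooth_DD E3 (smooth_DD E2 (smooth_DD E1 (smooth_DD E1 (smooth_DD E1 hU))))).continuous
  have h3 : Continuous (BB U) := (smooth_DD E2 (smooth_DD E3 hU)).continuous
  have h4 : Continuous (DD E2 (TT U)) :=
    (smooth_DD E2 (smooth_DD E1 (smooth_DD E1 (smooth_DD E1 hU)))).continuous
  have h5 : Continuous (DD E3 (BB U)) :=
    (smooth_DD E3 (smooth_DD E2 (smooth_DD E3 hU))).continuous
  have h6 : Continuous (DD E3 (DD E3 (CC U))) :=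
    (smooth_DD E3 (smooth_DD E3 (smooth_DD E3 (smooth_DD E3 hU)))).continuous
  have h7 : Continuous (DD E3 (DD E3 (TT U))) :=
    (smooth_DD E3 (smooth_DD E3 (smooth_DD E1 (smooth_DD E1 (smooth_DD E1 hU))))).continuous
  have h8 : Continuous (CC U) := (smooth_DD E3 (smooth_DD E3 hU)).continuous
  unfold ff3
  fun_prop

end Cont

end J3

namespace J3

theorem px_conv {w : ℝ→ℝ→ℝ→ℝ} {G : ℝ×ℝ×ℝ → ℝ} (hG : Differentiable ℝ G)
    (h : ∀ x y z, w x y z = G (x,y,z)) : ∀ x y z, px w x y z = DD E1 G (x,y,z) := by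
  intro x y z
  have h1 : (fun x' => w x' y z) = fun x' => G (x',(y,z)) := funext fun x' => h x' y z
  show deriv (fun x' => w x' y z) x = _
  rw [h1]
  exact (hdx hG x (y,z)).deriv

theorem py_conv {w : ℝ→ℝ→ℝ→ℝ} {G : ℝ×ℝ×ℝ → ℝ} (hG : Differentiable ℝ G)
    (h : ∀ x y z, w x y z = G (x,y,z)) : ∀ x y z, py w x y z = DD E2 G (x,y,z) := by
  intro x y z
  have h1 : (fun y' => w x y' z) = fun y' => G (x,y',z) := funext fun y' => h x y' z
  show deriv (fun y' => w x y' z) y = _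
  rw [h1]
  exact (hdy hG x y z).deriv

theorem pz_conv {w : ℝ→ℝ→ℝ→ℝ} {G : ℝ×ℝ×ℝ → ℝ} (hG : Differentiable ℝ G)
    (h : ∀ x y z, w x y z = G (x,y,z)) : ∀ x y z, pz w x y z = DD E3 G (x,y,z) := by
  intro x y z
  have h1 : (fun z' => w x y z') = fun z' => G (x,y,z') := funext fun z' => h x y z'
  show deriv (fun z' => w x y z') z = _
  rw [h1]
  exact (hdz hG x y z).deriv

end J3

open J3

/-- Identity for the term `J₃` in Estimate VI of the paper. -/
theorem estimateVI_J3_identity (L : ℝ) (hL : 0 < L) (u : ℝ → ℝ → ℝ → ℝ)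
    (hu : Admissible L u) :
    2 * ∫ p in Omega L, (1 + p.1) * px (px (px u)) p.1 p.2.1 p.2.2 *
        (py (py (py (py u))) p.1 p.2.1 p.2.2 + py (py (pz (pz u))) p.1 p.2.1 p.2.2 +
          pz (pz (pz (pz u))) p.1 p.2.1 p.2.2) =
      3 * ((∫ p in Omega L, (px (py (py u)) p.1 p.2.1 p.2.2) ^ 2) +
          (∫ p in Omega L, (px (py (pz u)) p.1 p.2.1 p.2.2) ^ 2) +
          (∫ p in Omega L, (px (pz (pz u)) p.1 p.2.1 p.2.2) ^ 2)) +
        ∫ q : ℝ × ℝ, ((px (py (py u)) 0 q.1 q.2) ^ 2 + (px (py (pz u)) 0 q.1 q.2) ^ 2 +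
          (px (pz (pz u)) 0 q.1 q.2) ^ 2) := by
  obtain ⟨hsm, ⟨R₀, hR₀, hsupp⟩, hu0, huL, hpxL⟩ := hu
  set U : ℝ×ℝ×ℝ → ℝ := fun p => u p.1 p.2.1 p.2.2 with hUdef
  have hU : ContDiff ℝ (⊤ : ℕ∞) U := hsm
  have hUd : Differentiable ℝ U := diff_smooth hU
  set S : ℝ := R₀^2 with hSdef
  have hv : ∀ p : ℝ×ℝ×ℝ, S ≤ p.2.1^2 + p.2.2^2 → U p = 0 :=
    fun p hp => hsupp p.1 p.2.1 p.2.2 hp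
  -- conversion of curried partial derivatives to directional derivatives
  have hcv : ∀ x y z : ℝ, u x y z = U (x,y,z) := fun _ _ _ => rfl
  have cx1 : ∀ x y z, px u x y z = DD E1 U (x,y,z) := px_conv hUd hcv
  have cx2 := px_conv (diff_smooth (smooth_DD E1 hU)) cx1
  have cx3 : ∀ x y z, px (px (px u)) x y z = DD E1 (DD E1 (DD E1 U)) (x,y,z) :=
    px_conv (diff_smooth (smooth_DD E1 (smooth_DD E1 hU))) cx2
  have cy1 := py_conv hUd hcv
  have cy2 := py_conv (diff_smooth (smooth_DD E2 hU)) cy1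
  have cy3 := py_conv (diff_smooth (smooth_DD E2 (smooth_DD E2 hU))) cy2
  have cy4 : ∀ x y z, py (py (py (py u))) x y z
      = DD E2 (DD E2 (DD E2 (DD E2 U))) (x,y,z) :=
    py_conv (diff_smooth (smooth_DD E2 (smooth_DD E2 (smooth_DD E2 hU)))) cy3
  have cz1 := pz_conv hUd hcv
  have cz2 := pz_conv (diff_smooth (smooth_DD E3 hU)) cz1
  have cz3 := pz_conv (diff_smooth (smooth_DD E3 (smooth_DD E3 hU))) cz2
  have cz4 : ∀ x y z, pz (pz (pz (pz u))) x y z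
      = DD E3 (DD E3 (DD E3 (DD E3 U))) (x,y,z) :=
    pz_conv (diff_smooth (smooth_DD E3 (smooth_DD E3 (smooth_DD E3 hU)))) cz3
  have cyz1 := py_conv (diff_smooth (smooth_DD E3 (smooth_DD E3 hU))) cz2
  have cyz2 : ∀ x y z, py (py (pz (pz u))) x y z
      = DD E2 (DD E2 (DD E3 (DD E3 U))) (x,y,z) :=
    py_conv (diff_smooth (smooth_DD E2 (smooth_DD E3 (smooth_DD E3 hU)))) cyz1
  have cA : ∀ x y z, px (py (py u)) x y z = DD E1 (AA U) (x,y,z) :=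
    px_conv (diff_smooth (smooth_DD E2 (smooth_DD E2 hU))) cy2
  have cpzy := py_conv (diff_smooth (smooth_DD E3 hU)) cz1
  have cB : ∀ x y z, px (py (pz u)) x y z = DD E1 (BB U) (x,y,z) :=
    px_conv (diff_smooth (smooth_DD E2 (smooth_DD E3 hU))) cpzy
  have cC : ∀ x y z, px (pz (pz u)) x y z = DD E1 (CC U) (x,y,z) :=
    px_conv (diff_smooth (smooth_DD E3 (smooth_DD E3 hU))) cz2
  -- boundary conditions in uncurried form
  have hULbc : ∀ y z, U (L,y,z) = 0 := fun y z => huL y z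
  have hU0bc : ∀ y z, U (0,y,z) = 0 := fun y z => hu0 y z
  have hD1Lbc : ∀ y z, DD E1 U (L,y,z) = 0 := by
    intro y z
    rw [← cx1 L y z]
    exact hpxL y z
  -- integrability of the square terms
  have iA : IntegrableOn (fun p : ℝ×ℝ×ℝ => (DD E1 (AA U) p)^2)
      (Set.Ioo 0 L ×ˢ (Set.univ : Set (ℝ×ℝ))) :=
    integrableOn_omega ((smooth_DD E1 (smooth_DD E2 (smooth_DD E2 hU))).continuous.pow 2)
      (fun p hp => by
        show (DD E1 (AA U) p)^2 = 0
        rw [show DD E1 (AA U) p = 0 from van3 hU hv E1 E2 E2 p hp]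
        norm_num)
  have iB : IntegrableOn (fun p : ℝ×ℝ×ℝ => (DD E1 (BB U) p)^2)
      (Set.Ioo 0 L ×ˢ (Set.univ : Set (ℝ×ℝ))) :=
    integrableOn_omega ((smooth_DD E1 (smooth_DD E2 (smooth_DD E3 hU))).continuous.pow 2)
      (fun p hp => by
        show (DD E1 (BB U) p)^2 = 0
        rw [show DD E1 (BB U) p = 0 from van3 hU hv E1 E2 E3 p hp]
        norm_num)
  have iC : IntegrableOn (fun p : ℝ×ℝ×ℝ => (DD E1 (CC U) p)^2)
      (Set.Ioo 0 L ×ˢ (Set.univ : Set (ℝ×ℝ))) :=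
    integrableOn_omega ((smooth_DD E1 (smooth_DD E3 (smooth_DD E3 hU))).continuous.pow 2)
      (fun p hp => by
        show (DD E1 (CC U) p)^2 = 0
        rw [show DD E1 (CC U) p = 0 from van3 hU hv E1 E3 E3 p hp]
        norm_num)
  have i3 : IntegrableOn (fun p : ℝ×ℝ×ℝ =>
      3 * ((DD E1 (AA U) p)^2 + (DD E1 (BB U) p)^2 + (DD E1 (CC U) p)^2))
      (Set.Ioo 0 L ×ˢ (Set.univ : Set (ℝ×ℝ))) :=
    (((iA.add iB).add iC).const_mul (3:ℝ))
  have if1 : IntegrableOn (ff1 U) (Set.Ioo 0 L ×ˢ (Set.univ : Set (ℝ×ℝ))) :=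
    integrableOn_omega (cont_ff1 hU) (vanish_ff1 hU hv)
  have if2 : IntegrableOn (ff2 U) (Set.Ioo 0 L ×ˢ (Set.univ : Set (ℝ×ℝ))) :=
    integrableOn_omega (cont_ff2 hU) (vanish_ff2 hU hv)
  have if3 : IntegrableOn (ff3 U) (Set.Ioo 0 L ×ˢ (Set.univ : Set (ℝ×ℝ))) :=
    integrableOn_omega (cont_ff3 hU) (vanish_ff3 hU hv)
  -- rewrite all five integrals into directional-derivative form
  simp only [Omega]
  have e0 : (∫ p in Set.Ioo 0 L ×ˢ (Set.univ : Set (ℝ×ℝ)),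
        (1 + p.1) * px (px (px u)) p.1 p.2.1 p.2.2 *
        (py (py (py (py u))) p.1 p.2.1 p.2.2 + py (py (pz (pz u))) p.1 p.2.1 p.2.2 +
          pz (pz (pz (pz u))) p.1 p.2.1 p.2.2))
      = ∫ p in Set.Ioo 0 L ×ˢ (Set.univ : Set (ℝ×ℝ)),
        (1 + p.1) * TT U p * (DD E2 (DD E2 (DD E2 (DD E2 U))) p
          + DD E2 (DD E2 (DD E3 (DD E3 U))) p + DD E3 (DD E3 (DD E3 (DD E3 U))) p) := by
    apply integral_congr_ae
    filter_upwards with p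
    rw [cx3 p.1 p.2.1 p.2.2, cy4 p.1 p.2.1 p.2.2, cyz2 p.1 p.2.1 p.2.2, cz4 p.1 p.2.1 p.2.2]
    rfl
  have eA : (∫ p in Set.Ioo 0 L ×ˢ (Set.univ : Set (ℝ×ℝ)),
        (px (py (py u)) p.1 p.2.1 p.2.2) ^ 2)
      = ∫ p in Set.Ioo 0 L ×ˢ (Set.univ : Set (ℝ×ℝ)), (DD E1 (AA U) p)^2 := by
    apply integral_congr_ae
    filter_upwards with p
    rw [cA p.1 p.2.1 p.2.2]
  have eB : (∫ p in Set.Ioo 0 L ×ˢ (Set.univ : Set (ℝ×ℝ)),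
        (px (py (pz u)) p.1 p.2.1 p.2.2) ^ 2)
      = ∫ p in Set.Ioo 0 L ×ˢ (Set.univ : Set (ℝ×ℝ)), (DD E1 (BB U) p)^2 := by
    apply integral_congr_ae
    filter_upwards with p
    rw [cB p.1 p.2.1 p.2.2]
  have eC : (∫ p in Set.Ioo 0 L ×ˢ (Set.univ : Set (ℝ×ℝ)),
        (px (pz (pz u)) p.1 p.2.1 p.2.2) ^ 2)
      = ∫ p in Set.Ioo 0 L ×ˢ (Set.univ : Set (ℝ×ℝ)), (DD E1 (CC U) p)^2 := by
    apply integral_congr_ae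
    filter_upwards with p
    rw [cC p.1 p.2.1 p.2.2]
  have ebdry : (∫ q : ℝ × ℝ, ((px (py (py u)) 0 q.1 q.2) ^ 2
        + (px (py (pz u)) 0 q.1 q.2) ^ 2 + (px (pz (pz u)) 0 q.1 q.2) ^ 2))
      = ∫ q : ℝ × ℝ, ((DD E1 (AA U) (0,q))^2 + (DD E1 (BB U) (0,q))^2
          + (DD E1 (CC U) (0,q))^2) := by
    apply integral_congr_ae
    filter_upwards with q
    rw [cA 0 q.1 q.2, cB 0 q.1 q.2, cC 0 q.1 q.2]
  rw [e0, eA, eB, eC, ebdry]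
  rw [← integral_const_mul]
  have e1 : (∫ p in Set.Ioo 0 L ×ˢ (Set.univ : Set (ℝ×ℝ)),
        2 * ((1 + p.1) * TT U p * (DD E2 (DD E2 (DD E2 (DD E2 U))) p
          + DD E2 (DD E2 (DD E3 (DD E3 U))) p + DD E3 (DD E3 (DD E3 (DD E3 U))) p)))
      = ∫ p in Set.Ioo 0 L ×ˢ (Set.univ : Set (ℝ×ℝ)),
        (3*((DD E1 (AA U) p)^2 + (DD E1 (BB U) p)^2 + (DD E1 (CC U) p)^2)
          + (ff1 U p + ff2 U p + ff3 U p)) := by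
    apply integral_congr_ae
    filter_upwards with p
    have h := main_id hU p
    calc 2 * ((1 + p.1) * TT U p * (DD E2 (DD E2 (DD E2 (DD E2 U))) p
          + DD E2 (DD E2 (DD E3 (DD E3 U))) p + DD E3 (DD E3 (DD E3 (DD E3 U))) p))
        = 2*(1+p.1) * TT U p * (DD E2 (DD E2 (DD E2 (DD E2 U))) p
          + DD E2 (DD E2 (DD E3 (DD E3 U))) p + DD E3 (DD E3 (DD E3 (DD E3 U))) p) := by ring
      _ = _ := h
  rw [e1]
  have iff12 : IntegrableOn (fun p : ℝ×ℝ×ℝ => ff1 U p + ff2 U p)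
      (Set.Ioo 0 L ×ˢ (Set.univ : Set (ℝ×ℝ))) := if1.add if2
  have iff123 : IntegrableOn (fun p : ℝ×ℝ×ℝ => ff1 U p + ff2 U p + ff3 U p)
      (Set.Ioo 0 L ×ˢ (Set.univ : Set (ℝ×ℝ))) := iff12.add if3
  have iAB : IntegrableOn (fun p : ℝ×ℝ×ℝ => (DD E1 (AA U) p)^2 + (DD E1 (BB U) p)^2)
      (Set.Ioo 0 L ×ˢ (Set.univ : Set (ℝ×ℝ))) := iA.add iB
  rw [integral_add i3 iff123, integral_add iff12 if3, integral_add if1 if2]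
  rw [integral_const_mul]
  rw [integral_add iAB iC, integral_add iA iB]
  rw [integral_x hL (cont_FF1 hU) (cont_ff1 hU) (vanish_FF1 hU hv) (vanish_ff1 hU hv)
    (fun x q => hd_FF1 hU x q)]
  rw [integral_y (cont_ff2 hU) (vanish_FF2 hU hv) (vanish_ff2 hU hv)
    (fun x y z => hd_FF2 hU x y z)]
  rw [integral_z (cont_ff3 hU) (vanish_FF3 hU hv) (vanish_ff3 hU hv)
    (fun x y z => hd_FF3 hU x y z)]
  have hbL : (fun q : ℝ×ℝ => FF1 U (L,q)) = fun _ => (0:ℝ) :=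
    funext (FF1_at_L hU hULbc hD1Lbc)
  have hb0 : (fun q : ℝ×ℝ => FF1 U (0,q)) = fun q : ℝ×ℝ =>
      -((DD E1 (AA U) (0,q))^2 + (DD E1 (BB U) (0,q))^2 + (DD E1 (CC U) (0,q))^2) :=
    funext (FF1_at_0 hU hU0bc)
  rw [hbL, hb0, integral_neg]
  simp only [MeasureTheory.integral_zero]
  ring
end
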